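/- arXiv:2206.11214 — 8 statements merged into one kernel-verified Lean document; each statement's English description precedes it below -/
import Mathlib

section
/- Let α = sqrt(M / (2·(log(2/δ)/n + 2Aη))) for δ ∈ (0,1). Then the contaminated soft-truncation estimator μ̂_η = (α/n)·Σ_{i=1}^n ψ(X̃_i/α) satisfies |μ̂_η − μ| ≤ sqrt(2M·(log(2/δ)/n + 2Aη)) with probability at least 1 − δ. -/
/-!
Catoni's argument. Since `exp (ψ x) ≤ 1 + x + x²/2` and `1 + y ≤ exp y`, each factor
`exp (ψ (X_t/α) - μ_t/α - M/(2α²))` has conditional expectation at most `1`, so the exponential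
of the centred sum `∑ ψ (X_t/α) - ∑ μ_t/α - nM/(2α²)` has expectation at most `1`; Markov's
inequality bounds its upper tail by `δ/2`. The lower bound on `ψ` says that `x ↦ -ψ (-x)`
satisfies the same upper bound, which handles the lower tail. Corrupting at most `ηn` of the
summands, each bounded by `A`, moves the sum by at most `2Aηn`, and the choice of `α` balances the
resulting error `α (log (2/δ)/n + 2Aη) + M/(2α)`.
-/

open MeasureTheory ProbabilityTheory Finset Real

section Conditional

variable {Ω : Type*} {m m0 : MeasurableSpace Ω} {P : Measure Ω}

lemma one_add_add_sq_div_two_pos (x : ℝ) : 0 < 1 + x + x ^ 2 / 2 := by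
  nlinarith [sq_nonneg (x + 1)]

lemma condExp_const_mul_ae_eq_const {Y : Ω → ℝ} {ν : ℝ} (h : P[Y|m] =ᵐ[P] fun _ => ν) (c : ℝ) :
    P[fun ω => c * Y ω|m] =ᵐ[P] fun _ => c * ν := by
  filter_upwards [condExp_smul (μ := P) c Y m, h] with ω hsmul hω
  change P[c • Y|m] ω = c * ν
  rw [hsmul, Pi.smul_apply, hω, smul_eq_mul]

lemma ae_condExp_sq_const_mul_le {Y : Ω → ℝ} {K : ℝ}
    (h : ∀ᵐ ω ∂P, P[fun ω => Y ω ^ 2|m] ω ≤ K) (c : ℝ) :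
    ∀ᵐ ω ∂P, P[fun ω => (c * Y ω) ^ 2|m] ω ≤ c ^ 2 * K := by
  have hsq : (fun ω => (c * Y ω) ^ 2) = c ^ 2 • fun ω => Y ω ^ 2 := by
    funext ω; simp [mul_pow]
  filter_upwards [condExp_smul (μ := P) (c ^ 2) (fun ω => Y ω ^ 2) m, h] with ω hsmul hω
  rw [hsq, hsmul, Pi.smul_apply, smul_eq_mul]
  exact mul_le_mul_of_nonneg_left hω (sq_nonneg c)

lemma condExp_one_add_add_sq_div_two [IsFiniteMeasure P] (hm : m ≤ m0) {Y : Ω → ℝ}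
    (hY : Integrable Y P) (hY2 : Integrable (fun ω => Y ω ^ 2) P) :
    P[fun ω => 1 + Y ω + Y ω ^ 2 / 2|m] =ᵐ[P]
      fun ω => 1 + P[Y|m] ω + P[fun ω => Y ω ^ 2|m] ω / 2 := by
  have hhalf : (fun ω => Y ω ^ 2 / 2) = (2⁻¹ : ℝ) • fun ω => Y ω ^ 2 := by
    funext ω; simp [div_eq_inv_mul]
  have hsplit : (fun ω => 1 + Y ω + Y ω ^ 2 / 2)
      = ((fun _ => (1 : ℝ)) + Y) + (2⁻¹ : ℝ) • fun ω => Y ω ^ 2 := by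
    rw [← hhalf]; rfl
  rw [hsplit]
  filter_upwards [condExp_add ((integrable_const 1).add hY) (hY2.smul (2⁻¹ : ℝ)) m,
    condExp_add (integrable_const 1) hY m, condExp_smul (μ := P) (2⁻¹ : ℝ) (fun ω => Y ω ^ 2) m]
    with ω h1 h2 h3
  rw [h1, Pi.add_apply, h2, h3, condExp_const hm]
  simp only [Pi.add_apply, Pi.smul_apply, smul_eq_mul]
  ring

lemma integrable_exp_comp_sub [IsFiniteMeasure P] {g : ℝ → ℝ} (hg : Measurable g)
    (hexp : ∀ x, exp (g x) ≤ 1 + x + x ^ 2 / 2) {Y : Ω → ℝ} (hY : Integrable Y P)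
    (hY2 : Integrable (fun ω => Y ω ^ 2) P) (c : ℝ) :
    Integrable (fun ω => exp (g (Y ω) - c)) P := by
  refine Integrable.mono' ((((integrable_const 1).add hY).add (hY2.div_const 2)).const_mul
    (exp (-c))) ((hg.comp_aemeasurable hY.aemeasurable).sub_const c).exp.aestronglyMeasurable
    (.of_forall fun ω => ?_)
  rw [norm_of_nonneg (exp_pos _).le, sub_eq_add_neg, exp_add, mul_comm]
  exact mul_le_mul_of_nonneg_left (hexp _) (exp_pos _).le

lemma condExp_exp_comp_sub_le_one [IsFiniteMeasure P] (hm : m ≤ m0) {g : ℝ → ℝ}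
    (hg : Measurable g) (hexp : ∀ x, exp (g x) ≤ 1 + x + x ^ 2 / 2) {Y : Ω → ℝ}
    (hY : Integrable Y P) (hY2 : Integrable (fun ω => Y ω ^ 2) P) {ν K : ℝ}
    (hmean : P[Y|m] =ᵐ[P] fun _ => ν) (hsq : ∀ᵐ ω ∂P, P[fun ω => Y ω ^ 2|m] ω ≤ K) :
    P[fun ω => exp (g (Y ω) - (ν + K / 2))|m] ≤ᵐ[P] 1 := by
  set c := ν + K / 2 with hc
  have hq : Integrable (fun ω => 1 + Y ω + Y ω ^ 2 / 2) P :=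
    ((integrable_const 1).add hY).add (hY2.div_const 2)
  have hdom : (fun ω => exp (g (Y ω) - c)) ≤ᵐ[P] exp (-c) • fun ω => 1 + Y ω + Y ω ^ 2 / 2 :=
    .of_forall fun ω => by
      change exp (g (Y ω) - c) ≤ exp (-c) * (1 + Y ω + Y ω ^ 2 / 2)
      rw [sub_eq_add_neg, exp_add, mul_comm]
      exact mul_le_mul_of_nonneg_left (hexp _) (exp_pos _).le
  filter_upwards [condExp_mono (m := m) (integrable_exp_comp_sub hg hexp hY hY2 c)
      (hq.smul (exp (-c))) hdom,
    condExp_smul (μ := P) (exp (-c)) (fun ω => 1 + Y ω + Y ω ^ 2 / 2) m,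
    condExp_one_add_add_sq_div_two hm hY hY2, hmean, hsq] with ω hmono hsmul hlin hν hK
  rw [hsmul, Pi.smul_apply, smul_eq_mul, hlin, hν] at hmono
  calc P[fun ω => exp (g (Y ω) - c)|m] ω ≤ exp (-c) * (1 + c) := by
        refine hmono.trans (mul_le_mul_of_nonneg_left ?_ (exp_pos _).le)
        linarith [hc]
    _ ≤ exp (-c) * exp c := mul_le_mul_of_nonneg_left (by linarith [add_one_le_exp c])
        (exp_pos _).le
    _ = 1 := by rw [← exp_add, neg_add_cancel, exp_zero]

lemma integral_mul_le_integral_of_condExp_le_one [IsFiniteMeasure P] (hm : m ≤ m0)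
    {f h : Ω → ℝ} (hf : StronglyMeasurable[m] f) (hf0 : 0 ≤ f) {C : ℝ} (hfC : ∀ ω, f ω ≤ C)
    (hh : Integrable h P) (hle : P[h|m] ≤ᵐ[P] 1) :
    ∫ ω, f ω * h ω ∂P ≤ ∫ ω, f ω ∂P := by
  have hbound : ∀ᵐ ω ∂P, ‖f ω‖ ≤ C :=
    .of_forall fun ω => (norm_of_nonneg (hf0 ω)).trans_le (hfC ω)
  have hpull := condExp_stronglyMeasurable_mul_of_bound hm hf hh C hbound
  calc ∫ ω, f ω * h ω ∂P = ∫ ω, P[f * h|m] ω ∂P := (integral_condExp hm).symm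
    _ = ∫ ω, f ω * P[h|m] ω ∂P := integral_congr_ae hpull
    _ ≤ ∫ ω, f ω ∂P := by
        refine integral_mono_ae (integrable_condExp.congr hpull)
          (Integrable.of_bound (hf.mono hm).aestronglyMeasurable C hbound) ?_
        filter_upwards [hle] with ω hω
        simpa using mul_le_mul_of_nonneg_left hω (hf0 ω)

end Conditional

section Catoni

variable {Ω : Type*} {m0 : MeasurableSpace Ω} {P : Measure Ω}

lemma integrable_exp_sum_and_integral_le_one [IsProbabilityMeasure P] (ℱ : Filtration ℕ m0)
    {g : ℝ → ℝ} (hg : Measurable g) {A : ℝ} (hgA : ∀ x, g x ≤ A)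
    (hexp : ∀ x, exp (g x) ≤ 1 + x + x ^ 2 / 2) {Y : ℕ → Ω → ℝ} (hYad : StronglyAdapted ℱ Y)
    {ν : ℕ → ℝ} {K : ℝ} (n : ℕ) (hY : ∀ t ∈ Icc 1 n, Integrable (Y t) P)
    (hY2 : ∀ t ∈ Icc 1 n, Integrable (fun ω => Y t ω ^ 2) P)
    (hmean : ∀ t ∈ Icc 1 n, P[Y t|ℱ (t - 1)] =ᵐ[P] fun _ => ν t)
    (hsq : ∀ t ∈ Icc 1 n, ∀ᵐ ω ∂P, P[fun ω => Y t ω ^ 2|ℱ (t - 1)] ω ≤ K) :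
    Integrable (fun ω => exp (∑ t ∈ Icc 1 n, (g (Y t ω) - (ν t + K / 2)))) P ∧
      ∫ ω, exp (∑ t ∈ Icc 1 n, (g (Y t ω) - (ν t + K / 2))) ∂P ≤ 1 := by
  induction n with
  | zero => simp
  | succ n ih =>
    have hsub : Icc 1 n ⊆ Icc 1 (n + 1) := Icc_subset_Icc_right n.le_succ
    obtain ⟨hint, hle⟩ := ih (fun t ht => hY t (hsub ht)) (fun t ht => hY2 t (hsub ht))
      (fun t ht => hmean t (hsub ht)) (fun t ht => hsq t (hsub ht))
    have hlast : n + 1 ∈ Icc 1 (n + 1) := by simp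
    set f := fun ω => exp (∑ t ∈ Icc 1 n, (g (Y t ω) - (ν t + K / 2)))
    set h := fun ω => exp (g (Y (n + 1) ω) - (ν (n + 1) + K / 2))
    have hf : StronglyMeasurable[ℱ n] f := by
      refine (Measurable.exp (Finset.measurable_sum _ fun t ht => ?_)).stronglyMeasurable
      exact (hg.comp (((hYad t).mono (ℱ.mono (mem_Icc.1 ht).2)).measurable)).sub_const _
    have hfC : ∀ ω, f ω ≤ exp (∑ t ∈ Icc 1 n, (A - (ν t + K / 2))) := fun ω =>
      exp_le_exp.2 (sum_le_sum fun t _ => by linarith [hgA (Y t ω)])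
    have hh : Integrable h P :=
      integrable_exp_comp_sub hg hexp (hY _ hlast) (hY2 _ hlast) _
    have hcond : P[h|ℱ n] ≤ᵐ[P] 1 := by
      simpa using condExp_exp_comp_sub_le_one (ℱ.le n) hg hexp (hY _ hlast) (hY2 _ hlast)
        (hmean _ hlast) (hsq _ hlast)
    have hsplit : (fun ω => exp (∑ t ∈ Icc 1 (n + 1), (g (Y t ω) - (ν t + K / 2))))
        = fun ω => f ω * h ω := by
      funext ω
      rw [sum_Icc_succ_top (by omega), exp_add]
    rw [hsplit]
    exact ⟨hh.bdd_mul (hf.mono (ℱ.le n)).aestronglyMeasurable (.of_forall fun ω =>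
        (norm_of_nonneg (exp_pos _).le).trans_le (hfC ω)),
      (integral_mul_le_integral_of_condExp_le_one (ℱ.le n) hf (fun ω => (exp_pos _).le) hfC
        hh hcond).trans hle⟩

lemma measure_ge_le_exp_neg_of_integral_exp_le_one [IsFiniteMeasure P] {F : Ω → ℝ}
    (hint : Integrable (fun ω => exp (F ω)) P) (hle : ∫ ω, exp (F ω) ∂P ≤ 1) (L : ℝ) :
    P {ω | L ≤ F ω} ≤ ENNReal.ofReal (exp (-L)) := by
  rw [ENNReal.le_ofReal_iff_toReal_le (measure_ne_top _ _) (exp_pos _).le, ← measureReal_def]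
  have hchernoff := measure_ge_le_exp_mul_mgf L zero_le_one (by simpa using hint)
  simp only [mgf, one_mul, neg_mul] at hchernoff
  exact hchernoff.trans (mul_le_of_le_one_right (exp_pos _).le hle)

lemma ofReal_one_sub_le_of_measure_compl_le [IsProbabilityMeasure P] {s : Set Ω} {δ : ℝ}
    (hδ : 0 ≤ δ) (h : P sᶜ ≤ ENNReal.ofReal δ) : ENNReal.ofReal (1 - δ) ≤ P s := by
  rw [ENNReal.ofReal_sub _ hδ, ENNReal.ofReal_one, tsub_le_iff_right]
  calc 1 = P Set.univ := measure_univ.symm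
    _ ≤ P s + P sᶜ := measure_univ_le_add_compl s
    _ ≤ P s + ENNReal.ofReal δ := add_le_add_right h _

lemma measure_sum_comp_const_mul_ge_le_exp_neg [IsProbabilityMeasure P] (ℱ : Filtration ℕ m0)
    (n : ℕ) {X : ℕ → Ω → ℝ} {μt : ℕ → ℝ} {M : ℝ} (hX : StronglyAdapted ℱ X)
    (hInt : ∀ t ∈ Icc 1 n, Integrable (X t) P)
    (hInt2 : ∀ t ∈ Icc 1 n, Integrable (fun ω => X t ω ^ 2) P)
    (hC1 : ∀ t ∈ Icc 1 n, P[X t|ℱ (t - 1)] =ᵐ[P] fun _ => μt t)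
    (hC2 : ∀ t ∈ Icc 1 n, ∀ᵐ ω ∂P, P[fun ω => X t ω ^ 2|ℱ (t - 1)] ω ≤ M)
    {g : ℝ → ℝ} (hg : Measurable g) {A : ℝ} (hgA : ∀ x, g x ≤ A)
    (hexp : ∀ x, exp (g x) ≤ 1 + x + x ^ 2 / 2) (c L : ℝ) :
    P {ω | L + n * (c ^ 2 * M / 2) ≤ ∑ t ∈ Icc 1 n, g (c * X t ω) - c * ∑ t ∈ Icc 1 n, μt t}
      ≤ ENNReal.ofReal (exp (-L)) := by
  obtain ⟨hint, hle⟩ := integrable_exp_sum_and_integral_le_one ℱ hg hgA hexp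
    (Y := fun t ω => c * X t ω) (ν := fun t => c * μt t) (K := c ^ 2 * M)
    (fun t => (hX t).const_mul c) n (fun t ht => (hInt t ht).const_mul c)
    (fun t ht => by simpa [mul_pow] using (hInt2 t ht).const_mul (c ^ 2))
    (fun t ht => condExp_const_mul_ae_eq_const (hC1 t ht) c)
    (fun t ht => ae_condExp_sq_const_mul_le (hC2 t ht) c)
  convert measure_ge_le_exp_neg_of_integral_exp_le_one hint hle L using 2
  ext ω
  simp only [Set.mem_ofPred_eq, sum_sub_distrib, sum_add_distrib, ← mul_sum, sum_const,
    Nat.card_Icc, add_tsub_cancel_right, nsmul_eq_mul]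
  constructor <;> intro h <;> linarith

theorem catoni_sum_deviation [IsProbabilityMeasure P] (ℱ : Filtration ℕ m0) (n : ℕ)
    {X : ℕ → Ω → ℝ} {μt : ℕ → ℝ} {M : ℝ} (hX : StronglyAdapted ℱ X)
    (hInt : ∀ t ∈ Icc 1 n, Integrable (X t) P)
    (hInt2 : ∀ t ∈ Icc 1 n, Integrable (fun ω => X t ω ^ 2) P)
    (hC1 : ∀ t ∈ Icc 1 n, P[X t|ℱ (t - 1)] =ᵐ[P] fun _ => μt t)
    (hC2 : ∀ t ∈ Icc 1 n, ∀ᵐ ω ∂P, P[fun ω => X t ω ^ 2|ℱ (t - 1)] ω ≤ M)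
    {ψ : ℝ → ℝ} (hψ : Measurable ψ) (hψlb : ∀ x, -log (1 - x + x ^ 2 / 2) ≤ ψ x)
    (hψub : ∀ x, ψ x ≤ log (1 + x + x ^ 2 / 2)) {A : ℝ} (hψA : ∀ x, |ψ x| ≤ A)
    (α : ℝ) {δ : ℝ} (hδ : 0 < δ) :
    ENNReal.ofReal (1 - δ) ≤ P {ω | |∑ t ∈ Icc 1 n, ψ (X t ω / α) - (∑ t ∈ Icc 1 n, μt t) / α|
      ≤ log (2 / δ) + n * (M / (2 * α ^ 2))} := by
  have hexp_le_of_le_log {y x : ℝ} (h : y ≤ log (1 + x + x ^ 2 / 2)) :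
      exp y ≤ 1 + x + x ^ 2 / 2 :=
    (le_log_iff_exp_le (one_add_add_sq_div_two_pos x)).1 h
  have hupper := measure_sum_comp_const_mul_ge_le_exp_neg ℱ n hX hInt hInt2 hC1 hC2 hψ
    (fun x => (abs_le.1 (hψA x)).2) (fun x => hexp_le_of_le_log (hψub x)) α⁻¹ (log (2 / δ))
  have hlower := measure_sum_comp_const_mul_ge_le_exp_neg ℱ n hX hInt hInt2 hC1 hC2
    (g := fun x => -ψ (-x)) (A := A) (hψ.comp measurable_neg).neg
    (fun x => by linarith [abs_le.1 (hψA (-x))])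
    (fun x => hexp_le_of_le_log (by
      have h := hψlb (-x)
      rw [show 1 - -x + (-x) ^ 2 / 2 = 1 + x + x ^ 2 / 2 by ring] at h
      linarith))
    (-α⁻¹) (log (2 / δ))
  have hhalf : exp (-log (2 / δ)) = δ / 2 := by
    rw [exp_neg, exp_log (by positivity), inv_div]
  rw [hhalf] at hupper hlower
  refine ofReal_one_sub_le_of_measure_compl_le hδ.le ((measure_mono fun ω hω => ?_).trans
    ((measure_union_le _ _).trans ((add_le_add hupper hlower).trans_eq ?_)))
  · simp only [Set.mem_compl_iff, Set.mem_ofPred_eq, abs_le, not_and_or, not_le] at hω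
    simp only [Set.mem_union, Set.mem_ofPred_eq, neg_mul, neg_neg, sum_neg_distrib, even_two,
      Even.neg_pow, ← div_eq_inv_mul]
    have hM : n * (α⁻¹ ^ 2 * M / 2) = n * (M / (2 * α ^ 2)) := by ring
    rw [hM]
    rcases hω with hω | hω
    · right; linarith
    · left; linarith
  · rw [← ENNReal.ofReal_add (by positivity) (by positivity), add_halves]

lemma abs_sum_comp_sub_sum_comp_le {ι β : Type*} [DecidableEq β] (s : Finset ι) (u v : ι → β)
    {φ : β → ℝ} {A : ℝ} (hφ : ∀ x, |φ x| ≤ A) :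
    |∑ i ∈ s, φ (u i) - ∑ i ∈ s, φ (v i)| ≤ 2 * A * #{i ∈ s | u i ≠ v i} := by
  rw [← sum_sub_distrib]
  calc |∑ i ∈ s, (φ (u i) - φ (v i))| ≤ ∑ i ∈ s, |φ (u i) - φ (v i)| := abs_sum_le_sum_abs _ _
    _ = ∑ i ∈ s with u i ≠ v i, |φ (u i) - φ (v i)| :=
        (sum_filter_of_ne (p := fun i => u i ≠ v i) fun i _ hne heq =>
          hne (by rw [heq, sub_self, abs_zero])).symm
    _ ≤ #{i ∈ s | u i ≠ v i} • (2 * A) := sum_le_card_nsmul _ _ _ fun i _ =>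
        (abs_sub _ _).trans (by linarith [hφ (u i), hφ (v i)])
    _ = 2 * A * #{i ∈ s | u i ≠ v i} := by rw [nsmul_eq_mul, mul_comm]

end Catoni

/-- The scale `α = √(M / (2B))` minimises `α B + M / (2α)`. -/
lemma mul_add_div_two_mul_eq_sqrt {M B α : ℝ} (hM : 0 < M) (hB : 0 < B)
    (hα : α = √(M / (2 * B))) : α * B + M / (2 * α) = √(2 * M * B) := by
  have hα0 : 0 < α := hα ▸ sqrt_pos.2 (by positivity)
  have hαsq : α ^ 2 * (2 * B) = M := by
    rw [hα, sq_sqrt (by positivity), div_mul_cancel₀ _ (by positivity)]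
  have hsum : α * B + M / (2 * α) = 2 * α * B := by
    rw [← hαsq]
    field_simp
    ring
  rw [hsum, ← sqrt_sq (by positivity : 0 ≤ 2 * α * B)]
  congr 1
  linear_combination (2 * B) * hαsq

/-- **Theorem 1 (deviation bound for the contaminated soft-truncation estimator).**
Under C1, C2, with `ψ` a bounded Catoni-type influence function, contamination affecting
at most `η n` of the indices, and
`α = sqrt(M / (2 (log(2/δ)/n + 2 A η)))`, the estimator
`μ̂_η = (α/n) ∑ ψ(X̃_i / α)` satisfies
`|μ̂_η − μ| ≤ sqrt(2 M (log(2/δ)/n + 2 A η))` with probability at least `1 − δ`. -/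
theorem catoni_contaminated_deviation_bound
    {Ω : Type*} {m0 : MeasurableSpace Ω} (P : Measure Ω) [IsProbabilityMeasure P]
    (ℱ : Filtration ℕ m0) (n : ℕ) (hn : 0 < n)
    (X Xt : ℕ → Ω → ℝ) (μt : ℕ → ℝ) (M : ℝ) (hM : 0 < M)
    (hAdapted : ∀ t, StronglyMeasurable[ℱ t] (X t))
    (hInt : ∀ t ∈ Finset.Icc 1 n, Integrable (X t) P)
    (hInt2 : ∀ t ∈ Finset.Icc 1 n, Integrable (fun ω => (X t ω) ^ 2) P)
    -- C1 : conditional mean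
    (hC1 : ∀ t ∈ Finset.Icc 1 n, P[X t|ℱ (t - 1)] =ᵐ[P] fun _ => μt t)
    -- C2 : conditional second moment bound
    (hC2 : ∀ t ∈ Finset.Icc 1 n,
      ∀ᵐ ω ∂P, (P[fun ω => (X t ω) ^ 2|ℱ (t - 1)]) ω ≤ M)
    -- influence function
    (ψ : ℝ → ℝ) (hψmono : Monotone ψ)
    (hψlb : ∀ x : ℝ, -Real.log (1 - x + x ^ 2 / 2) ≤ ψ x)
    (hψub : ∀ x : ℝ, ψ x ≤ Real.log (1 + x + x ^ 2 / 2))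
    (A : ℝ) (hA : 0 < A) (hψA : ∀ x : ℝ, |ψ x| ≤ A)
    -- contamination : at most η n indices are corrupted
    (η : ℝ) (hη : η ∈ Set.Ioo (0 : ℝ) 1)
    (hcontam : ∀ ω : Ω,
      (((Finset.Icc 1 n).filter (fun t => Xt t ω ≠ X t ω)).card : ℝ) ≤ η * n)
    -- confidence level and scale parameter
    (δ : ℝ) (hδ : δ ∈ Set.Ioo (0 : ℝ) 1)
    (α : ℝ)
    (hα : α = Real.sqrt (M / (2 * (Real.log (2 / δ) / n + 2 * A * η))))
    (μbar : ℝ) (hμbar : μbar = (1 / n) * ∑ t ∈ Finset.Icc 1 n, μt t) :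
    ENNReal.ofReal (1 - δ) ≤
      P {ω | |(α / n) * ∑ i ∈ Finset.Icc 1 n, ψ (Xt i ω / α) - μbar| ≤
        Real.sqrt (2 * M * (Real.log (2 / δ) / n + 2 * A * η))} := by
  have hL : 0 < Real.log (2 / δ) := Real.log_pos (by rw [one_lt_div hδ.1]; linarith [hδ.2])
  have hα0 : 0 < α := hα ▸ sqrt_pos.2 (by have := hη.1; positivity)
  have hn0 : (0 : ℝ) < n := Nat.cast_pos.2 hn
  refine (catoni_sum_deviation ℱ n hAdapted hInt hInt2 hC1 hC2 hψmono.measurable hψlb hψub hψA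
    α hδ.1).trans (measure_mono fun ω hclean => ?_)
  have hcorrupt := abs_sum_comp_sub_sum_comp_le (Icc 1 n) (Xt · ω) (X · ω)
    (φ := fun x => ψ (x / α)) fun x => hψA (x / α)
  rw [Set.mem_ofPred_eq] at hclean ⊢
  calc |(α / n) * ∑ i ∈ Icc 1 n, ψ (Xt i ω / α) - μbar|
      = α / n * |∑ i ∈ Icc 1 n, ψ (Xt i ω / α) - (∑ t ∈ Icc 1 n, μt t) / α| := by
        rw [hμbar]
        conv_rhs => rw [← abs_of_pos (div_pos hα0 hn0), ← abs_mul]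
        congr 1
        field_simp
    _ ≤ α / n * (2 * A * (η * n) + (Real.log (2 / δ) + n * (M / (2 * α ^ 2)))) := by
        gcongr
        refine (abs_sub_le _ (∑ t ∈ Icc 1 n, ψ (X t ω / α)) _).trans (add_le_add ?_ hclean)
        exact hcorrupt.trans (mul_le_mul_of_nonneg_left (hcontam ω) (by positivity))
    _ = α * (Real.log (2 / δ) / n + 2 * A * η) + M / (2 * α) := by
        field_simp
        ring
    _ = √(2 * M * (Real.log (2 / δ) / n + 2 * A * η)) :=
        mul_add_div_two_mul_eq_sqrt hM (by have := hη.1; positivity) hα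
end

section
/- Suppose μ_t = μ for all t ∈ [n] and the uncontaminated variables have conditional variance bounded by V, i.e., E[(X_t − μ)² | F_{t−1}] ≤ V almost surely. Fix 0 < k < n and δ ∈ (0,1), and set ϑ_k := sqrt(2M·(log(4/δ)/k + 2Aη)). Define the two-stage estimator: (i) the shifting device μ̄_η := (ᾱ/k)·Σ_{i=1}^k ψ(X̃_i/ᾱ) with ᾱ = sqrt(M / (2·(log(4/δ)/k + 2Aη))); (ii) the shifted estimate μ'_η := (α'/(n−k))·Σ_{i=k+1}^n ψ((X̃_i − μ̄_η)/α') with α' = sqrt((V + ϑ_k²) / (2·(log(4/δ)/(n−k) + 2Aη))); (iii) μ̂_η := μ'_η + μ̄_η. Then |μ̂_η − μ| ≤ sqrt(2·(V + ϑ_k²)·(log(4/δ)/(n−k) + 2Aη)) with probability at least 1 − δ. -/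
/-!
Each stage is Catoni's exponential-moment argument. For a scale `α`, a shift bound `θ` and
`Z_t = ±(X_t - μ)/α - θ/α`, condition C1 and the variance bound give
`E[1 + Z_t + Z_t²/2 | ℱ (t-1)] ≤ 1 + τ ≤ exp τ`. The product of these quadratics over a stage
of `m` indices therefore has expectation at most `exp (m τ)`, and by Markov its logarithm
exceeds `log (4/δ) + m τ` with probability at most `δ/4`. Catoni's bounds sandwich `ψ` between
the logarithms of these quadratics, and each contaminated index moves the sum of `ψ` by at
most `2A`.

The first-stage estimate is not predictable, so the second stage is proved simultaneously for
all centers `c` with `|c - μ| ≤ θ`: since `σ + log (1 + (u - σ) + (u - σ)²/2)` is nondecreasing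
in `σ`, the shift `σ = (c - μ)/α` may be replaced by its worst value `θ/α`. The first stage is
the same statement with center `0`, `θ = |μ|` and conditional variance `M - μ²`; it puts `μ̄`
within `ϑ` of `μ`, and the second stage with `θ = ϑ` then bounds `|μ̂ - μ|`. In both stages `α`
minimises `α (log (4/δ)/m + 2Aη) + W/(2α)`, whose minimum is `√(2 W (log (4/δ)/m + 2Aη))`.
-/

open MeasureTheory Finset
open scoped ENNReal

noncomputable def catoniPoly (x : ℝ) : ℝ := 1 + x + x ^ 2 / 2

lemma catoniPoly_pos (x : ℝ) : 0 < catoniPoly x := by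
  unfold catoniPoly; nlinarith [sq_nonneg (x + 1)]

lemma antitone_log_catoniPoly_sub_self : Antitone fun x => Real.log (catoniPoly x) - x := by
  have hderiv : ∀ x, HasDerivAt (fun x => Real.log (catoniPoly x) - x)
      ((1 + x) / catoniPoly x - 1) x := by
    intro x
    have hpoly : HasDerivAt catoniPoly (1 + x) x := by
      have := ((hasDerivAt_id x).const_add 1).add ((hasDerivAt_pow 2 x).div_const 2)
      exact this.congr_deriv (by norm_num)
    exact ((hpoly.log (catoniPoly_pos x).ne').sub (hasDerivAt_id x))
  refine antitone_of_deriv_nonpos (fun x => (hderiv x).differentiableAt) fun x => ?_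
  rw [(hderiv x).deriv, sub_nonpos, div_le_one (catoniPoly_pos x)]
  unfold catoniPoly; nlinarith [sq_nonneg x]

lemma le_log_catoniPoly_sub_add {ψ : ℝ → ℝ} (hψ : ∀ x, ψ x ≤ Real.log (catoniPoly x))
    (u : ℝ) {σ θ : ℝ} (hσθ : σ ≤ θ) :
    ψ (u - σ) + σ ≤ Real.log (catoniPoly (u - θ)) + θ := by
  have := antitone_log_catoniPoly_sub_self (show u - θ ≤ u - σ by linarith)
  linarith [hψ (u - σ)]

lemma sum_le_sum_add_of_card_ne_le {ι : Type*} (s : Finset ι) {φ : ℝ → ℝ} {A : ℝ}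
    (hφ : ∀ x, |φ x| ≤ A) (x y : ι → ℝ) {B : ℝ}
    (hB : ((s.filter fun t => y t ≠ x t).card : ℝ) ≤ B) :
    ∑ t ∈ s, φ (y t) ≤ ∑ t ∈ s, φ (x t) + 2 * A * B := by
  have hA : 0 ≤ A := (abs_nonneg _).trans (hφ 0)
  have hdiff : ∑ t ∈ s, (φ (y t) - φ (x t))
      = ∑ t ∈ s.filter fun t => y t ≠ x t, (φ (y t) - φ (x t)) := by
    refine (sum_filter_of_ne (p := fun t => y t ≠ x t) fun t _ h heq => h ?_).symm
    rw [heq, sub_self]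
  have hle : ∑ t ∈ s.filter (fun t => y t ≠ x t), (φ (y t) - φ (x t))
      ≤ (s.filter fun t => y t ≠ x t).card • (2 * A) :=
    sum_le_card_nsmul _ _ _ fun t _ => by
      linarith [(abs_le.1 (hφ (y t))).2, (abs_le.1 (hφ (x t))).1]
  rw [nsmul_eq_mul] at hle
  rw [sum_sub_distrib] at hdiff
  linarith [mul_le_mul_of_nonneg_right hB (by positivity : (0 : ℝ) ≤ 2 * A)]

section Catoni

variable {ι : Type*} {ψ : ℝ → ℝ} {A : ℝ} {s : Finset ι} {m : ℕ}

lemma catoni_estimate_add_sub_le (hψ : ∀ x, ψ x ≤ Real.log (catoniPoly x))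
    (hψA : ∀ x, |ψ x| ≤ A)
    (hs : #s = m) (hm : 0 < m) (x y : ι → ℝ) {B : ℝ}
    (hB : ((s.filter fun t => y t ≠ x t).card : ℝ) ≤ B) {α : ℝ} (hα : 0 < α) {μ c θ R : ℝ}
    (hc : c - μ ≤ θ) (hR : ∑ t ∈ s, Real.log (catoniPoly (α⁻¹ * (x t - μ) - θ / α)) ≤ R) :
    α / m * ∑ t ∈ s, ψ ((y t - c) / α) + c - μ ≤ α / m * (R + m * (θ / α) + 2 * A * B) := by
  have hcontam :=
    sum_le_sum_add_of_card_ne_le s (φ := fun z => ψ ((z - c) / α)) (fun _ => hψA _) x y hB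
  have hshift : ∀ t ∈ s, ψ ((x t - c) / α) + (c - μ) / α
      ≤ Real.log (catoniPoly (α⁻¹ * (x t - μ) - θ / α)) + θ / α := fun t _ => by
    have h := le_log_catoniPoly_sub_add hψ (α⁻¹ * (x t - μ))
      (div_le_div_of_nonneg_right hc hα.le)
    rwa [show α⁻¹ * (x t - μ) - (c - μ) / α = (x t - c) / α by field_simp; ring] at h
  have hsum := sum_le_sum hshift
  simp only [sum_add_distrib, sum_const, hs, nsmul_eq_mul] at hsum
  have hmR : (0 : ℝ) < m := by exact_mod_cast hm
  calc α / m * ∑ t ∈ s, ψ ((y t - c) / α) + c - μ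
      = α / m * (∑ t ∈ s, ψ ((y t - c) / α) + m * ((c - μ) / α)) := by
        field_simp; ring
    _ ≤ α / m * (R + m * (θ / α) + 2 * A * B) :=
        mul_le_mul_of_nonneg_left (by linarith) (by positivity)

lemma abs_catoni_estimate_add_sub_le (hψlb : ∀ x : ℝ, -Real.log (1 - x + x ^ 2 / 2) ≤ ψ x)
    (hψub : ∀ x, ψ x ≤ Real.log (catoniPoly x)) (hψA : ∀ x, |ψ x| ≤ A)
    (hs : #s = m) (hm : 0 < m) (x y : ι → ℝ) {B : ℝ}
    (hB : ((s.filter fun t => y t ≠ x t).card : ℝ) ≤ B) {α : ℝ} (hα : 0 < α) {μ c θ R : ℝ}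
    (hc : |c - μ| ≤ θ)
    (hRplus : ∑ t ∈ s, Real.log (catoniPoly (α⁻¹ * (x t - μ) - θ / α)) ≤ R)
    (hRminus : ∑ t ∈ s, Real.log (catoniPoly (-α⁻¹ * (x t - μ) - θ / α)) ≤ R) :
    |α / m * ∑ t ∈ s, ψ ((y t - c) / α) + c - μ| ≤ α / m * (R + m * (θ / α) + 2 * A * B) := by
  obtain ⟨hcl, hcu⟩ := abs_le.1 hc
  refine abs_le.2 ⟨?_, catoni_estimate_add_sub_le hψub hψA hs hm x y hB hα (by linarith) hRplus⟩
  -- the lower bound is the upper bound for the reflected data and `z ↦ -ψ (-z)`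
  have hψub' : ∀ z, -ψ (-z) ≤ Real.log (catoniPoly z) := fun z => by
    have := hψlb (-z)
    rw [show 1 - -z + (-z) ^ 2 / 2 = catoniPoly z by unfold catoniPoly; ring] at this
    linarith
  have h := catoni_estimate_add_sub_le hψub' (fun z => by rw [abs_neg]; exact hψA _) hs hm
    (fun t => -x t) (fun t => -y t) (by simpa only [ne_eq, neg_inj] using hB) hα
    (μ := -μ) (c := -c) (θ := θ) (by linarith)
    (by simpa only [show ∀ t, α⁻¹ * (-x t - -μ) = -α⁻¹ * (x t - μ) from fun t => by ring]
      using hRminus)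
  simp only [show ∀ t, -((-y t - -c) / α) = (y t - c) / α from fun t => by ring, sum_neg_distrib]
    at h
  linarith

end Catoni

lemma sqrt_div_mul_add_div_eq {W c : ℝ} (hW : 0 < W) (hc : 0 < c) :
    √(W / (2 * c)) * c + W / (2 * √(W / (2 * c))) = √(2 * W * c) := by
  have hα : 0 < √(W / (2 * c)) := Real.sqrt_pos.2 (by positivity)
  have hα2 : √(W / (2 * c)) ^ 2 = W / (2 * c) := Real.sq_sqrt (by positivity)
  symm
  rw [Real.sqrt_eq_iff_mul_self_eq_of_pos (by positivity)]
  field_simp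
  rw [hα2]
  field_simp
  ring

section CondExp

variable {Ω : Type*} {m m0 : MeasurableSpace Ω} {P : Measure Ω}

lemma lintegral_mul_condLExp (hm : m ≤ m0) [SigmaFinite (P.trim hm)] {F : Ω → ℝ≥0∞}
    (hF : AEMeasurable F P) {Q : Ω → ℝ≥0∞} (hQ : Measurable[m] Q) :
    ∫⁻ ω, Q ω * P⁻[F|m] ω ∂P = ∫⁻ ω, Q ω * F ω ∂P := by
  have hE : Measurable (P⁻[F|m]) := measurable_condLExp' m P F
  refine Measurable.ennreal_induction (mα := m)
    (motive := fun Q => ∫⁻ ω, Q ω * P⁻[F|m] ω ∂P = ∫⁻ ω, Q ω * F ω ∂P) ?_ ?_ ?_ hQ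
  · intro c s hs
    have hind : ∀ G : Ω → ℝ≥0∞, (fun ω => s.indicator (fun _ => c) ω * G ω)
        = s.indicator fun ω => c * G ω := fun G => funext fun ω => by
      by_cases h : ω ∈ s <;> simp [h]
    rw [hind, hind, lintegral_indicator (hm s hs), lintegral_indicator (hm s hs),
      lintegral_const_mul _ hE, lintegral_const_mul'' _ hF.restrict,
      setLIntegral_condLExp hm P F hs]
  · intro f g _ hf hg ihf ihg
    simp only [Pi.add_apply, add_mul]
    rw [lintegral_add_left (f := fun ω => f ω * P⁻[F|m] ω) ((hf.mono hm le_rfl).mul hE),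
      lintegral_add_left' (f := fun ω => f ω * F ω) ((hf.mono hm le_rfl).aemeasurable.mul hF),
      ihf, ihg]
  · intro f hf hmono ih
    simp only [ENNReal.iSup_mul]
    rw [lintegral_iSup (f := fun n ω => f n ω * P⁻[F|m] ω)
        (fun n => ((hf n).mono hm le_rfl).mul hE)
        (fun i j hij ω => mul_le_mul_left (hmono hij ω) _),
      lintegral_iSup' (f := fun n ω => f n ω * F ω)
        (fun n => ((hf n).mono hm le_rfl).aemeasurable.mul hF)
        (Filter.Eventually.of_forall fun ω i j hij => mul_le_mul_left (hmono hij ω) _)]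
    simp only [ih]

lemma lintegral_mul_ofReal_le_of_condExp_le (hm : m ≤ m0) [IsFiniteMeasure P]
    {Q : Ω → ℝ≥0∞} (hQ : Measurable[m] Q) {f : Ω → ℝ} (hf : Integrable f P)
    (hf0 : 0 ≤ᵐ[P] f) {ρ : ℝ} (hρ : P[f|m] ≤ᵐ[P] fun _ => ρ) :
    ∫⁻ ω, Q ω * ENNReal.ofReal (f ω) ∂P ≤ ENNReal.ofReal ρ * ∫⁻ ω, Q ω ∂P :=
  calc ∫⁻ ω, Q ω * ENNReal.ofReal (f ω) ∂P
      = ∫⁻ ω, Q ω * ENNReal.ofReal (P[f|m] ω) ∂P := by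
        rw [← lintegral_mul_condLExp hm hf.aemeasurable.ennreal_ofReal hQ]
        refine lintegral_congr_ae ?_
        filter_upwards [condLExp_ofReal m hf hf0] with ω hω
        rw [hω]
    _ ≤ ∫⁻ ω, Q ω * ENNReal.ofReal ρ ∂P := by
        refine lintegral_mono_ae ?_
        filter_upwards [hρ] with ω hω
        gcongr
    _ = ENNReal.ofReal ρ * ∫⁻ ω, Q ω ∂P := by
        rw [lintegral_mul_const' _ _ ENNReal.ofReal_ne_top, mul_comm]

lemma condExp_const_add_mul_add_mul (hm : m ≤ m0) [IsFiniteMeasure P] {Y Z : Ω → ℝ}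
    (hY : Integrable Y P) (hZ : Integrable Z P) (a b c : ℝ) :
    P[fun ω => a + b * Y ω + c * Z ω|m] =ᵐ[P] fun ω => a + b * P[Y|m] ω + c * P[Z|m] ω := by
  have hsplit : (fun ω => a + b * Y ω + c * Z ω) = (fun _ => a) + b • Y + c • Z := rfl
  rw [hsplit]
  filter_upwards [condExp_add ((integrable_const a).add (hY.smul b)) (hZ.smul c) m,
    condExp_add (integrable_const a) (hY.smul b) m, condExp_smul (μ := P) b Y m,
    condExp_smul (μ := P) c Z m] with ω h₁ h₂ h₃ h₄
  simp only [h₁, Pi.add_apply, h₂, h₃, h₄, condExp_const hm, Pi.smul_apply, smul_eq_mul]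

lemma condExp_sub_sq_le (hm : m ≤ m0) [IsFiniteMeasure P] {X : Ω → ℝ} (hX : Integrable X P)
    (hX2 : Integrable (fun ω => X ω ^ 2) P) {μ M : ℝ} (hmean : P[X|m] =ᵐ[P] fun _ => μ)
    (hM : ∀ᵐ ω ∂P, P[fun ω => X ω ^ 2|m] ω ≤ M) :
    ∀ᵐ ω ∂P, P[fun ω => (X ω - μ) ^ 2|m] ω ≤ M - μ ^ 2 := by
  have hexp : (fun ω => (X ω - μ) ^ 2) = fun ω => μ ^ 2 + (-2 * μ) * X ω + 1 * X ω ^ 2 := by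
    funext ω; ring
  rw [hexp]
  filter_upwards [condExp_const_add_mul_add_mul hm hX hX2 (μ ^ 2) (-2 * μ) 1, hmean, hM]
    with ω h hω hMω
  rw [h, hω]
  linarith

end CondExp

structure CondMeanVarLE {Ω : Type*} {m0 : MeasurableSpace Ω} (P : Measure Ω)
    (ℱ : Filtration ℕ m0) (X : ℕ → Ω → ℝ) (μ v : ℝ) (t : ℕ) : Prop where
  integrable : Integrable (X t) P
  integrable_sq : Integrable (fun ω => X t ω ^ 2) P
  condExp_eq : P[X t|ℱ (t - 1)] =ᵐ[P] fun _ => μ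
  condExp_sub_sq_le : ∀ᵐ ω ∂P, P[fun ω => (X t ω - μ) ^ 2|ℱ (t - 1)] ω ≤ v

lemma catoniPoly_mul_sub_sub (c d μ x : ℝ) :
    catoniPoly (c * (x - μ) - d)
      = (1 - d + d ^ 2 / 2 - c * (1 - d) * μ) + c * (1 - d) * x + c ^ 2 / 2 * (x - μ) ^ 2 := by
  unfold catoniPoly; ring

namespace CondMeanVarLE

variable {Ω : Type*} {m0 : MeasurableSpace Ω} {P : Measure Ω} {ℱ : Filtration ℕ m0}
  {X : ℕ → Ω → ℝ} {μ v : ℝ} {t : ℕ}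

lemma integrable_sub_sq [IsFiniteMeasure P] (h : CondMeanVarLE P ℱ X μ v t) :
    Integrable (fun ω => (X t ω - μ) ^ 2) P :=
  (((memLp_two_iff_integrable_sq h.integrable.1).2 h.integrable_sq).sub
    (memLp_const μ)).integrable_sq

lemma integrable_catoniPoly [IsFiniteMeasure P] (h : CondMeanVarLE P ℱ X μ v t) (c d : ℝ) :
    Integrable (fun ω => catoniPoly (c * (X t ω - μ) - d)) P := by
  simp only [catoniPoly_mul_sub_sub]
  exact ((integrable_const _).add (h.integrable.const_mul _)).add
    (h.integrable_sub_sq.const_mul _)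

lemma condExp_catoniPoly_le [IsFiniteMeasure P] (h : CondMeanVarLE P ℱ X μ v t) (c d : ℝ) :
    P[fun ω => catoniPoly (c * (X t ω - μ) - d)|ℱ (t - 1)]
      ≤ᵐ[P] fun _ => 1 + ((c ^ 2 * v + d ^ 2) / 2 - d) := by
  simp only [catoniPoly_mul_sub_sub]
  filter_upwards [condExp_const_add_mul_add_mul (ℱ.le _) h.integrable h.integrable_sub_sq
    _ _ _, h.condExp_eq, h.condExp_sub_sq_le] with ω hω hmean hvar
  rw [hω, hmean]
  nlinarith [mul_le_mul_of_nonneg_left hvar (by positivity : (0 : ℝ) ≤ c ^ 2 / 2)]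

end CondMeanVarLE

section Supermartingale

variable {Ω : Type*} {m0 : MeasurableSpace Ω} (P : Measure Ω) [IsProbabilityMeasure P]
  (ℱ : Filtration ℕ m0) {f : ℕ → Ω → ℝ}

lemma lintegral_prod_ofReal_le_pow (s : Finset ℕ) (hmeas : ∀ t ∈ s, Measurable[ℱ t] (f t))
    (hint : ∀ t ∈ s, Integrable (f t) P) (hnn : ∀ t ∈ s, 0 ≤ᵐ[P] f t) {ρ : ℝ}
    (hρ : ∀ t ∈ s, P[f t|ℱ (t - 1)] ≤ᵐ[P] fun _ => ρ) :
    ∫⁻ ω, ∏ t ∈ s, ENNReal.ofReal (f t ω) ∂P ≤ ENNReal.ofReal ρ ^ #s := by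
  induction s using Finset.induction_on_max with
  | empty => simp
  | insert a s hlt ih =>
    have ha : a ∉ s := fun h => lt_irrefl a (hlt a h)
    have hQ : Measurable[ℱ (a - 1)] fun ω => ∏ t ∈ s, ENNReal.ofReal (f t ω) :=
      Finset.measurable_prod _ fun t ht => ENNReal.measurable_ofReal.comp
        ((hmeas t (mem_insert_of_mem ht)).mono (ℱ.mono (by have := hlt t ht; omega)) le_rfl)
    simp only [prod_insert ha, card_insert_of_notMem ha, mul_comm (ENNReal.ofReal (f a _))]
    calc ∫⁻ ω, (∏ t ∈ s, ENNReal.ofReal (f t ω)) * ENNReal.ofReal (f a ω) ∂P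
        ≤ ENNReal.ofReal ρ * ∫⁻ ω, ∏ t ∈ s, ENNReal.ofReal (f t ω) ∂P :=
          lintegral_mul_ofReal_le_of_condExp_le (ℱ.le _) hQ (hint a (mem_insert_self a s))
            (hnn a (mem_insert_self a s)) (hρ a (mem_insert_self a s))
      _ ≤ ENNReal.ofReal ρ * ENNReal.ofReal ρ ^ #s := by
          gcongr
          exact ih (fun t ht => hmeas t (mem_insert_of_mem ht))
            (fun t ht => hint t (mem_insert_of_mem ht)) (fun t ht => hnn t (mem_insert_of_mem ht))
            (fun t ht => hρ t (mem_insert_of_mem ht))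
      _ = ENNReal.ofReal ρ ^ (#s + 1) := by rw [pow_succ']

lemma measure_lt_sum_log_le (s : Finset ℕ) (hmeas : ∀ t ∈ s, Measurable[ℱ t] (f t))
    (hint : ∀ t ∈ s, Integrable (f t) P) (hpos : ∀ t ∈ s, ∀ ω, 0 < f t ω) {τ : ℝ}
    (hτ : ∀ t ∈ s, P[f t|ℱ (t - 1)] ≤ᵐ[P] fun _ => 1 + τ) (L : ℝ) :
    P {ω | L + #s * τ < ∑ t ∈ s, Real.log (f t ω)} ≤ ENNReal.ofReal (Real.exp (-L)) := by
  set ε := ENNReal.ofReal (Real.exp (L + #s * τ))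
  have hprod : ∫⁻ ω, ∏ t ∈ s, ENNReal.ofReal (f t ω) ∂P ≤ ENNReal.ofReal (Real.exp τ) ^ #s :=
    lintegral_prod_ofReal_le_pow P ℱ s hmeas hint
      (fun t ht => Filter.Eventually.of_forall fun ω => (hpos t ht ω).le) fun t ht =>
        (hτ t ht).trans (Filter.Eventually.of_forall fun _ => by linarith [Real.add_one_le_exp τ])
  have hsub : {ω | L + #s * τ < ∑ t ∈ s, Real.log (f t ω)}
      ⊆ {ω | ε ≤ ∏ t ∈ s, ENNReal.ofReal (f t ω)} := fun ω hω => by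
    have hexp : ∏ t ∈ s, f t ω = Real.exp (∑ t ∈ s, Real.log (f t ω)) := by
      rw [Real.exp_sum]
      exact prod_congr rfl fun t ht => (Real.exp_log (hpos t ht ω)).symm
    show ε ≤ _
    rw [← ENNReal.ofReal_prod_of_nonneg fun t ht => (hpos t ht ω).le, hexp]
    exact ENNReal.ofReal_le_ofReal (Real.exp_le_exp.2 hω.le)
  calc P {ω | L + #s * τ < ∑ t ∈ s, Real.log (f t ω)}
      ≤ P {ω | ε ≤ ∏ t ∈ s, ENNReal.ofReal (f t ω)} := measure_mono hsub
    _ ≤ (∫⁻ ω, ∏ t ∈ s, ENNReal.ofReal (f t ω) ∂P) / ε :=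
        meas_ge_le_lintegral_div (f := fun ω => ∏ t ∈ s, ENNReal.ofReal (f t ω))
          (Finset.aemeasurable_fun_prod _ fun t ht => (hint t ht).aemeasurable.ennreal_ofReal)
          (ENNReal.ofReal_pos.2 (Real.exp_pos _)).ne' ENNReal.ofReal_ne_top
    _ ≤ ENNReal.ofReal (Real.exp τ) ^ #s / ε := by gcongr
    _ = ENNReal.ofReal (Real.exp (-L)) := by
        rw [← ENNReal.ofReal_pow (Real.exp_nonneg τ), ← Real.exp_nat_mul,
          ← ENNReal.ofReal_div_of_pos (Real.exp_pos _), ← Real.exp_sub]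
        ring_nf

end Supermartingale

-- `T` need not be measurable: the contaminated observations are arbitrary functions.
lemma ofReal_one_sub_le_measure {Ω : Type*} {m0 : MeasurableSpace Ω} {P : Measure Ω}
    [IsProbabilityMeasure P] {T : Set Ω} {δ : ℝ} (hδ : 0 ≤ δ)
    (h : P Tᶜ ≤ ENNReal.ofReal δ) : ENNReal.ofReal (1 - δ) ≤ P T := by
  have hcover : 1 ≤ P T + ENNReal.ofReal δ :=
    calc 1 = P (T ∪ Tᶜ) := by rw [Set.union_compl_self, measure_univ]
      _ ≤ P T + P Tᶜ := measure_union_le _ _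
      _ ≤ P T + ENNReal.ofReal δ := by gcongr
  rw [ENNReal.ofReal_sub _ hδ, ENNReal.ofReal_one]
  exact tsub_le_iff_right.2 hcover

theorem measure_exists_center_catoni_deviation_le {Ω : Type*} {m0 : MeasurableSpace Ω}
    (P : Measure Ω) [IsProbabilityMeasure P] (ℱ : Filtration ℕ m0) (X Xt : ℕ → Ω → ℝ)
    (hX : StronglyAdapted ℱ X) (s : Finset ℕ) (m : ℕ) (hs : #s = m) (hm : 0 < m) (μ v : ℝ)
    (hmom : ∀ t ∈ s, CondMeanVarLE P ℱ X μ v t) (ψ : ℝ → ℝ)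
    (hψlb : ∀ x : ℝ, -Real.log (1 - x + x ^ 2 / 2) ≤ ψ x)
    (hψub : ∀ x : ℝ, ψ x ≤ Real.log (1 + x + x ^ 2 / 2)) (A : ℝ) (hψA : ∀ x, |ψ x| ≤ A)
    (η : ℝ) (hη : 0 ≤ η)
    (hcontam : ∀ ω, (((s.filter fun t => Xt t ω ≠ X t ω).card : ℝ) ≤ η * m))
    (L : ℝ) (hL : 0 < L) (θ W : ℝ) (hW : 0 < W) (hvW : v + θ ^ 2 ≤ W) (α : ℝ)
    (hα : α = √(W / (2 * (L / m + 2 * A * η)))) :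
    P {ω | ∃ c, |c - μ| ≤ θ ∧ √(2 * W * (L / m + 2 * A * η))
      < |α / m * ∑ t ∈ s, ψ ((Xt t ω - c) / α) + c - μ|} ≤ ENNReal.ofReal (2 * Real.exp (-L)) := by
  have hA : 0 ≤ A := (abs_nonneg _).trans (hψA 0)
  have hmR : (0 : ℝ) < m := by exact_mod_cast hm
  have hrate : 0 < L / m + 2 * A * η := by positivity
  have hα0 : 0 < α := hα ▸ Real.sqrt_pos.2 (by positivity)
  set τ := ((α⁻¹) ^ 2 * v + (θ / α) ^ 2) / 2 - θ / α with hτ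
  set E : ℝ → Set Ω := fun c =>
    {ω | L + #s * τ < ∑ t ∈ s, Real.log (catoniPoly (c * (X t ω - μ) - θ / α))}
  have hE : ∀ c, c ^ 2 = α⁻¹ ^ 2 → P (E c) ≤ ENNReal.ofReal (Real.exp (-L)) := fun c hc =>
    measure_lt_sum_log_le P ℱ s
      (fun t _ => by unfold catoniPoly; have := (hX t).measurable; fun_prop)
      (fun t ht => (hmom t ht).integrable_catoniPoly c (θ / α))
      (fun t _ ω => catoniPoly_pos _)
      (fun t ht => by simpa only [hc] using (hmom t ht).condExp_catoniPoly_le c (θ / α)) L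
  have hbound : α / m * (L + #s * τ + m * (θ / α) + 2 * A * (η * m))
      ≤ √(2 * W * (L / m + 2 * A * η)) := by
    rw [← sqrt_div_mul_add_div_eq hW hrate, ← hα, hs]
    calc α / m * (L + m * τ + m * (θ / α) + 2 * A * (η * m))
        = α * (L / m + 2 * A * η) + (v + θ ^ 2) / (2 * α) := by
          rw [hτ]; field_simp; ring
      _ ≤ α * (L / m + 2 * A * η) + W / (2 * α) := by gcongr
  calc P {ω | ∃ c, |c - μ| ≤ θ ∧ √(2 * W * (L / m + 2 * A * η))
        < |α / m * ∑ t ∈ s, ψ ((Xt t ω - c) / α) + c - μ|}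
      ≤ P (E α⁻¹ ∪ E (-α⁻¹)) := by
        refine measure_mono fun ω ⟨c, hc, hlt⟩ => ?_
        by_contra hω
        simp only [Set.mem_union, not_or, E, Set.mem_ofPred_eq, not_lt] at hω
        exact hlt.not_ge <| (abs_catoni_estimate_add_sub_le hψlb hψub hψA hs hm (X · ω) (Xt · ω)
          (hcontam ω) hα0 hc hω.1 hω.2).trans hbound
    _ ≤ P (E α⁻¹) + P (E (-α⁻¹)) := measure_union_le _ _
    _ ≤ ENNReal.ofReal (Real.exp (-L)) + ENNReal.ofReal (Real.exp (-L)) :=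
        add_le_add (hE _ rfl) (hE _ (neg_sq _))
    _ = ENNReal.ofReal (2 * Real.exp (-L)) := by
        rw [← ENNReal.ofReal_add (Real.exp_nonneg _) (Real.exp_nonneg _), two_mul]

theorem catoni_centered_two_stage_deviation_bound_general
    {Ω : Type*} {m0 : MeasurableSpace Ω} (P : Measure Ω) [IsProbabilityMeasure P]
    (ℱ : Filtration ℕ m0) (n : ℕ)
    (X Xt : ℕ → Ω → ℝ) (μ : ℝ) (M : ℝ) (hM : 0 < M) (V : ℝ) (hV : 0 < V)
    (hAdapted : ∀ t, StronglyMeasurable[ℱ t] (X t))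
    (hInt : ∀ t ∈ Finset.Icc 1 n, Integrable (X t) P)
    (hInt2 : ∀ t ∈ Finset.Icc 1 n, Integrable (fun ω => (X t ω) ^ 2) P)
    -- C1 with constant conditional mean μ
    (hC1 : ∀ t ∈ Finset.Icc 1 n, P[X t|ℱ (t - 1)] =ᵐ[P] fun _ => μ)
    -- C2 : conditional second moment bound
    (hC2 : ∀ t ∈ Finset.Icc 1 n,
      ∀ᵐ ω ∂P, (P[fun ω => (X t ω) ^ 2|ℱ (t - 1)]) ω ≤ M)
    -- conditional variance bound
    (hVar : ∀ t ∈ Finset.Icc 1 n,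
      ∀ᵐ ω ∂P, (P[fun ω => (X t ω - μ) ^ 2|ℱ (t - 1)]) ω ≤ V)
    -- influence function
    (ψ : ℝ → ℝ)
    (hψlb : ∀ x : ℝ, -Real.log (1 - x + x ^ 2 / 2) ≤ ψ x)
    (hψub : ∀ x : ℝ, ψ x ≤ Real.log (1 + x + x ^ 2 / 2))
    (A : ℝ) (hψA : ∀ x : ℝ, |ψ x| ≤ A)
    -- contamination rate η : at most ηk corruptions among the first k indices
    -- and at most η(n−k) corruptions among the last n−k indices
    (η : ℝ) (hη : η ∈ Set.Ioo (0 : ℝ) 1)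
    (k : ℕ) (hk : 0 < k) (hkn : k < n)
    (hcontam₁ : ∀ ω : Ω,
      (((Finset.Icc 1 k).filter (fun t => Xt t ω ≠ X t ω)).card : ℝ) ≤ η * k)
    (hcontam₂ : ∀ ω : Ω,
      (((Finset.Icc (k + 1) n).filter (fun t => Xt t ω ≠ X t ω)).card : ℝ)
        ≤ η * (n - k : ℕ))
    -- confidence level, ϑ_k and the two scale parameters
    (δ : ℝ) (hδ : δ ∈ Set.Ioo (0 : ℝ) 1)
    (ϑ : ℝ) (hϑ : ϑ = Real.sqrt (2 * M * (Real.log (4 / δ) / k + 2 * A * η)))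
    (αbar : ℝ) (hαbar : αbar = Real.sqrt (M / (2 * (Real.log (4 / δ) / k + 2 * A * η))))
    (α' : ℝ)
    (hα' : α' = Real.sqrt ((V + ϑ ^ 2) /
      (2 * (Real.log (4 / δ) / (n - k : ℕ) + 2 * A * η))))
    -- the two-stage estimator
    (μbarη : Ω → ℝ)
    (hμbarη : ∀ ω, μbarη ω = (αbar / k) * ∑ i ∈ Finset.Icc 1 k, ψ (Xt i ω / αbar))
    (μ'η : Ω → ℝ)
    (hμ'η : ∀ ω, μ'η ω =
      (α' / (n - k : ℕ)) * ∑ i ∈ Finset.Icc (k + 1) n, ψ ((Xt i ω - μbarη ω) / α'))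
    (μhatη : Ω → ℝ) (hμhatη : ∀ ω, μhatη ω = μ'η ω + μbarη ω) :
    ENNReal.ofReal (1 - δ) ≤
      P {ω | |μhatη ω - μ| ≤
        Real.sqrt (2 * (V + ϑ ^ 2) *
          (Real.log (4 / δ) / (n - k : ℕ) + 2 * A * η))} := by
  obtain ⟨hη0, -⟩ := hη
  obtain ⟨hδ0, hδ1⟩ := hδ
  have hL : 0 < Real.log (4 / δ) := Real.log_pos (by rw [lt_div_iff₀ hδ0]; linarith)
  have hfail : ENNReal.ofReal (2 * Real.exp (-Real.log (4 / δ))) = ENNReal.ofReal (δ / 2) := by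
    congr 1
    rw [Real.exp_neg, Real.exp_log (by positivity), inv_div]
    ring
  have hmom : ∀ t ∈ Icc 1 n, CondMeanVarLE P ℱ X μ (M - μ ^ 2) t := fun t ht =>
    ⟨hInt t ht, hInt2 t ht, hC1 t ht,
      condExp_sub_sq_le (ℱ.le _) (hInt t ht) (hInt2 t ht) (hC1 t ht) (hC2 t ht)⟩
  have hmomV : ∀ t ∈ Icc 1 n, CondMeanVarLE P ℱ X μ V t := fun t ht =>
    ⟨hInt t ht, hInt2 t ht, hC1 t ht, hVar t ht⟩
  have hsub₁ : Icc 1 k ⊆ Icc 1 n := Icc_subset_Icc_right hkn.le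
  have hsub₂ : Icc (k + 1) n ⊆ Icc 1 n := Icc_subset_Icc_left (by omega)
  have stage₁ := measure_exists_center_catoni_deviation_le P ℱ X Xt hAdapted (Icc 1 k) k
    (by simp) hk μ (M - μ ^ 2) (fun t ht => hmom t (hsub₁ ht)) ψ hψlb hψub A hψA η hη0.le
    hcontam₁ _ hL |μ| M hM (by rw [sq_abs]; linarith) αbar hαbar
  have stage₂ := measure_exists_center_catoni_deviation_le P ℱ X Xt hAdapted (Icc (k + 1) n)
    (n - k) (by simp) (by omega) μ V (fun t ht => hmomV t (hsub₂ ht)) ψ hψlb hψub A hψA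
    η hη0.le hcontam₂ _ hL ϑ _ (by positivity) le_rfl α' hα'
  refine ofReal_one_sub_le_measure hδ0.le ?_
  calc P {ω | |μhatη ω - μ| ≤ Real.sqrt (2 * (V + ϑ ^ 2) *
          (Real.log (4 / δ) / (n - k : ℕ) + 2 * A * η))}ᶜ
      ≤ P (_ ∪ _) := measure_mono fun ω hω => ?_
    _ ≤ P _ + P _ := measure_union_le _ _
    _ ≤ ENNReal.ofReal (δ / 2) + ENNReal.ofReal (δ / 2) :=
        add_le_add (hfail ▸ stage₁) (hfail ▸ stage₂)
    _ = ENNReal.ofReal δ := by rw [← ENNReal.ofReal_add (by positivity) (by positivity)]; ring_nf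
  simp only [Set.mem_compl_iff, Set.mem_ofPred_eq, not_le] at hω
  by_cases hbar : |μbarη ω - μ| ≤ ϑ
  · refine Or.inr ⟨μbarη ω, hbar, ?_⟩
    rwa [hμhatη, hμ'η] at hω
  · refine Or.inl ⟨0, by simp, ?_⟩
    simpa only [sub_zero, ← hμbarη, ← hϑ, add_zero, not_le] using hbar

/-- **Theorem 2 (centered two-stage estimator).** With constant conditional mean `μ`, conditional
variance bounded by `V`, `0 < k < n`, `ϑ_k = sqrt(2M(log(4/δ)/k + 2Aη))`, shifting device
`μ̄_η = (αbar/k) ∑_{i≤k} ψ(X̃_i/αbar)`, shifted estimate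
`μ'_η = (α'/(n−k)) ∑_{i>k} ψ((X̃_i − μ̄_η)/α')` and `μ̂_η = μ'_η + μ̄_η`, one has
`|μ̂_η − μ| ≤ sqrt(2(V + ϑ_k²)(log(4/δ)/(n−k) + 2Aη))` with probability at least `1 − δ`. -/
theorem catoni_centered_two_stage_deviation_bound
    {Ω : Type*} {m0 : MeasurableSpace Ω} (P : Measure Ω) [IsProbabilityMeasure P]
    (ℱ : Filtration ℕ m0) (n : ℕ) (hn : 0 < n)
    (X Xt : ℕ → Ω → ℝ) (μ : ℝ) (M : ℝ) (hM : 0 < M) (V : ℝ) (hV : 0 < V)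
    (hAdapted : ∀ t, StronglyMeasurable[ℱ t] (X t))
    (hInt : ∀ t ∈ Finset.Icc 1 n, Integrable (X t) P)
    (hInt2 : ∀ t ∈ Finset.Icc 1 n, Integrable (fun ω => (X t ω) ^ 2) P)
    -- C1 with constant conditional mean μ
    (hC1 : ∀ t ∈ Finset.Icc 1 n, P[X t|ℱ (t - 1)] =ᵐ[P] fun _ => μ)
    -- C2 : conditional second moment bound
    (hC2 : ∀ t ∈ Finset.Icc 1 n,
      ∀ᵐ ω ∂P, (P[fun ω => (X t ω) ^ 2|ℱ (t - 1)]) ω ≤ M)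
    -- conditional variance bound
    (hVar : ∀ t ∈ Finset.Icc 1 n,
      ∀ᵐ ω ∂P, (P[fun ω => (X t ω - μ) ^ 2|ℱ (t - 1)]) ω ≤ V)
    -- influence function
    (ψ : ℝ → ℝ) (hψmono : Monotone ψ)
    (hψlb : ∀ x : ℝ, -Real.log (1 - x + x ^ 2 / 2) ≤ ψ x)
    (hψub : ∀ x : ℝ, ψ x ≤ Real.log (1 + x + x ^ 2 / 2))
    (A : ℝ) (hA : 0 < A) (hψA : ∀ x : ℝ, |ψ x| ≤ A)
    -- contamination rate η : at most ηk corruptions among the first k indices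
    -- and at most η(n−k) corruptions among the last n−k indices
    (η : ℝ) (hη : η ∈ Set.Ioo (0 : ℝ) 1)
    (k : ℕ) (hk : 0 < k) (hkn : k < n)
    (hcontam₁ : ∀ ω : Ω,
      (((Finset.Icc 1 k).filter (fun t => Xt t ω ≠ X t ω)).card : ℝ) ≤ η * k)
    (hcontam₂ : ∀ ω : Ω,
      (((Finset.Icc (k + 1) n).filter (fun t => Xt t ω ≠ X t ω)).card : ℝ)
        ≤ η * (n - k : ℕ))
    -- confidence level, ϑ_k and the two scale parameters
    (δ : ℝ) (hδ : δ ∈ Set.Ioo (0 : ℝ) 1)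
    (ϑ : ℝ) (hϑ : ϑ = Real.sqrt (2 * M * (Real.log (4 / δ) / k + 2 * A * η)))
    (αbar : ℝ) (hαbar : αbar = Real.sqrt (M / (2 * (Real.log (4 / δ) / k + 2 * A * η))))
    (α' : ℝ)
    (hα' : α' = Real.sqrt ((V + ϑ ^ 2) /
      (2 * (Real.log (4 / δ) / (n - k : ℕ) + 2 * A * η))))
    -- the two-stage estimator
    (μbarη : Ω → ℝ)
    (hμbarη : ∀ ω, μbarη ω = (αbar / k) * ∑ i ∈ Finset.Icc 1 k, ψ (Xt i ω / αbar))
    (μ'η : Ω → ℝ)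
    (hμ'η : ∀ ω, μ'η ω =
      (α' / (n - k : ℕ)) * ∑ i ∈ Finset.Icc (k + 1) n, ψ ((Xt i ω - μbarη ω) / α'))
    (μhatη : Ω → ℝ) (hμhatη : ∀ ω, μhatη ω = μ'η ω + μbarη ω) :
    ENNReal.ofReal (1 - δ) ≤
      P {ω | |μhatη ω - μ| ≤
        Real.sqrt (2 * (V + ϑ ^ 2) *
          (Real.log (4 / δ) / (n - k : ℕ) + 2 * A * η))} :=
  catoni_centered_two_stage_deviation_bound_general P ℱ n X Xt μ M hM V hV hAdapted hInt hInt2 hC1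
    hC2 hVar ψ hψlb hψub A hψA η hη k hk hkn hcontam₁ hcontam₂ δ hδ ϑ hϑ αbar hαbar α' hα' μbarη
    hμbarη μ'η hμ'η μhatη hμhatη
end

section
/- Suppose there are no true change points (K = 0, i.e., μ_t is constant over t ∈ [n]). Under the same assumptions as in the consistency theorem for RC-Cat (threshold b = 2c₀·sqrt(M·η) and window w ≥ (B/(Aη))·log(4/δ) with δ = n^{−(c₁+1)}), there is a constant c₁ > 0 such that P( K̂ = 0 ) ≥ 1 − n^{−c₁}, where K̂ is the number of change points declared by RC-Cat. -/
/-!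
Put `L = log (2 / δ)` and `r = L / w + 2 A η`, so that `α² = M / (2 r)`. Since
`exp ψ(x) ≤ 1 + x + x² / 2`, conditions C1 and C2 bound the conditional moment generating
function of `ψ(X_t / α)` by `exp (μ / α + r)`; a Chernoff bound for the resulting
supermartingale shows that each clean window mean `Ψ` deviates from `μ` by more than
`α (r + L / w)` with probability at most `δ`, and a union bound over at most `n` windows costs
`n δ = n ^ (-c₁)`. Corruption moves a window mean by at most `2 A α η`, so off the bad event
every window mean is within `2 r α` of `μ`, every scan statistic is at most `4 r α`, and the
choice of `w` and `c₀` makes `4 r α ≤ b`.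
-/

open MeasureTheory ProbabilityTheory Finset Real
open scoped Classical

/-- The paper's `Ψ` of the segment `x (s + 1), …, x (s + w)`. -/
noncomputable def catoniWindowMean (ψ : ℝ → ℝ) (α : ℝ) (w s : ℕ) (x : ℕ → ℝ) : ℝ :=
  α / w * ∑ i ∈ Icc (s + 1) (s + w), ψ (x i / α)

section

variable {Ω : Type*} {m0 : MeasurableSpace Ω} {P : Measure Ω}

theorem integral_mul_le_of_condExp_le [IsFiniteMeasure P] {m : MeasurableSpace Ω} (hm : m ≤ m0)
    {f g : Ω → ℝ} {C q : ℝ} (hg : StronglyMeasurable[m] g) (hg0 : ∀ ω, 0 ≤ g ω)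
    (hgC : ∀ ω, g ω ≤ C) (hf : Integrable f P) (hfq : P[f|m] ≤ᵐ[P] fun _ => q) :
    ∫ ω, g ω * f ω ∂P ≤ q * ∫ ω, g ω ∂P := by
  have hg_bdd : ∀ᵐ ω ∂P, ‖g ω‖ ≤ C := ae_of_all _ fun ω => by
    rw [Real.norm_of_nonneg (hg0 ω)]; exact hgC ω
  have hg_int : Integrable g P :=
    (integrable_const C).mono' (hg.mono hm).aestronglyMeasurable hg_bdd
  calc ∫ ω, g ω * f ω ∂P = ∫ ω, P[g * f|m] ω ∂P := (integral_condExp hm).symm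
    _ = ∫ ω, g ω * P[f|m] ω ∂P :=
        integral_congr_ae (condExp_mul_of_stronglyMeasurable_left hg
          (hf.bdd_mul (hg.mono hm).aestronglyMeasurable hg_bdd) hf)
    _ ≤ ∫ ω, g ω * q ∂P := by
        refine integral_mono_ae
          (integrable_condExp.bdd_mul (hg.mono hm).aestronglyMeasurable hg_bdd)
          (hg_int.mul_const q) ?_
        filter_upwards [hfq] with ω hω
        exact mul_le_mul_of_nonneg_left hω (hg0 ω)
    _ = q * ∫ ω, g ω ∂P := by rw [integral_mul_const, mul_comm]

theorem condExp_exp_comp_div_le [IsFiniteMeasure P] {m : MeasurableSpace Ω} (hm : m ≤ m0)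
    {φ : ℝ → ℝ} (hφ : Measurable φ) (hφle : ∀ x, φ x ≤ log (1 + x + x ^ 2 / 2))
    {Y : Ω → ℝ} {μ M α : ℝ} (hα : α ≠ 0) (hY : Integrable Y P)
    (hY2 : Integrable (fun ω => Y ω ^ 2) P) (hmean : P[Y|m] =ᵐ[P] fun _ => μ)
    (hvar : ∀ᵐ ω ∂P, P[fun ω => Y ω ^ 2|m] ω ≤ M) :
    P[fun ω => exp (φ (Y ω / α))|m] ≤ᵐ[P] fun _ => exp (μ / α + M / (2 * α ^ 2)) := by
  set H : Ω → ℝ := (fun _ => 1) + ((1 / α) • Y + (1 / (2 * α ^ 2)) • fun ω => Y ω ^ 2)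
  have hH : ∀ ω, H ω = 1 + Y ω / α + (Y ω / α) ^ 2 / 2 := fun ω => by
    simp only [H, Pi.add_apply, Pi.smul_apply, smul_eq_mul]; field_simp; ring
  have hexp_le : ∀ ω, exp (φ (Y ω / α)) ≤ H ω := fun ω => by
    rw [hH, ← le_log_iff_exp_le (by nlinarith [sq_nonneg (Y ω / α + 1)])]; exact hφle _
  have hlin_int : Integrable ((1 / α) • Y + (1 / (2 * α ^ 2)) • fun ω => Y ω ^ 2) P :=
    (hY.smul _).add (hY2.smul _)
  have hH_int : Integrable H P := (integrable_const 1).add hlin_int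
  have hexp_int : Integrable (fun ω => exp (φ (Y ω / α))) P :=
    hH_int.mono' (continuous_exp.measurable.comp_aemeasurable
      (hφ.comp_aemeasurable (hY.aemeasurable.div_const α))).aestronglyMeasurable
      (ae_of_all _ fun ω => by rw [Real.norm_of_nonneg (exp_pos _).le]; exact hexp_le ω)
  have hH_cond : P[H|m] =ᵐ[P] fun ω => 1 + μ / α + P[fun ω => Y ω ^ 2|m] ω / (2 * α ^ 2) := by
    filter_upwards [condExp_add (integrable_const 1) hlin_int m, condExp_add (hY.smul (1 / α))
      (hY2.smul (1 / (2 * α ^ 2))) m, condExp_smul (1 / α) Y m,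
      condExp_smul (1 / (2 * α ^ 2)) (fun ω => Y ω ^ 2) m, hmean] with ω h1 h2 h3 h4 h5
    simp only [H, h1, Pi.add_apply, condExp_const hm, h2, h3, h4, Pi.smul_apply, smul_eq_mul, h5]
    ring
  filter_upwards [condExp_mono hexp_int hH_int (ae_of_all _ hexp_le), hH_cond, hvar]
    with ω h1 h2 h3
  calc P[fun ω => exp (φ (Y ω / α))|m] ω ≤ 1 + μ / α + P[fun ω => Y ω ^ 2|m] ω / (2 * α ^ 2) :=
        h1.trans h2.le
    _ ≤ μ / α + M / (2 * α ^ 2) + 1 := by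
        have : P[fun ω => Y ω ^ 2|m] ω / (2 * α ^ 2) ≤ M / (2 * α ^ 2) := by gcongr
        linarith
    _ ≤ exp (μ / α + M / (2 * α ^ 2)) := add_one_le_exp _

theorem ofReal_one_sub_le_measure_of_compl_subset [IsProbabilityMeasure P] {U E : Set Ω} {ε : ℝ}
    (hε : 0 ≤ ε) (hU : P U ≤ ENNReal.ofReal ε) (hUE : Uᶜ ⊆ E) : ENNReal.ofReal (1 - ε) ≤ P E := by
  rw [ENNReal.ofReal_sub _ hε, ENNReal.ofReal_one, tsub_le_iff_right]
  calc (1 : ENNReal) = P Set.univ := measure_univ.symm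
    _ ≤ P (E ∪ U) := measure_mono fun x _ => (em (x ∈ U)).elim Or.inr fun h => Or.inl (hUE h)
    _ ≤ P E + P U := measure_union_le _ _
    _ ≤ P E + ENNReal.ofReal ε := by gcongr

variable [IsProbabilityMeasure P] {ℱ : Filtration ℕ m0}

theorem integral_prod_Icc_le_pow {f : ℕ → Ω → ℝ} {C q : ℝ} (hq : 0 ≤ q)
    (hf : ∀ i, StronglyMeasurable[ℱ i] (f i)) (hf0 : ∀ i ω, 0 ≤ f i ω)
    (hfC : ∀ i ω, f i ω ≤ C) (s k : ℕ)
    (hfq : ∀ i ∈ Icc (s + 1) (s + k), P[f i|ℱ (i - 1)] ≤ᵐ[P] fun _ => q) :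
    ∫ ω, ∏ i ∈ Icc (s + 1) (s + k), f i ω ∂P ≤ q ^ k := by
  induction k with
  | zero => simp
  | succ k ih =>
    have hfq_last : P[f (s + k + 1)|ℱ (s + k)] ≤ᵐ[P] fun _ => q := by
      simpa using hfq (s + k + 1) (by simp)
    have hprod_meas : StronglyMeasurable[ℱ (s + k)] fun ω => ∏ i ∈ Icc (s + 1) (s + k), f i ω :=
      stronglyMeasurable_fun_prod _ fun i hi =>
        (hf i).mono (ℱ.mono (by rw [mem_Icc] at hi; omega))
    have hprod_le : ∀ ω, ∏ i ∈ Icc (s + 1) (s + k), f i ω ≤ C ^ k := fun ω =>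
      (prod_le_prod (fun i _ => hf0 i ω) (fun i _ => hfC i ω)).trans_eq (by simp)
    have hf_int : Integrable (f (s + k + 1)) P :=
      (integrable_const C).mono' ((hf _).mono (ℱ.le _)).aestronglyMeasurable
        (ae_of_all _ fun ω => by rw [Real.norm_of_nonneg (hf0 _ ω)]; exact hfC _ ω)
    calc ∫ ω, ∏ i ∈ Icc (s + 1) (s + (k + 1)), f i ω ∂P
        = ∫ ω, (∏ i ∈ Icc (s + 1) (s + k), f i ω) * f (s + k + 1) ω ∂P := by
          simp only [← add_assoc, prod_Icc_succ_top (show s + 1 ≤ s + k + 1 by omega)]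
      _ ≤ q * ∫ ω, ∏ i ∈ Icc (s + 1) (s + k), f i ω ∂P :=
          integral_mul_le_of_condExp_le (ℱ.le _) hprod_meas
            (fun ω => prod_nonneg fun i _ => hf0 i ω) hprod_le hf_int hfq_last
      _ ≤ q * q ^ k := by
          gcongr
          exact ih fun i hi => hfq i (by simp only [mem_Icc] at hi ⊢; omega)
      _ = q ^ (k + 1) := by ring

theorem measure_sum_gt_le_exp_neg {g : ℕ → Ω → ℝ} {C y : ℝ}
    (hg : ∀ i, StronglyMeasurable[ℱ i] (g i)) (hgC : ∀ i ω, g i ω ≤ C) {s w : ℕ}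
    (hmgf : ∀ i ∈ Icc (s + 1) (s + w),
      P[fun ω => exp (g i ω)|ℱ (i - 1)] ≤ᵐ[P] fun _ => exp y) (L : ℝ) :
    P {ω | w * y + L < ∑ i ∈ Icc (s + 1) (s + w), g i ω} ≤ ENNReal.ofReal (exp (-L)) := by
  set Z : Ω → ℝ := fun ω => ∑ i ∈ Icc (s + 1) (s + w), g i ω
  have hmgf_le : mgf Z P 1 ≤ exp (w * y) := by
    simp only [Z, mgf, one_mul, exp_sum]
    calc ∫ ω, ∏ i ∈ Icc (s + 1) (s + w), exp (g i ω) ∂P ≤ exp y ^ w :=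
          integral_prod_Icc_le_pow (exp_pos y).le
            (fun i => continuous_exp.comp_stronglyMeasurable (hg i)) (fun i ω => (exp_pos _).le)
            (fun i ω => exp_le_exp.2 (hgC i ω)) s w hmgf
      _ = exp (w * y) := by rw [← exp_nat_mul]
  have hZ_le : ∀ ω, Z ω ≤ w * C := fun ω =>
    (sum_le_sum fun i _ => hgC i ω).trans_eq (by simp)
  have hint : Integrable (fun ω => exp (1 * Z ω)) P := by
    refine (integrable_const (exp (w * C))).mono' ?_ (ae_of_all _ fun ω => ?_)
    · exact (continuous_exp.comp_stronglyMeasurable ((stronglyMeasurable_fun_sum _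
        fun i _ => (hg i).mono (ℱ.le i)).const_mul 1)).aestronglyMeasurable
    · rw [Real.norm_of_nonneg (exp_pos _).le, exp_le_exp, one_mul]
      exact hZ_le ω
  calc P {ω | w * y + L < Z ω} ≤ P {ω | w * y + L ≤ Z ω} :=
        measure_mono (Set.ofPred_subset_ofPred.2 fun _ => le_of_lt)
    _ = ENNReal.ofReal (P.real {ω | w * y + L ≤ Z ω}) :=
        (ofReal_measureReal (measure_ne_top _ _)).symm
    _ ≤ ENNReal.ofReal (exp (-1 * (w * y + L)) * mgf Z P 1) :=
        ENNReal.ofReal_le_ofReal (measure_ge_le_exp_mul_mgf _ zero_le_one hint)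
    _ ≤ ENNReal.ofReal (exp (-1 * (w * y + L)) * exp (w * y)) := by gcongr
    _ = ENNReal.ofReal (exp (-L)) := by rw [← exp_add]; ring_nf

variable {X : ℕ → Ω → ℝ} {s w : ℕ} {μ M : ℝ}

theorem measure_lt_sum_catoni_le (hX : ∀ t, StronglyMeasurable[ℱ t] (X t))
    (hint : ∀ t ∈ Icc (s + 1) (s + w), Integrable (X t) P)
    (hint2 : ∀ t ∈ Icc (s + 1) (s + w), Integrable (fun ω => X t ω ^ 2) P)
    (hmean : ∀ t ∈ Icc (s + 1) (s + w), P[X t|ℱ (t - 1)] =ᵐ[P] fun _ => μ)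
    (hvar : ∀ t ∈ Icc (s + 1) (s + w), ∀ᵐ ω ∂P, P[fun ω => X t ω ^ 2|ℱ (t - 1)] ω ≤ M)
    {φ : ℝ → ℝ} (hφ : Measurable φ) (hφle : ∀ x, φ x ≤ log (1 + x + x ^ 2 / 2)) {A : ℝ}
    (hφA : ∀ x, φ x ≤ A) {α : ℝ} (hα : α ≠ 0) (L : ℝ) :
    P {ω | w * (μ / α + M / (2 * α ^ 2)) + L < ∑ i ∈ Icc (s + 1) (s + w), φ (X i ω / α)}
      ≤ ENNReal.ofReal (exp (-L)) :=
  measure_sum_gt_le_exp_neg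
    (fun i => (hφ.comp ((hX i).measurable.div_const α)).stronglyMeasurable) (fun _ _ => hφA _)
    (fun i hi => condExp_exp_comp_div_le (ℱ.le _) hφ hφle hα (hint i hi) (hint2 i hi)
      (hmean i hi) (hvar i hi)) L

/-- The lower tail is the upper tail of `-X` with influence function `x ↦ -ψ (-x)`. -/
theorem measure_catoniWindowMean_deviation_le (hX : ∀ t, StronglyMeasurable[ℱ t] (X t))
    (hint : ∀ t ∈ Icc (s + 1) (s + w), Integrable (X t) P)
    (hint2 : ∀ t ∈ Icc (s + 1) (s + w), Integrable (fun ω => X t ω ^ 2) P)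
    (hmean : ∀ t ∈ Icc (s + 1) (s + w), P[X t|ℱ (t - 1)] =ᵐ[P] fun _ => μ)
    (hvar : ∀ t ∈ Icc (s + 1) (s + w), ∀ᵐ ω ∂P, P[fun ω => X t ω ^ 2|ℱ (t - 1)] ω ≤ M)
    {ψ : ℝ → ℝ} (hψ : Measurable ψ) (hψlb : ∀ x, -log (1 - x + x ^ 2 / 2) ≤ ψ x)
    (hψub : ∀ x, ψ x ≤ log (1 + x + x ^ 2 / 2)) {A : ℝ} (hψA : ∀ x, |ψ x| ≤ A)
    {α : ℝ} (hα : 0 < α) (hw : 0 < w) (L : ℝ) :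
    P {ω | α * (M / (2 * α ^ 2) + L / w) < |catoniWindowMean ψ α w s (X · ω) - μ|}
      ≤ ENNReal.ofReal (2 * exp (-L)) := by
  have hupper := measure_lt_sum_catoni_le hX hint hint2 hmean hvar hψ hψub
    (fun x => (le_abs_self _).trans (hψA x)) hα.ne' L
  have hlower := measure_lt_sum_catoni_le (X := fun t => -X t) (μ := -μ) (φ := fun x => -ψ (-x))
    (fun t => (hX t).neg) (fun t ht => (hint t ht).neg)
    (fun t ht => by simpa only [Pi.neg_apply, neg_sq] using hint2 t ht)
    (fun t ht => by
      filter_upwards [condExp_neg (X t) (ℱ (t - 1)), hmean t ht] with ω h1 h2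
      rw [h1, Pi.neg_apply, h2])
    (fun t ht => by simpa only [Pi.neg_apply, neg_sq] using hvar t ht)
    (hψ.comp measurable_neg).neg
    (fun x => by
      have h := hψlb (-x)
      rw [show 1 - -x + (-x) ^ 2 / 2 = 1 + x + x ^ 2 / 2 by ring] at h
      linarith)
    (fun x => (neg_le_abs _).trans (hψA (-x))) hα.ne' L
  have hsub : {ω | α * (M / (2 * α ^ 2) + L / w) < |catoniWindowMean ψ α w s (X · ω) - μ|}
      ⊆ {ω | w * (μ / α + M / (2 * α ^ 2)) + L < ∑ i ∈ Icc (s + 1) (s + w), ψ (X i ω / α)} ∪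
        {ω | w * (-μ / α + M / (2 * α ^ 2)) + L <
          ∑ i ∈ Icc (s + 1) (s + w), -ψ (-((-X i) ω / α))} := by
    intro ω hω
    by_contra hcon
    simp only [Set.mem_union, Set.mem_ofPred_eq, not_or, not_lt, Pi.neg_apply, neg_div, neg_neg,
      sum_neg_distrib] at hcon hω
    obtain ⟨hup, hlow⟩ := hcon
    have hαw : 0 ≤ α / w := by positivity
    have key : ∀ c : ℝ, α / w * (w * (c + M / (2 * α ^ 2)) + L)
        = α * c + α * (M / (2 * α ^ 2) + L / w) := fun c => by field_simp; ring
    have hμ : α * (μ / α) = μ := by field_simp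
    have h1 := mul_le_mul_of_nonneg_left hup hαw
    have h2 := mul_le_mul_of_nonneg_left hlow hαw
    rw [key] at h1 h2
    refine hω.not_ge (abs_le.2 ⟨?_, ?_⟩) <;> rw [catoniWindowMean] <;> linarith
  calc _ ≤ _ := measure_mono hsub
    _ ≤ _ := measure_union_le _ _
    _ ≤ ENNReal.ofReal (exp (-L)) + ENNReal.ofReal (exp (-L)) := add_le_add hupper hlower
    _ = ENNReal.ofReal (2 * exp (-L)) := by
        rw [← ENNReal.ofReal_add (exp_pos _).le (exp_pos _).le, two_mul]

theorem measure_biUnion_catoniWindowMean_deviation_le {n : ℕ}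
    (hX : ∀ t, StronglyMeasurable[ℱ t] (X t))
    (hint : ∀ t ∈ Icc 1 n, Integrable (X t) P)
    (hint2 : ∀ t ∈ Icc 1 n, Integrable (fun ω => X t ω ^ 2) P)
    (hmean : ∀ t ∈ Icc 1 n, P[X t|ℱ (t - 1)] =ᵐ[P] fun _ => μ)
    (hvar : ∀ t ∈ Icc 1 n, ∀ᵐ ω ∂P, P[fun ω => X t ω ^ 2|ℱ (t - 1)] ω ≤ M)
    {ψ : ℝ → ℝ} (hψ : Measurable ψ) (hψlb : ∀ x, -log (1 - x + x ^ 2 / 2) ≤ ψ x)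
    (hψub : ∀ x, ψ x ≤ log (1 + x + x ^ 2 / 2)) {A : ℝ} (hψA : ∀ x, |ψ x| ≤ A)
    {α : ℝ} (hα : 0 < α) (hw : 0 < w) (L : ℝ) :
    P (⋃ s ∈ Icc 1 (n - w),
        {ω | α * (M / (2 * α ^ 2) + L / w) < |catoniWindowMean ψ α w s (X · ω) - μ|})
      ≤ ENNReal.ofReal (n * (2 * exp (-L))) := by
  have hwindow : ∀ s ∈ Icc 1 (n - w), ∀ t ∈ Icc (s + 1) (s + w), t ∈ Icc 1 n := by
    intro s hs t ht; simp only [mem_Icc] at hs ht ⊢; omega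
  calc _ ≤ ∑ s ∈ Icc 1 (n - w),
        P {ω | α * (M / (2 * α ^ 2) + L / w) < |catoniWindowMean ψ α w s (X · ω) - μ|} :=
        measure_biUnion_finset_le _ _
    _ ≤ ∑ s ∈ Icc 1 (n - w), ENNReal.ofReal (2 * exp (-L)) := sum_le_sum fun s hs =>
        measure_catoniWindowMean_deviation_le hX
          (fun t ht => hint t (hwindow s hs t ht)) (fun t ht => hint2 t (hwindow s hs t ht))
          (fun t ht => hmean t (hwindow s hs t ht)) (fun t ht => hvar t (hwindow s hs t ht))
          hψ hψlb hψub hψA hα hw L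
    _ = ENNReal.ofReal (#(Icc 1 (n - w)) * (2 * exp (-L))) := by
        rw [sum_const, nsmul_eq_mul, ← ENNReal.ofReal_natCast,
          ← ENNReal.ofReal_mul (Nat.cast_nonneg _)]
    _ ≤ ENNReal.ofReal (n * (2 * exp (-L))) := by
        gcongr
        rw [Nat.card_Icc]
        omega

end

theorem abs_sum_sub_sum_le_two_mul_card {ι : Type*} (s : Finset ι) {f g : ι → ℝ} {A : ℝ}
    (hf : ∀ i, |f i| ≤ A) (hg : ∀ i, |g i| ≤ A) (p : ι → Prop) [DecidablePred p]
    (hfg : ∀ i ∈ s, ¬p i → f i = g i) :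
    |∑ i ∈ s, f i - ∑ i ∈ s, g i| ≤ 2 * A * #{i ∈ s | p i} := by
  rw [← sum_sub_distrib]
  calc |∑ i ∈ s, (f i - g i)| ≤ ∑ i ∈ s, |f i - g i| := abs_sum_le_sum_abs _ _
    _ = ∑ i ∈ s with p i, |f i - g i| :=
        (sum_filter_of_ne fun i hi hne => by_contra fun hp => hne (by simp [hfg i hi hp])).symm
    _ ≤ ∑ i ∈ s with p i, 2 * A := sum_le_sum fun i _ =>
        (abs_sub _ _).trans (by linarith [hf i, hg i])
    _ = 2 * A * #{i ∈ s | p i} := by rw [sum_const, nsmul_eq_mul, mul_comm]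

theorem abs_catoniWindowMean_sub_le {ψ : ℝ → ℝ} {A : ℝ} (hψA : ∀ x, |ψ x| ≤ A) {α η : ℝ}
    (hα : 0 < α) {w : ℕ} (hw : 0 < w) (s : ℕ) {x y : ℕ → ℝ}
    (hxy : (#{i ∈ Icc (s + 1) (s + w) | x i ≠ y i} : ℝ) ≤ η * w) :
    |catoniWindowMean ψ α w s x - catoniWindowMean ψ α w s y| ≤ 2 * A * α * η := by
  have hA : 0 ≤ A := (abs_nonneg _).trans (hψA 0)
  rw [catoniWindowMean, catoniWindowMean, ← mul_sub, abs_mul, abs_of_pos (by positivity)]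
  calc α / w * |∑ i ∈ Icc (s + 1) (s + w), ψ (x i / α) - ∑ i ∈ Icc (s + 1) (s + w), ψ (y i / α)|
      ≤ α / w * (2 * A * #{i ∈ Icc (s + 1) (s + w) | x i ≠ y i}) := by
        gcongr
        exact abs_sum_sub_sum_le_two_mul_card _ (fun _ => hψA _) (fun _ => hψA _) _
          fun i _ h => by rw [not_not.1 h]
    _ ≤ α / w * (2 * A * (η * w)) := by gcongr
    _ = 2 * A * α * η := by field_simp

theorem abs_scan_le_two_mul_of_forall {ψ : ℝ → ℝ} {α μ ρ : ℝ} {n w lam : ℕ}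
    (hlam : 2 ≤ lam) (hw : 0 < w) {x : ℕ → ℝ}
    (hx : ∀ s ∈ Icc 1 (n - w), |catoniWindowMean ψ α w s x - μ| ≤ ρ) {j : ℕ}
    (hj : j ∈ Icc (lam * w + 1) (n - lam * w)) :
    |α / w * ∑ i ∈ Icc (j + 1) (j + w), ψ (x i / α) -
      α / w * ∑ i ∈ Icc (j - w) (j - 1), ψ (x i / α)| ≤ 2 * ρ := by
  have hlam_w : 2 * w ≤ lam * w := Nat.mul_le_mul_right w hlam
  rw [mem_Icc] at hj
  have hleft : α / w * ∑ i ∈ Icc (j - w) (j - 1), ψ (x i / α)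
      = catoniWindowMean ψ α w (j - w - 1) x := by
    rw [catoniWindowMean]; congr 3 <;> omega
  rw [hleft]
  calc _ ≤ |catoniWindowMean ψ α w j x - μ| + |μ - catoniWindowMean ψ α w (j - w - 1) x| :=
        abs_sub_le _ _ _
    _ ≤ ρ + ρ := by
        rw [abs_sub_comm μ]
        gcongr <;> exact hx _ (by rw [mem_Icc]; omega)
    _ = 2 * ρ := by ring

theorem four_mul_radius_le_threshold {M A B η c₀ L w : ℝ} (hM : 0 ≤ M) (hA : 0 < A)
    (hη : 0 < η) (hB : 0 < B) (hw : 0 < w) (hL : 0 ≤ L) (hc₀pos : 0 ≤ c₀)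
    (hc₀ : c₀ ^ 2 = 2 * A * (1 / B + 2)) (hLw : B / (A * η) * L ≤ w) :
    4 * (L / w + 2 * A * η) * sqrt (M / (2 * (L / w + 2 * A * η))) ≤ 2 * c₀ * sqrt (M * η) := by
  set r := L / w + 2 * A * η
  have hr : 0 < r := by positivity
  have hLw' : L / w ≤ A * η / B := by
    rw [div_le_iff₀ hw]
    calc L = B / (A * η) * L * (A * η / B) := by field_simp
      _ ≤ w * (A * η / B) := by gcongr
      _ = A * η / B * w := mul_comm _ _
  refine le_of_pow_le_pow_left₀ two_ne_zero (by positivity) ?_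
  have hlhs : (4 * r * sqrt (M / (2 * r))) ^ 2 = 8 * M * r := by
    rw [mul_pow, sq_sqrt (by positivity)]; field_simp; ring
  have hrhs : (2 * c₀ * sqrt (M * η)) ^ 2 = 2 ^ 2 * c₀ ^ 2 * (M * η) := by
    rw [mul_pow, mul_pow, sq_sqrt (by positivity)]
  rw [hlhs, hrhs, hc₀]
  have : r ≤ A * η / B + 2 * A * η := by simp only [r]; linarith
  calc 8 * M * r ≤ 8 * M * (A * η / B + 2 * A * η) := by gcongr
    _ = 2 ^ 2 * (2 * A * (1 / B + 2)) * (M * η) := by ring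

/-- **Corollary (no false alarms when there are no change points).** If the conditional mean
is constant over `t ∈ [n]` (no true change points, `K = 0`), then under the same assumptions
as in the consistency theorem for RC-Cat (threshold `b = 2 c₀ sqrt(Mη)`, window
`w ≥ (B/(Aη)) log(4/δ)` with `δ = n^{−(c₁+1)}`, `c₁ > 0`), the algorithm declares no change
points with probability at least `1 − n^{−c₁}`. -/
theorem rc_cat_no_false_alarm
    {Ω : Type*} {m0 : MeasurableSpace Ω} (P : Measure Ω) [IsProbabilityMeasure P]
    (ℱ : Filtration ℕ m0) (n : ℕ) (hn : 0 < n)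
    (X Xt : ℕ → Ω → ℝ) (μ : ℝ) (M : ℝ) (hM : 0 < M)
    (hAdapted : ∀ t, StronglyMeasurable[ℱ t] (X t))
    (hInt : ∀ t ∈ Finset.Icc 1 n, Integrable (X t) P)
    (hInt2 : ∀ t ∈ Finset.Icc 1 n, Integrable (fun ω => (X t ω) ^ 2) P)
    -- C1 with constant conditional mean (no change points) and C2
    (hC1 : ∀ t ∈ Finset.Icc 1 n, P[X t|ℱ (t - 1)] =ᵐ[P] fun _ => μ)
    (hC2 : ∀ t ∈ Finset.Icc 1 n,
      ∀ᵐ ω ∂P, (P[fun ω => (X t ω) ^ 2|ℱ (t - 1)]) ω ≤ M)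
    -- influence function
    (ψ : ℝ → ℝ) (hψmono : Monotone ψ)
    (hψlb : ∀ x : ℝ, -Real.log (1 - x + x ^ 2 / 2) ≤ ψ x)
    (hψub : ∀ x : ℝ, ψ x ≤ Real.log (1 + x + x ^ 2 / 2))
    (A : ℝ) (hA : 0 < A) (hψA : ∀ x : ℝ, |ψ x| ≤ A)
    -- contamination model: in any window of length k ≥ k₀ at most ηk corruptions
    (η : ℝ) (hη : η ∈ Set.Ioo (0 : ℝ) 1) (k₀ : ℕ)
    (hcontam : ∀ ω : Ω, ∀ k : ℕ, k₀ ≤ k → ∀ i : ℕ, i + k ≤ n →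
      (((Finset.Icc (i + 1) (i + k)).filter (fun t => Xt t ω ≠ X t ω)).card : ℝ) ≤ η * k)
    -- window and local-search radius
    (w : ℕ) (hwpos : 0 < w) (hwk₀ : k₀ ≤ w) (lam : ℕ) (hlam : 2 ≤ lam)
    -- threshold and constants
    (B : ℝ) (hB : 1 < B)
    (c₀ : ℝ) (hc₀pos : 0 ≤ c₀) (hc₀ : c₀ ^ 2 = 2 * A * (1 / B + 2))
    (b : ℝ) (hb : b = 2 * c₀ * Real.sqrt (M * η))
    -- confidence level δ = n^{−(c₁+1)}, c₁ > 0, and window-length condition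
    (c₁ : ℝ) (hc₁ : 0 < c₁)
    (δ : ℝ) (hδ : δ = (n : ℝ) ^ (-(c₁ + 1)))
    (hw : (B / (A * η)) * Real.log (4 / δ) ≤ (w : ℝ))
    -- scale parameter and scan statistic
    (α : ℝ) (hα : α = Real.sqrt (M / (2 * (Real.log (2 / δ) / w + 2 * A * η))))
    (S : ℕ → Ω → ℝ)
    (hS : ∀ j ω, S j ω =
      |(α / w) * ∑ i ∈ Finset.Icc (j + 1) (j + w), ψ (Xt i ω / α) -
       (α / w) * ∑ i ∈ Finset.Icc (j - w) (j - 1), ψ (Xt i ω / α)|)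
    -- declared change points: λw-local maximizers of S exceeding the threshold b
    (G : Ω → Finset ℕ)
    (hG : ∀ ω, G ω = (Finset.Icc (lam * w + 1) (n - lam * w)).filter
      (fun j => (∀ i ∈ Finset.Ioo (j - lam * w) (j + lam * w), S i ω ≤ S j ω) ∧
        b < S j ω)) :
    ENNReal.ofReal (1 - (n : ℝ) ^ (-c₁)) ≤ P {ω | (G ω).card = 0} := by
  obtain ⟨hη0, -⟩ := hη
  have hn0 : (0 : ℝ) < n := Nat.cast_pos.2 hn
  have hδ0 : 0 < δ := hδ ▸ rpow_pos_of_pos hn0 _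
  have hδ1 : δ ≤ 1 := hδ ▸ rpow_le_one_of_one_le_of_nonpos (by exact_mod_cast hn) (by linarith)
  set L := log (2 / δ)
  set r := L / w + 2 * A * η
  have hL : 0 ≤ L := log_nonneg (by rw [le_div_iff₀ hδ0]; linarith)
  have hα0 : 0 < α := hα ▸ sqrt_pos.2 (by positivity)
  have hMα : M / (2 * α ^ 2) = r := by
    rw [hα, sq_sqrt (by positivity)]; field_simp
  have hLw : B / (A * η) * L ≤ w := le_trans (mul_le_mul_of_nonneg_left
    (log_le_log (by positivity) (by gcongr; norm_num)) (by positivity)) hw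
  have hrb : 4 * r * α ≤ b := hα ▸ hb ▸ four_mul_radius_le_threshold hM.le hA hη0 (by linarith)
    (by positivity) hL hc₀pos hc₀ hLw
  have hnδ : (n : ℝ) * (2 * exp (-L)) = n ^ (-c₁) := by
    rw [exp_neg, exp_log (by positivity), inv_div, mul_div_cancel₀ _ two_ne_zero, hδ,
      ← rpow_one_add' hn0.le (by linarith)]
    ring_nf
  have hbad := (measure_biUnion_catoniWindowMean_deviation_le hAdapted hInt hInt2 hC1 hC2
    hψmono.measurable hψlb hψub hψA hα0 hwpos L).trans_eq (by rw [hnδ])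
  refine ofReal_one_sub_le_measure_of_compl_subset (rpow_nonneg hn0.le _) hbad fun ω hω => ?_
  have hclean : ∀ s ∈ Icc 1 (n - w), |catoniWindowMean ψ α w s (Xt · ω) - μ| ≤ 2 * r * α := by
    intro s hs
    have hdev : |catoniWindowMean ψ α w s (X · ω) - μ| ≤ α * (M / (2 * α ^ 2) + L / w) :=
      not_lt.1 fun h => hω (Set.mem_biUnion hs h)
    have hcont := abs_catoniWindowMean_sub_le hψA hα0 hwpos s
      (hcontam ω w hwk₀ s (by simp only [mem_Icc] at hs; omega))
    calc _ ≤ _ := abs_sub_le _ (catoniWindowMean ψ α w s (X · ω)) _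
      _ ≤ 2 * A * α * η + α * (M / (2 * α ^ 2) + L / w) := add_le_add hcont hdev
      _ = 2 * r * α := by rw [hMα]; ring
  rw [Set.mem_ofPred_eq, hG, card_eq_zero, filter_eq_empty_iff]
  exact fun j hj ⟨_, hbS⟩ => hbS.not_ge <| (hS j ω).le.trans <|
    (abs_scan_le_two_mul_of_forall hlam hwpos hclean hj).trans (by linarith)
end

section
/- Let the random variables {X_t}_{t∈[n]} satisfy conditions C1 and C2. For any α > 0 and δ ∈ (0,1), the uncontaminated soft-truncation estimator μ̂ = (α/n)·Σ_{i=1}^n ψ(X_i/α) satisfies |μ̂ − μ| ≤ M/(2α) + α·log(2/δ)/n with probability at least 1 − δ. -/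
/-! For `s = ±1` the two bounds on `ψ` say `exp (s ψ x) ≤ 1 + s x + x²/2`, so by C1 and C2 each
factor `exp (s ψ (X_t / α))` has conditional expectation given `ℱ (t - 1)` at most
`exp (s μ_t / α + M / (2 α²))`. Conditioning on `ℱ (n - 1)` and inducting shows that
`exp (s ∑ ψ (X_t / α))` has expectation at most `exp (∑ (s μ_t / α + M / (2 α²)))`, so by Markov's
inequality each one-sided deviation exceeds its threshold with probability at most `δ / 2`. -/

open MeasureTheory Finset

section ConditionalMoments

variable {Ω : Type*} {m m0 : MeasurableSpace Ω} {P : Measure Ω} [IsFiniteMeasure P]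

lemma integral_mul_le_of_condExp_le_s5 (hm : m ≤ m0) {G Y : Ω → ℝ} (hG : StronglyMeasurable[m] G)
    (hG0 : ∀ ω, 0 ≤ G ω) {K : ℝ} (hGK : ∀ ω, G ω ≤ K) (hY : Integrable Y P) {c : ℝ}
    (hYc : ∀ᵐ ω ∂P, P[Y|m] ω ≤ c) :
    ∫ ω, G ω * Y ω ∂P ≤ c * ∫ ω, G ω ∂P := by
  have hGbdd : ∀ᵐ ω ∂P, ‖G ω‖ ≤ K :=
    ae_of_all _ fun ω => by rw [Real.norm_of_nonneg (hG0 ω)]; exact hGK ω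
  have hGint : Integrable G P :=
    (integrable_const K).mono' (hG.mono hm).aestronglyMeasurable hGbdd
  have hpull := condExp_stronglyMeasurable_mul_of_bound hm hG hY K hGbdd
  calc ∫ ω, G ω * Y ω ∂P = ∫ ω, (G * P[Y|m]) ω ∂P :=
        (integral_condExp hm).symm.trans (integral_congr_ae hpull)
    _ ≤ ∫ ω, c * G ω ∂P := by
        refine integral_mono_ae (integrable_condExp.congr hpull) (hGint.const_mul c) ?_
        filter_upwards [hYc] with ω hω
        simpa [mul_comm c] using mul_le_mul_of_nonneg_left hω (hG0 ω)
    _ = c * ∫ ω, G ω ∂P := integral_const_mul c _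

-- Reduced to the bounded case by monotone convergence along the truncations `min G k`.
lemma lintegral_mul_le_of_condExp_le (hm : m ≤ m0) {G Y : Ω → ℝ} (hG : StronglyMeasurable[m] G)
    (hG0 : ∀ ω, 0 ≤ G ω) (hY : Integrable Y P) (hY0 : ∀ ω, 0 ≤ Y ω) {c : ℝ} (hc : 0 ≤ c)
    (hYc : ∀ᵐ ω ∂P, P[Y|m] ω ≤ c) :
    ∫⁻ ω, ENNReal.ofReal (G ω * Y ω) ∂P ≤ ENNReal.ofReal c * ∫⁻ ω, ENNReal.ofReal (G ω) ∂P := by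
  set g : ℕ → Ω → ℝ := fun k ω => min (G ω) k
  have hg0 : ∀ k ω, 0 ≤ g k ω := fun k ω => le_min (hG0 ω) k.cast_nonneg
  have hgm : ∀ k, StronglyMeasurable[m] (g k) := fun k =>
    (hG.measurable.min measurable_const).stronglyMeasurable
  have hgint : ∀ k, Integrable (g k) P := fun k =>
    (integrable_const (k : ℝ)).mono' ((hgm k).mono hm).aestronglyMeasurable
      (ae_of_all _ fun ω => by rw [Real.norm_of_nonneg (hg0 k ω)]; exact min_le_right _ _)
  have hgY : ∀ k, Integrable (fun ω => g k ω * Y ω) P := fun k =>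
    hY.bdd_mul ((hgm k).mono hm).aestronglyMeasurable
      (ae_of_all _ fun ω => by rw [Real.norm_of_nonneg (hg0 k ω)]; exact min_le_right _ _)
  have htrunc : ∀ k, ∫⁻ ω, ENNReal.ofReal (g k ω * Y ω) ∂P ≤
      ENNReal.ofReal c * ∫⁻ ω, ENNReal.ofReal (G ω) ∂P := fun k =>
    calc ∫⁻ ω, ENNReal.ofReal (g k ω * Y ω) ∂P = ENNReal.ofReal (∫ ω, g k ω * Y ω ∂P) :=
          (ofReal_integral_eq_lintegral_ofReal (hgY k)
            (ae_of_all _ fun ω => mul_nonneg (hg0 k ω) (hY0 ω))).symm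
      _ ≤ ENNReal.ofReal (c * ∫ ω, g k ω ∂P) := ENNReal.ofReal_le_ofReal
          (integral_mul_le_of_condExp_le_s5 hm (hgm k) (hg0 k) (fun ω => min_le_right _ _) hY hYc)
      _ = ENNReal.ofReal c * ∫⁻ ω, ENNReal.ofReal (g k ω) ∂P := by
          rw [ENNReal.ofReal_mul hc, ofReal_integral_eq_lintegral_ofReal (hgint k)
            (ae_of_all _ (hg0 k))]
      _ ≤ ENNReal.ofReal c * ∫⁻ ω, ENNReal.ofReal (G ω) ∂P := by
          gcongr with ω
          exact min_le_left _ _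
  have hsup : ∀ ω, ⨆ k : ℕ, ENNReal.ofReal (g k ω * Y ω) = ENNReal.ofReal (G ω * Y ω) := by
    intro ω
    refine le_antisymm (iSup_le fun k => ?_) ?_
    · exact ENNReal.ofReal_le_ofReal (mul_le_mul_of_nonneg_right (min_le_left _ _) (hY0 ω))
    · refine le_iSup_of_le ⌈G ω⌉₊ ?_
      rw [show g ⌈G ω⌉₊ ω = G ω from min_eq_left (Nat.le_ceil _)]
  have hmono : ∀ ω, Monotone fun k : ℕ => ENNReal.ofReal (g k ω * Y ω) := fun ω k l hkl =>
    ENNReal.ofReal_le_ofReal (mul_le_mul_of_nonneg_right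
      (min_le_min le_rfl (Nat.cast_le.mpr hkl)) (hY0 ω))
  calc ∫⁻ ω, ENNReal.ofReal (G ω * Y ω) ∂P
      = ⨆ k : ℕ, ∫⁻ ω, ENNReal.ofReal (g k ω * Y ω) ∂P := by
        simp_rw [← hsup]
        exact lintegral_iSup' (fun k => (hgY k).aemeasurable.ennreal_ofReal) (ae_of_all _ hmono)
    _ ≤ _ := iSup_le htrunc

lemma condExp_le_of_le_quadratic (hm : m ≤ m0) {X Z : Ω → ℝ} {μ M a b : ℝ} (hb : 0 ≤ b)
    (hX : Integrable X P) (hX2 : Integrable (fun ω => X ω ^ 2) P) (hZ : Integrable Z P)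
    (hZX : ∀ ω, Z ω ≤ 1 + a * X ω + b * X ω ^ 2)
    (hmean : P[X|m] =ᵐ[P] fun _ => μ) (hsecond : ∀ᵐ ω ∂P, P[fun ω => X ω ^ 2|m] ω ≤ M) :
    ∀ᵐ ω ∂P, P[Z|m] ω ≤ 1 + a * μ + b * M := by
  set B : Ω → ℝ := (fun _ => 1) + (a • X + b • fun ω => X ω ^ 2)
  have hB : Integrable B P := (integrable_const 1).add ((hX.smul a).add (hX2.smul b))
  have hZB : P[Z|m] ≤ᵐ[P] P[B|m] :=
    condExp_mono hZ hB (ae_of_all _ fun ω => by simpa [B, smul_eq_mul, add_assoc] using hZX ω)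
  have hsum := condExp_add (integrable_const 1) ((hX.smul a).add (hX2.smul b)) m
  have hsum' := condExp_add (hX.smul a) (hX2.smul b) m
  filter_upwards [hZB, hsum, hsum', condExp_smul a X m, condExp_smul b (fun ω => X ω ^ 2) m,
    hmean, hsecond] with ω hZB hsum hsum' ha hb' hmean hsecond
  simp only [Pi.add_apply, Pi.smul_apply, smul_eq_mul, condExp_const hm] at *
  rw [hsum, hsum', ha, hb', hmean] at hZB
  linarith [mul_le_mul_of_nonneg_left hsecond hb]

lemma integrable_comp_div_of_le_quadratic {X : Ω → ℝ} (hX : Integrable X P)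
    (hX2 : Integrable (fun ω => X ω ^ 2) P) {f : ℝ → ℝ} (hf : Measurable f) (hf0 : ∀ x, 0 ≤ f x)
    {s : ℝ} (hfs : ∀ x, f x ≤ 1 + s * x + x ^ 2 / 2) (α : ℝ) :
    Integrable (fun ω => f (X ω / α)) P := by
  refine Integrable.mono' ((integrable_const 1).add ((hX.const_mul (s / α)).add
    (hX2.const_mul (1 / (2 * α ^ 2)))))
    (hf.comp_aemeasurable (hX.aemeasurable.div_const α)).aestronglyMeasurable
    (ae_of_all _ fun ω => ?_)
  rw [Real.norm_of_nonneg (hf0 _)]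
  convert hfs (X ω / α) using 1
  simp only [Pi.add_apply]
  ring

lemma condExp_comp_div_le_exp (hm : m ≤ m0) {X : Ω → ℝ} {μ M : ℝ} (hX : Integrable X P)
    (hX2 : Integrable (fun ω => X ω ^ 2) P) (hmean : P[X|m] =ᵐ[P] fun _ => μ)
    (hsecond : ∀ᵐ ω ∂P, P[fun ω => X ω ^ 2|m] ω ≤ M) {f : ℝ → ℝ} (hf : Measurable f)
    (hf0 : ∀ x, 0 ≤ f x) {s : ℝ} (hfs : ∀ x, f x ≤ 1 + s * x + x ^ 2 / 2) (α : ℝ) :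
    ∀ᵐ ω ∂P, P[fun ω => f (X ω / α)|m] ω ≤ Real.exp (s * μ / α + M / (2 * α ^ 2)) := by
  have hquad := condExp_le_of_le_quadratic hm (a := s / α) (b := 1 / (2 * α ^ 2))
    (by positivity) hX hX2 (integrable_comp_div_of_le_quadratic hX hX2 hf hf0 hfs α)
    (fun ω => by convert hfs (X ω / α) using 1; ring) hmean hsecond
  filter_upwards [hquad] with ω hω
  calc P[fun ω => f (X ω / α)|m] ω ≤ s * μ / α + M / (2 * α ^ 2) + 1 := by
        convert hω using 1; ring
    _ ≤ _ := Real.add_one_le_exp _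

end ConditionalMoments

section Concentration

variable {Ω : Type*} {m0 : MeasurableSpace Ω} {P : Measure Ω} [IsProbabilityMeasure P]

lemma lintegral_prod_le_of_condExp_le (ℱ : Filtration ℕ m0) {Y : ℕ → Ω → ℝ} {c : ℕ → ℝ}
    (hY : ∀ t, StronglyMeasurable[ℱ t] (Y t)) (hY0 : ∀ t ω, 0 ≤ Y t ω) (hc : ∀ t, 0 ≤ c t)
    (n : ℕ) (hYint : ∀ t ∈ Icc 1 n, Integrable (Y t) P)
    (hYc : ∀ t ∈ Icc 1 n, ∀ᵐ ω ∂P, P[Y t|ℱ (t - 1)] ω ≤ c t) :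
    ∫⁻ ω, ENNReal.ofReal (∏ t ∈ Icc 1 n, Y t ω) ∂P ≤ ∏ t ∈ Icc 1 n, ENNReal.ofReal (c t) := by
  induction n with
  | zero => simp
  | succ n ih =>
    have hsub : Icc 1 n ⊆ Icc 1 (n + 1) := Icc_subset_Icc_right n.le_succ
    have hlast : n + 1 ∈ Icc 1 (n + 1) := by simp
    have hprefix : StronglyMeasurable[ℱ n] fun ω => ∏ t ∈ Icc 1 n, Y t ω :=
      Finset.stronglyMeasurable_fun_prod _ fun t ht => (hY t).mono (ℱ.mono (mem_Icc.mp ht).2)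
    simp_rw [prod_Icc_succ_top (Nat.le_add_left 1 n)]
    calc ∫⁻ ω, ENNReal.ofReal ((∏ t ∈ Icc 1 n, Y t ω) * Y (n + 1) ω) ∂P
        ≤ ENNReal.ofReal (c (n + 1)) * ∫⁻ ω, ENNReal.ofReal (∏ t ∈ Icc 1 n, Y t ω) ∂P :=
          lintegral_mul_le_of_condExp_le (ℱ.le n) hprefix (fun ω => prod_nonneg fun t _ => hY0 t ω)
            (hYint _ hlast) (hY0 _) (hc _) (by simpa using hYc _ hlast)
      _ ≤ ENNReal.ofReal (c (n + 1)) * ∏ t ∈ Icc 1 n, ENNReal.ofReal (c t) := by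
          gcongr
          exact ih (fun t ht => hYint t (hsub ht)) (fun t ht => hYc t (hsub ht))
      _ = (∏ t ∈ Icc 1 n, ENNReal.ofReal (c t)) * ENNReal.ofReal (c (n + 1)) := mul_comm _ _

lemma measure_sum_ge_le_exp_neg (ℱ : Filtration ℕ m0) {Z : ℕ → Ω → ℝ} {κ : ℕ → ℝ}
    (hZ : ∀ t, StronglyMeasurable[ℱ t] (Z t)) (n : ℕ)
    (hint : ∀ t ∈ Icc 1 n, Integrable (fun ω => Real.exp (Z t ω)) P)
    (hcond : ∀ t ∈ Icc 1 n,
      ∀ᵐ ω ∂P, P[fun ω => Real.exp (Z t ω)|ℱ (t - 1)] ω ≤ Real.exp (κ t))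
    (r : ℝ) :
    P {ω | ∑ t ∈ Icc 1 n, κ t + r ≤ ∑ t ∈ Icc 1 n, Z t ω} ≤ ENNReal.ofReal (Real.exp (-r)) := by
  set b := ∑ t ∈ Icc 1 n, κ t + r
  have hexpZ : ∀ t, StronglyMeasurable[ℱ t] fun ω => Real.exp (Z t ω) := fun t =>
    (Real.measurable_exp.comp (hZ t).measurable).stronglyMeasurable
  have hmoment : ∫⁻ ω, ENNReal.ofReal (∏ t ∈ Icc 1 n, Real.exp (Z t ω)) ∂P ≤
      ENNReal.ofReal (Real.exp (∑ t ∈ Icc 1 n, κ t)) := by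
    rw [Real.exp_sum, ENNReal.ofReal_prod_of_nonneg fun t _ => (Real.exp_pos _).le]
    exact lintegral_prod_le_of_condExp_le ℱ hexpZ (fun t ω => (Real.exp_pos _).le)
      (fun t => (Real.exp_pos _).le) n hint hcond
  have hmeas : AEMeasurable (fun ω => ENNReal.ofReal (∏ t ∈ Icc 1 n, Real.exp (Z t ω))) P :=
    (Finset.measurable_prod _ fun t _ => ((hexpZ t).mono (ℱ.le t)).measurable).ennreal_ofReal
      |>.aemeasurable
  have hexp_b : ENNReal.ofReal (Real.exp b) ≠ 0 := by simp [Real.exp_pos]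
  calc P {ω | b ≤ ∑ t ∈ Icc 1 n, Z t ω}
      ≤ P {ω | ENNReal.ofReal (Real.exp b) ≤
          ENNReal.ofReal (∏ t ∈ Icc 1 n, Real.exp (Z t ω))} := by
        refine measure_mono fun ω hω => ?_
        rw [Set.mem_ofPred_eq, ← Real.exp_sum]
        exact ENNReal.ofReal_le_ofReal (Real.exp_le_exp.mpr hω)
    _ ≤ (∫⁻ ω, ENNReal.ofReal (∏ t ∈ Icc 1 n, Real.exp (Z t ω)) ∂P) /
          ENNReal.ofReal (Real.exp b) := meas_ge_le_lintegral_div hmeas hexp_b ENNReal.ofReal_ne_top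
    _ ≤ ENNReal.ofReal (Real.exp (∑ t ∈ Icc 1 n, κ t)) / ENNReal.ofReal (Real.exp b) := by
        gcongr
    _ = ENNReal.ofReal (Real.exp (-r)) := by
        rw [← ENNReal.ofReal_div_of_pos (Real.exp_pos b), ← Real.exp_sub]
        congr 2
        ring

lemma measure_sum_mul_comp_div_ge_le (ℱ : Filtration ℕ m0) (n : ℕ) {X : ℕ → Ω → ℝ}
    {μt : ℕ → ℝ} {M : ℝ} (hAdapted : ∀ t, StronglyMeasurable[ℱ t] (X t))
    (hInt : ∀ t ∈ Icc 1 n, Integrable (X t) P)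
    (hInt2 : ∀ t ∈ Icc 1 n, Integrable (fun ω => X t ω ^ 2) P)
    (hC1 : ∀ t ∈ Icc 1 n, P[X t|ℱ (t - 1)] =ᵐ[P] fun _ => μt t)
    (hC2 : ∀ t ∈ Icc 1 n, ∀ᵐ ω ∂P, P[fun ω => X t ω ^ 2|ℱ (t - 1)] ω ≤ M)
    {ψ : ℝ → ℝ} (hψ : Measurable ψ) {s : ℝ}
    (hs : ∀ x, Real.exp (s * ψ x) ≤ 1 + s * x + x ^ 2 / 2) (α r : ℝ) :
    P {ω | ∑ t ∈ Icc 1 n, (s * μt t / α + M / (2 * α ^ 2)) + r ≤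
        ∑ t ∈ Icc 1 n, s * ψ (X t ω / α)} ≤ ENNReal.ofReal (Real.exp (-r)) := by
  have hf : Measurable fun x => Real.exp (s * ψ x) :=
    Real.measurable_exp.comp (hψ.const_mul s)
  exact measure_sum_ge_le_exp_neg ℱ
    (fun t => ((hψ.comp ((hAdapted t).measurable.div_const α)).const_mul s).stronglyMeasurable) n
    (fun t ht => integrable_comp_div_of_le_quadratic (hInt t ht) (hInt2 t ht) hf
      (fun _ => (Real.exp_pos _).le) hs α)
    (fun t ht => condExp_comp_div_le_exp (ℱ.le _) (hInt t ht) (hInt2 t ht) (hC1 t ht) (hC2 t ht)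
      hf (fun _ => (Real.exp_pos _).le) hs α) r

lemma ofReal_one_sub_le_measure_of_measure_compl_le {E : Set Ω} {δ : ℝ} (hδ : 0 ≤ δ)
    (hE : P Eᶜ ≤ ENNReal.ofReal δ) : ENNReal.ofReal (1 - δ) ≤ P E :=
  calc ENNReal.ofReal (1 - δ) = 1 - ENNReal.ofReal δ := by
        rw [ENNReal.ofReal_sub 1 hδ, ENNReal.ofReal_one]
    _ ≤ 1 - P Eᶜ := tsub_le_tsub_left hE 1
    _ ≤ P E := by
        rw [tsub_le_iff_right, ← measure_univ (μ := P)]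
        exact measure_univ_le_add_compl E

end Concentration

lemma exp_mul_le_of_log_bounds {ψ : ℝ → ℝ}
    (hlb : ∀ x : ℝ, -Real.log (1 - x + x ^ 2 / 2) ≤ ψ x)
    (hub : ∀ x : ℝ, ψ x ≤ Real.log (1 + x + x ^ 2 / 2)) {s : ℝ} (hs : s = 1 ∨ s = -1) (x : ℝ) :
    Real.exp (s * ψ x) ≤ 1 + s * x + x ^ 2 / 2 := by
  have hpos : 0 < 1 + s * x + x ^ 2 / 2 := by
    rcases hs with rfl | rfl <;> nlinarith [sq_nonneg (x + 1), sq_nonneg (x - 1)]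
  have hlog : s * ψ x ≤ Real.log (1 + s * x + x ^ 2 / 2) := by
    rcases hs with rfl | rfl
    · simpa using hub x
    · have := hlb x
      simp only [neg_one_mul, ← sub_eq_add_neg]
      linarith
  exact (Real.exp_le_exp.mpr hlog).trans_eq (Real.exp_log hpos)

lemma abs_div_mul_sum_sub_mean_le {n : ℕ} (hn : 0 < n) {α : ℝ} (hα : 0 < α) {M L : ℝ}
    (x μ : ℕ → ℝ) (h : ∀ s : ℝ, s = 1 ∨ s = -1 →
      ∑ t ∈ Icc 1 n, s * x t < ∑ t ∈ Icc 1 n, (s * μ t / α + M / (2 * α ^ 2)) + L) :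
    |α / n * ∑ t ∈ Icc 1 n, x t - 1 / n * ∑ t ∈ Icc 1 n, μ t| ≤ M / (2 * α) + α * L / n := by
  have hsided : ∀ s : ℝ, s = 1 ∨ s = -1 →
      s * (∑ t ∈ Icc 1 n, x t - (∑ t ∈ Icc 1 n, μ t) / α) < n * M / (2 * α ^ 2) + L := by
    intro s hs
    have := h s hs
    simp only [← mul_sum, sum_add_distrib, sum_const, Nat.card_Icc, add_tsub_cancel_right,
      nsmul_eq_mul, ← sum_div] at this
    rw [mul_sub]
    linarith [mul_div_assoc s (∑ t ∈ Icc 1 n, μ t) α, mul_div_assoc (n : ℝ) M (2 * α ^ 2)]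
  have hn' : (0 : ℝ) < n := by exact_mod_cast hn
  have hdev : α / n * ∑ t ∈ Icc 1 n, x t - 1 / n * ∑ t ∈ Icc 1 n, μ t =
      α / n * (∑ t ∈ Icc 1 n, x t - (∑ t ∈ Icc 1 n, μ t) / α) := by
    field_simp
  have hrad : M / (2 * α) + α * L / n = α / n * (n * M / (2 * α ^ 2) + L) := by
    field_simp
  rw [hdev, hrad, abs_mul, abs_of_pos (by positivity)]
  gcongr
  have := hsided 1 (.inl rfl)
  have := hsided (-1) (.inr rfl)
  exact abs_le.mpr ⟨by linarith, by linarith⟩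

theorem catoni_uncontaminated_deviation_bound_general
    {Ω : Type*} {m0 : MeasurableSpace Ω} (P : Measure Ω) [IsProbabilityMeasure P]
    (ℱ : Filtration ℕ m0) (n : ℕ) (hn : 0 < n)
    (X : ℕ → Ω → ℝ) (μt : ℕ → ℝ) (M : ℝ)
    (hAdapted : ∀ t, StronglyMeasurable[ℱ t] (X t))
    (hInt : ∀ t ∈ Finset.Icc 1 n, Integrable (X t) P)
    (hInt2 : ∀ t ∈ Finset.Icc 1 n, Integrable (fun ω => (X t ω) ^ 2) P)
    -- C1 : conditional mean
    (hC1 : ∀ t ∈ Finset.Icc 1 n, P[X t|ℱ (t - 1)] =ᵐ[P] fun _ => μt t)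
    -- C2 : conditional second moment bound
    (hC2 : ∀ t ∈ Finset.Icc 1 n,
      ∀ᵐ ω ∂P, (P[fun ω => (X t ω) ^ 2|ℱ (t - 1)]) ω ≤ M)
    -- influence function
    (ψ : ℝ → ℝ) (hψmono : Monotone ψ)
    (hψlb : ∀ x : ℝ, -Real.log (1 - x + x ^ 2 / 2) ≤ ψ x)
    (hψub : ∀ x : ℝ, ψ x ≤ Real.log (1 + x + x ^ 2 / 2))
    (α : ℝ) (hα : 0 < α) (δ : ℝ) (hδ : δ ∈ Set.Ioo (0 : ℝ) 1)
    (μbar : ℝ) (hμbar : μbar = (1 / n) * ∑ t ∈ Finset.Icc 1 n, μt t) :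
    ENNReal.ofReal (1 - δ) ≤
      P {ω | |(α / n) * ∑ i ∈ Finset.Icc 1 n, ψ (X i ω / α) - μbar| ≤
        M / (2 * α) + α * Real.log (2 / δ) / n} := by
  obtain ⟨hδ0, -⟩ := hδ
  set E := {ω | |(α / n) * ∑ i ∈ Icc 1 n, ψ (X i ω / α) - μbar| ≤
    M / (2 * α) + α * Real.log (2 / δ) / n}
  set A : ℝ → Set Ω := fun s => {ω | ∑ t ∈ Icc 1 n, (s * μt t / α + M / (2 * α ^ 2)) +
    Real.log (2 / δ) ≤ ∑ t ∈ Icc 1 n, s * ψ (X t ω / α)}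
  have htail : ∀ s : ℝ, s = 1 ∨ s = -1 → P (A s) ≤ ENNReal.ofReal (δ / 2) := fun s hs => by
    simpa [Real.exp_neg, Real.exp_log (by positivity : 0 < 2 / δ)] using
      measure_sum_mul_comp_div_ge_le ℱ n hAdapted hInt hInt2 hC1 hC2 hψmono.measurable
        (exp_mul_le_of_log_bounds hψlb hψub hs) α (Real.log (2 / δ))
  have hcover : Eᶜ ⊆ A 1 ∪ A (-1) := fun ω hω => by
    by_contra hA
    simp only [Set.mem_union, not_or, A, Set.mem_ofPred_eq, not_le] at hA
    refine hω ?_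
    rw [Set.mem_ofPred_eq, hμbar]
    exact abs_div_mul_sum_sub_mean_le hn hα _ μt fun s hs => hs.elim (· ▸ hA.1) (· ▸ hA.2)
  have hbad : P Eᶜ ≤ ENNReal.ofReal δ :=
    calc P Eᶜ ≤ P (A 1) + P (A (-1)) := (measure_mono hcover).trans (measure_union_le _ _)
      _ ≤ ENNReal.ofReal (δ / 2) + ENNReal.ofReal (δ / 2) :=
          add_le_add (htail 1 (.inl rfl)) (htail (-1) (.inr rfl))
      _ = ENNReal.ofReal δ := by
          rw [← ENNReal.ofReal_add (by positivity) (by positivity), add_halves]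
  exact ofReal_one_sub_le_measure_of_measure_compl_le hδ0.le hbad

/-- **Lemma 1 (deviation bound without contamination).** Under C1 and C2, for any `α > 0`
and `δ ∈ (0,1)`, the soft-truncation estimator `μ̂ = (α/n) ∑ ψ(X_i/α)` satisfies
`|μ̂ − μ| ≤ M/(2α) + α log(2/δ)/n` with probability at least `1 − δ`. -/
theorem catoni_uncontaminated_deviation_bound
    {Ω : Type*} {m0 : MeasurableSpace Ω} (P : Measure Ω) [IsProbabilityMeasure P]
    (ℱ : Filtration ℕ m0) (n : ℕ) (hn : 0 < n)
    (X : ℕ → Ω → ℝ) (μt : ℕ → ℝ) (M : ℝ) (hM : 0 < M)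
    (hAdapted : ∀ t, StronglyMeasurable[ℱ t] (X t))
    (hInt : ∀ t ∈ Finset.Icc 1 n, Integrable (X t) P)
    (hInt2 : ∀ t ∈ Finset.Icc 1 n, Integrable (fun ω => (X t ω) ^ 2) P)
    -- C1 : conditional mean
    (hC1 : ∀ t ∈ Finset.Icc 1 n, P[X t|ℱ (t - 1)] =ᵐ[P] fun _ => μt t)
    -- C2 : conditional second moment bound
    (hC2 : ∀ t ∈ Finset.Icc 1 n,
      ∀ᵐ ω ∂P, (P[fun ω => (X t ω) ^ 2|ℱ (t - 1)]) ω ≤ M)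
    -- influence function
    (ψ : ℝ → ℝ) (hψmono : Monotone ψ)
    (hψlb : ∀ x : ℝ, -Real.log (1 - x + x ^ 2 / 2) ≤ ψ x)
    (hψub : ∀ x : ℝ, ψ x ≤ Real.log (1 + x + x ^ 2 / 2))
    (α : ℝ) (hα : 0 < α) (δ : ℝ) (hδ : δ ∈ Set.Ioo (0 : ℝ) 1)
    (μbar : ℝ) (hμbar : μbar = (1 / n) * ∑ t ∈ Finset.Icc 1 n, μt t) :
    ENNReal.ofReal (1 - δ) ≤
      P {ω | |(α / n) * ∑ i ∈ Finset.Icc 1 n, ψ (X i ω / α) - μbar| ≤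
        M / (2 * α) + α * Real.log (2 / δ) / n} :=
  catoni_uncontaminated_deviation_bound_general P ℱ n hn X μt M hAdapted hInt hInt2 hC1 hC2 ψ hψmono
    hψlb hψub α hα δ hδ μbar hμbar
end

section
/- Let x be an index such that there is no true change point in the interval [x − w, x + w] (so the conditional mean μ_x is constant on this interval). Let the threshold be b = 2c₀·sqrt(M·η) with c₀² := 2A·(1/B + 2), B > 1, and suppose w ≥ (B/(Aη))·log(4/δ). Then the scan statistic satisfies P( S_w(x) ≤ b ) ≥ 1 − δ, i.e., with probability at least 1 − δ, |Ψ({X̃_i}_{i=x−w}^{x−1}) − Ψ({X̃_i}_{i=x+1}^{x+w})| ≤ 2c₀·sqrt(M·η). -/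
/-!
Catoni's argument: since `exp ψ(y) ≤ 1 + y + y²/2`, conditions C1 and C2 give
`E[exp ψ(X_t/α) | F_{t-1}] ≤ exp(μ/α + M/(2α²))`, so the products of these factors over a window
have expectation at most `exp(w(μ/α + M/(2α²)))`, and the Chernoff bound shows that the
clean Catoni sum of each window deviates from `wμ/α` by at least `wM/(2α²) + log(4/δ)` with
probability at most `δ/2` (the lower tail is the upper tail of `-X` with `y ↦ -ψ(-y)`).
Contamination moves each window sum by at most `2Aηw` because `|ψ| ≤ A`. With no change point
the two windows share the same mean, so off the two bad events the statistic is at most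
`(α/w)·2(2Aηw + wM/(2α²) + log(4/δ)) = 4Dα` with `D = log(4/δ)/w + 2Aη`, and the choice of
`α` and the lower bound on `w` turn this into `4Dα ≤ 2c₀√(Mη)`.
-/

open MeasureTheory ProbabilityTheory Finset

theorem exp_le_of_le_log_one_add_add_sq {ψ : ℝ → ℝ}
    (hψ : ∀ y, ψ y ≤ Real.log (1 + y + y ^ 2 / 2)) (y : ℝ) :
    Real.exp (ψ y) ≤ 1 + y + y ^ 2 / 2 :=
  (Real.exp_le_exp.2 (hψ y)).trans_eq (Real.exp_log (by nlinarith [sq_nonneg (y + 1)]))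

theorem abs_sum_sub_sum_le_of_abs_le {ι β : Type*} [DecidableEq β] (s : Finset ι) {φ : β → ℝ}
    {A : ℝ} (hφ : ∀ y, |φ y| ≤ A) (u v : ι → β) :
    |∑ i ∈ s, φ (u i) - ∑ i ∈ s, φ (v i)| ≤ 2 * A * #{i ∈ s | u i ≠ v i} := by
  rw [← sum_sub_distrib]
  calc _ ≤ ∑ i ∈ s, |φ (u i) - φ (v i)| := abs_sum_le_sum_abs _ _
    _ ≤ ∑ i ∈ s, if u i ≠ v i then 2 * A else 0 := by
        refine sum_le_sum fun i _ => ?_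
        split_ifs with h
        · linarith [abs_sub (φ (u i)) (φ (v i)), hφ (u i), hφ (v i)]
        · simp [not_not.1 h]
    _ = 2 * A * #{i ∈ s | u i ≠ v i} := by
        rw [sum_ite, sum_const_zero, sum_const, nsmul_eq_mul, add_zero, mul_comm]

theorem ofReal_one_sub_le_measure_s6 {Ω : Type*} {m0 : MeasurableSpace Ω} {P : Measure Ω}
    [IsProbabilityMeasure P] {E₁ E₂ S : Set Ω} {a b : ℝ} (ha : 0 ≤ a) (hb : 0 ≤ b)
    (h₁ : P E₁ ≤ ENNReal.ofReal a) (h₂ : P E₂ ≤ ENNReal.ofReal b)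
    (hS : ∀ ω, ω ∉ E₁ → ω ∉ E₂ → ω ∈ S) : ENNReal.ofReal (1 - (a + b)) ≤ P S := by
  have hcover : Set.univ ⊆ S ∪ (E₁ ∪ E₂) := fun ω _ => by
    by_contra h; simp only [Set.mem_union, not_or] at h; exact h.1 (hS ω h.2.1 h.2.2)
  rw [ENNReal.ofReal_sub _ (add_nonneg ha hb), ENNReal.ofReal_one, ENNReal.ofReal_add ha hb,
    tsub_le_iff_right, ← measure_univ (μ := P)]
  exact (measure_mono hcover).trans ((measure_union_le _ _).trans
    (add_le_add le_rfl ((measure_union_le _ _).trans (add_le_add h₁ h₂))))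

namespace MeasureTheory

variable {Ω : Type*} {m0 : MeasurableSpace Ω} {P : Measure Ω} [IsProbabilityMeasure P]

theorem integrable_prod_of_abs_le {ι : Type*} {Y : ι → Ω → ℝ} {C : ℝ} (s : Finset ι)
    (hY : ∀ t ∈ s, AEStronglyMeasurable (Y t) P) (hYC : ∀ t ∈ s, ∀ ω, |Y t ω| ≤ C) :
    Integrable (fun ω => ∏ t ∈ s, Y t ω) P := by
  refine .of_bound (Finset.aestronglyMeasurable_fun_prod s hY) (C ^ #s) (ae_of_all _ fun ω => ?_)
  rw [Real.norm_eq_abs, abs_prod, ← prod_const]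
  exact prod_le_prod (fun t _ => abs_nonneg _) fun t ht => hYC t ht ω

theorem integral_prod_le_pow_of_condExp_le {ℱ : Filtration ℕ m0} {Y : ℕ → Ω → ℝ}
    (hY : StronglyAdapted ℱ Y) {C r : ℝ} (hY0 : ∀ t ω, 0 ≤ Y t ω) (hYC : ∀ t ω, Y t ω ≤ C)
    (hr : 0 ≤ r) (s : Finset ℕ) (hcond : ∀ t ∈ s, P[Y t|ℱ (t - 1)] ≤ᵐ[P] fun _ => r) :
    ∫ ω, ∏ t ∈ s, Y t ω ∂P ≤ r ^ #s := by
  have hint (s : Finset ℕ) : Integrable (fun ω => ∏ t ∈ s, Y t ω) P :=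
    integrable_prod_of_abs_le s (fun t _ => ((hY t).mono (ℱ.le t)).aestronglyMeasurable)
      fun t _ ω => (abs_of_nonneg (hY0 t ω)).trans_le (hYC t ω)
  induction s using Finset.induction_on_max with
  | empty => simp
  | insert a s hlt ih =>
    set f : Ω → ℝ := fun ω => ∏ t ∈ s, Y t ω
    have hf : StronglyMeasurable[ℱ (a - 1)] f := Finset.stronglyMeasurable_fun_prod _
      fun t ht => (hY t).mono (ℱ.mono (by have := hlt t ht; omega))
    have has : a ∉ s := fun h => (hlt a h).false
    have hprod : (fun ω => ∏ t ∈ insert a s, Y t ω) = Y a * f := by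
      ext ω; simp [f, prod_insert has]
    have hpull := condExp_mul_of_stronglyMeasurable_right hf (hprod ▸ hint _)
      (by simpa using hint {a})
    calc ∫ ω, ∏ t ∈ insert a s, Y t ω ∂P = ∫ ω, (P[Y a * f|ℱ (a - 1)]) ω ∂P := by
          rw [integral_condExp (ℱ.le _), hprod]
      _ = ∫ ω, (P[Y a|ℱ (a - 1)]) ω * f ω ∂P := integral_congr_ae hpull
      _ ≤ ∫ ω, r * f ω ∂P := by
          refine integral_mono_ae (integrable_condExp.congr hpull) ((hint s).const_mul r) ?_
          filter_upwards [hcond a (mem_insert_self a s)] with ω hω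
          exact mul_le_mul_of_nonneg_right hω (prod_nonneg fun t _ => hY0 t ω)
      _ ≤ r ^ #(insert a s) := by
          rw [integral_const_mul, card_insert_of_notMem has, pow_succ']
          exact mul_le_mul_of_nonneg_left (ih fun t ht => hcond t (mem_insert_of_mem ht)) hr

theorem condExp_exp_le_of_le_log {m : MeasurableSpace Ω} (hm : m ≤ m0) {Z : Ω → ℝ} {μ M : ℝ}
    (hZ : Integrable Z P) (hZ2 : Integrable (fun ω => Z ω ^ 2) P)
    (hmean : P[Z|m] =ᵐ[P] fun _ => μ) (hvar : ∀ᵐ ω ∂P, (P[fun ω => Z ω ^ 2|m]) ω ≤ M)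
    {ψ : ℝ → ℝ} (hψm : Measurable ψ) (hψ : ∀ y, ψ y ≤ Real.log (1 + y + y ^ 2 / 2)) (α : ℝ) :
    P[fun ω => Real.exp (ψ (Z ω / α))|m] ≤ᵐ[P] fun _ => Real.exp (μ / α + M / (2 * α ^ 2)) := by
  set G : Ω → ℝ := (fun _ => (1 : ℝ)) + (α⁻¹ • Z + (2 * α ^ 2)⁻¹ • fun ω => Z ω ^ 2)
  have hsum := (hZ.smul α⁻¹).add (hZ2.smul (2 * α ^ 2)⁻¹)
  have hG : Integrable G P := (integrable_const 1).add hsum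
  have hle : (fun ω => Real.exp (ψ (Z ω / α))) ≤ G := fun ω => by
    convert exp_le_of_le_log_one_add_add_sq hψ (Z ω / α) using 1
    simp only [G, Pi.add_apply, Pi.smul_apply, smul_eq_mul]
    ring
  have hexp : Integrable (fun ω => Real.exp (ψ (Z ω / α))) P := by
    refine hG.mono' ?_ (ae_of_all _ fun ω => ?_)
    · exact (Real.measurable_exp.comp hψm).comp_aemeasurable
        (hZ.aemeasurable.div_const α) |>.aestronglyMeasurable
    · exact (Real.norm_of_nonneg (Real.exp_pos _).le).trans_le (hle ω)
  have hcondG : P[G|m] =ᵐ[P]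
      (fun _ => 1) + (α⁻¹ • P[Z|m] + (2 * α ^ 2)⁻¹ • P[fun ω => Z ω ^ 2|m]) := by
    filter_upwards [condExp_add (integrable_const 1) hsum m,
      condExp_add (hZ.smul α⁻¹) (hZ2.smul (2 * α ^ 2)⁻¹) m, condExp_smul α⁻¹ Z m,
      condExp_smul (2 * α ^ 2)⁻¹ (fun ω => Z ω ^ 2) m] with ω h1 h2 h3 h4
    simp only [G, h1, Pi.add_apply, h2, h3, h4, condExp_const hm]
  filter_upwards [condExp_mono hexp hG (ae_of_all _ hle), hcondG, hmean, hvar] with ω h1 h2 h3 h4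
  calc (P[fun ω => Real.exp (ψ (Z ω / α))|m]) ω ≤ 1 + (μ / α + M / (2 * α ^ 2)) := by
        rw [h2] at h1
        simp only [Pi.add_apply, Pi.smul_apply, smul_eq_mul, h3] at h1
        have := mul_le_mul_of_nonneg_left h4 (by positivity : (0:ℝ) ≤ (2 * α ^ 2)⁻¹)
        rw [div_eq_inv_mul μ, div_eq_inv_mul M]
        linarith
    _ ≤ _ := by linarith [Real.add_one_le_exp (μ / α + M / (2 * α ^ 2))]

theorem catoni_upper_tail {ℱ : Filtration ℕ m0} {X : ℕ → Ω → ℝ} (hX : StronglyAdapted ℱ X)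
    {s : Finset ℕ} {μ M : ℝ} (hint : ∀ t ∈ s, Integrable (X t) P)
    (hint2 : ∀ t ∈ s, Integrable (fun ω => X t ω ^ 2) P)
    (hmean : ∀ t ∈ s, P[X t|ℱ (t - 1)] =ᵐ[P] fun _ => μ)
    (hvar : ∀ t ∈ s, ∀ᵐ ω ∂P, (P[fun ω => X t ω ^ 2|ℱ (t - 1)]) ω ≤ M)
    {ψ : ℝ → ℝ} {A : ℝ} (hψm : Measurable ψ) (hψA : ∀ y, ψ y ≤ A)
    (hψ : ∀ y, ψ y ≤ Real.log (1 + y + y ^ 2 / 2)) (α L : ℝ) :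
    P {ω | #s * (μ / α + M / (2 * α ^ 2)) + L ≤ ∑ t ∈ s, ψ (X t ω / α)} ≤
      ENNReal.ofReal (Real.exp (-L)) := by
  set c := μ / α + M / (2 * α ^ 2)
  set Y : ℕ → Ω → ℝ := fun t ω => Real.exp (ψ (X t ω / α))
  have hY : StronglyAdapted ℱ Y := fun t =>
    (Real.measurable_exp.comp (hψm.comp ((hX t).measurable.div_const α))).stronglyMeasurable
  have hexp_sum : (fun ω => Real.exp (1 * ∑ t ∈ s, ψ (X t ω / α))) = fun ω => ∏ t ∈ s, Y t ω := by
    simp_rw [one_mul, Real.exp_sum, Y]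
  have hchernoff := measure_ge_le_exp_mul_mgf (μ := P) (X := fun ω => ∑ t ∈ s, ψ (X t ω / α))
    (#s * c + L) zero_le_one (hexp_sum ▸ integrable_prod_of_abs_le s
      (fun t _ => ((hY t).mono (ℱ.le t)).aestronglyMeasurable)
      fun t _ ω => (abs_of_pos (Real.exp_pos _)).trans_le (Real.exp_le_exp.2 (hψA _)))
  rw [mgf, hexp_sum] at hchernoff
  rw [← ofReal_measureReal]
  refine ENNReal.ofReal_le_ofReal (hchernoff.trans ?_)
  calc Real.exp (-1 * (#s * c + L)) * ∫ ω, ∏ t ∈ s, Y t ω ∂P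
      ≤ Real.exp (-1 * (#s * c + L)) * Real.exp c ^ #s := by
        gcongr
        exact integral_prod_le_pow_of_condExp_le hY (fun t ω => (Real.exp_pos _).le)
          (fun t ω => Real.exp_le_exp.2 (hψA _)) (Real.exp_pos c).le s fun t ht =>
          condExp_exp_le_of_le_log (ℱ.le _) (hint t ht) (hint2 t ht) (hmean t ht) (hvar t ht)
            hψm hψ α
    _ = Real.exp (-L) := by rw [← Real.exp_nat_mul, ← Real.exp_add]; ring_nf

theorem catoni_deviation {ℱ : Filtration ℕ m0} {X : ℕ → Ω → ℝ} (hX : StronglyAdapted ℱ X)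
    {s : Finset ℕ} {μ M : ℝ} (hint : ∀ t ∈ s, Integrable (X t) P)
    (hint2 : ∀ t ∈ s, Integrable (fun ω => X t ω ^ 2) P)
    (hmean : ∀ t ∈ s, P[X t|ℱ (t - 1)] =ᵐ[P] fun _ => μ)
    (hvar : ∀ t ∈ s, ∀ᵐ ω ∂P, (P[fun ω => X t ω ^ 2|ℱ (t - 1)]) ω ≤ M)
    {ψ : ℝ → ℝ} {A : ℝ} (hψm : Measurable ψ) (hψA : ∀ y, |ψ y| ≤ A)
    (hψlb : ∀ y, -Real.log (1 - y + y ^ 2 / 2) ≤ ψ y)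
    (hψub : ∀ y, ψ y ≤ Real.log (1 + y + y ^ 2 / 2)) (α L : ℝ) :
    P {ω | #s * (M / (2 * α ^ 2)) + L ≤ |∑ t ∈ s, ψ (X t ω / α) - #s * (μ / α)|} ≤
      ENNReal.ofReal (2 * Real.exp (-L)) := by
  have hupper := catoni_upper_tail hX hint hint2 hmean hvar hψm
    (fun y => (le_abs_self _).trans (hψA y)) hψub α L
  have hlower := catoni_upper_tail (X := fun t ω => -X t ω) (μ := -μ) (ψ := fun y => -ψ (-y))
    (fun t => (hX t).neg) (fun t ht => (hint t ht).neg) (by simpa only [neg_sq] using hint2)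
    (fun t ht => (condExp_neg (X t) _).trans (by filter_upwards [hmean t ht] with ω h; simp [h]))
    (by simpa only [neg_sq] using hvar) (hψm.comp measurable_neg).neg
    (fun y => neg_le.1 (abs_le.1 (hψA _)).1)
    (fun y => by have := hψlb (-y); ring_nf at this ⊢; linarith) α L
  calc _ ≤ P ({ω | #s * (μ / α + M / (2 * α ^ 2)) + L ≤ ∑ t ∈ s, ψ (X t ω / α)} ∪
        {ω | #s * (-μ / α + M / (2 * α ^ 2)) + L ≤ ∑ t ∈ s, -ψ (-(-X t ω / α))}) := by
        refine measure_mono fun ω hω => ?_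
        simp only [Set.mem_ofPred_eq, Set.mem_union, neg_div, neg_neg, sum_neg_distrib] at hω ⊢
        rcases le_abs'.1 hω with h | h
        · right; linarith
        · left; linarith
    _ ≤ ENNReal.ofReal (Real.exp (-L)) + ENNReal.ofReal (Real.exp (-L)) :=
        (measure_union_le _ _).trans (add_le_add hupper hlower)
    _ = ENNReal.ofReal (2 * Real.exp (-L)) := by
        rw [← ENNReal.ofReal_add (Real.exp_pos _).le (Real.exp_pos _).le, two_mul]

end MeasureTheory

theorem scan_radius_le_threshold {M A η B c₀ b w L α : ℝ} (hM : 0 < M) (hA : 0 < A) (hη : 0 < η)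
    (hB : 0 < B) (hw0 : 0 < w) (hL : 0 ≤ L) (hc₀pos : 0 ≤ c₀) (hc₀ : c₀ ^ 2 = 2 * A * (1 / B + 2))
    (hb : b = 2 * c₀ * Real.sqrt (M * η)) (hw : B / (A * η) * L ≤ w)
    (hα : α = Real.sqrt (M / (2 * (L / w + 2 * A * η)))) :
    α / w * (2 * (2 * A * (η * w) + w * (M / (2 * α ^ 2)) + L)) ≤ b := by
  set D := L / w + 2 * A * η
  have hD : 0 < D := by positivity
  have hα0 : 0 < α := hα ▸ Real.sqrt_pos.2 (by positivity)
  have hα2 : α ^ 2 = M / (2 * D) := hα ▸ Real.sq_sqrt (by positivity)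
  have hDle : D ≤ A * η * (1 / B + 2) := by
    have : L / w ≤ A * η / B := by
      rw [div_le_div_iff₀ hw0 hB]
      rw [div_mul_eq_mul_div, div_le_iff₀ (by positivity)] at hw
      linarith
    have : A * η * (1 / B + 2) = A * η / B + 2 * A * η := by ring
    linarith
  have hradius : α / w * (2 * (2 * A * (η * w) + w * (M / (2 * α ^ 2)) + L)) = 4 * D * α := by
    have hM2 : M = 2 * D * α ^ 2 := by rw [hα2]; field_simp
    rw [hM2]; field_simp; simp only [D]; field_simp; ring
  rw [hradius, ← pow_le_pow_iff_left₀ (by positivity) (by rw [hb]; positivity) two_ne_zero]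
  have : (4 * D * α) ^ 2 = 8 * M * D := by rw [mul_pow, hα2]; field_simp; ring
  rw [this, hb, mul_pow, mul_pow, Real.sq_sqrt (by positivity), hc₀]
  nlinarith

theorem scan_statistic_no_false_alarm_general
    {Ω : Type*} {m0 : MeasurableSpace Ω} (P : Measure Ω) [IsProbabilityMeasure P]
    (ℱ : Filtration ℕ m0) (n : ℕ)
    (X Xt : ℕ → Ω → ℝ) (μt : ℕ → ℝ) (M : ℝ) (hM : 0 < M)
    (hAdapted : ∀ t, StronglyMeasurable[ℱ t] (X t))
    (hInt : ∀ t ∈ Finset.Icc 1 n, Integrable (X t) P)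
    (hInt2 : ∀ t ∈ Finset.Icc 1 n, Integrable (fun ω => (X t ω) ^ 2) P)
    -- C1 and C2
    (hC1 : ∀ t ∈ Finset.Icc 1 n, P[X t|ℱ (t - 1)] =ᵐ[P] fun _ => μt t)
    (hC2 : ∀ t ∈ Finset.Icc 1 n,
      ∀ᵐ ω ∂P, (P[fun ω => (X t ω) ^ 2|ℱ (t - 1)]) ω ≤ M)
    -- influence function
    (ψ : ℝ → ℝ) (hψmono : Monotone ψ)
    (hψlb : ∀ x : ℝ, -Real.log (1 - x + x ^ 2 / 2) ≤ ψ x)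
    (hψub : ∀ x : ℝ, ψ x ≤ Real.log (1 + x + x ^ 2 / 2))
    (A : ℝ) (hA : 0 < A) (hψA : ∀ x : ℝ, |ψ x| ≤ A)
    -- window and contamination: within any window of length w at most ηw corruptions
    (η : ℝ) (hη : η ∈ Set.Ioo (0 : ℝ) 1) (w : ℕ) (hwpos : 0 < w)
    (hcontam : ∀ ω : Ω, ∀ i : ℕ, i + w ≤ n →
      (((Finset.Icc (i + 1) (i + w)).filter (fun t => Xt t ω ≠ X t ω)).card : ℝ) ≤ η * w)
    -- the index x: no change point in [x − w, x + w]
    (x : ℕ) (hxl : w < x) (hxr : x + w ≤ n)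
    (μx : ℝ) (hA1 : ∀ t ∈ Finset.Icc (x - w) (x + w), μt t = μx)
    -- threshold, constants, window-length condition, and scale parameter
    (δ : ℝ) (hδ : δ ∈ Set.Ioo (0 : ℝ) 1)
    (B : ℝ) (hB : 1 < B)
    (c₀ : ℝ) (hc₀pos : 0 ≤ c₀) (hc₀ : c₀ ^ 2 = 2 * A * (1 / B + 2))
    (b : ℝ) (hb : b = 2 * c₀ * Real.sqrt (M * η))
    (hw : (B / (A * η)) * Real.log (4 / δ) ≤ (w : ℝ))
    (α : ℝ) (hα : α = Real.sqrt (M / (2 * (Real.log (4 / δ) / w + 2 * A * η)))) :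
    ENNReal.ofReal (1 - δ) ≤
      P {ω | |(α / w) * ∑ i ∈ Finset.Icc (x + 1) (x + w), ψ (Xt i ω / α) -
             (α / w) * ∑ i ∈ Finset.Icc (x - w) (x - 1), ψ (Xt i ω / α)| ≤ b} := by
  obtain ⟨hδ0, hδ1⟩ := hδ
  set L := Real.log (4 / δ)
  have hL : 0 ≤ L := Real.log_nonneg (by rw [le_div_iff₀ hδ0]; linarith)
  have hα0 : 0 ≤ α := hα ▸ Real.sqrt_nonneg _
  have hwindow (s : Finset ℕ) (hs : s ⊆ Icc (x - w) (x + w)) (hsn : s ⊆ Icc 1 n) :=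
    catoni_deviation hAdapted (fun t ht => hInt t (hsn ht)) (fun t ht => hInt2 t (hsn ht))
      (fun t ht => hA1 t (hs ht) ▸ hC1 t (hsn ht)) (fun t ht => hC2 t (hsn ht))
      hψmono.measurable hψA hψlb hψub α L
  have hprob : 2 * Real.exp (-L) = δ / 2 := by
    rw [Real.exp_neg, Real.exp_log (by positivity)]; field_simp; ring
  have hright := hwindow (Icc (x + 1) (x + w)) (Icc_subset_Icc (by omega) le_rfl)
    (Icc_subset_Icc (by omega) hxr)
  have hleft := hwindow (Icc (x - w) (x - 1)) (Icc_subset_Icc le_rfl (by omega))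
    (Icc_subset_Icc (by omega) (by omega))
  simp only [Nat.card_Icc, hprob, show x + w + 1 - (x + 1) = w by omega,
    show x - 1 + 1 - (x - w) = w by omega] at hright hleft
  convert ofReal_one_sub_le_measure_s6 (by positivity) (by positivity) hright hleft
    fun ω hωR hωL => ?_ using 2
  · ring
  have hcontam_window (i : ℕ) (hi : i + w ≤ n) :=
    (abs_sum_sub_sum_le_of_abs_le (Icc (i + 1) (i + w)) (φ := fun y => ψ (y / α))
      (fun y => hψA _) (Xt · ω) (X · ω)).trans
      (mul_le_mul_of_nonneg_left (hcontam ω i hi) (by positivity))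
  have hcR := hcontam_window x hxr
  have hcL := hcontam_window (x - w - 1) (by omega)
  rw [show x - w - 1 + 1 = x - w by omega, show x - w - 1 + w = x - 1 by omega] at hcL
  simp only [Set.mem_ofPred_eq, not_le] at hωR hωL ⊢
  rw [← mul_sub, abs_mul, abs_of_nonneg (by positivity)]
  refine le_trans ?_ (scan_radius_le_threshold hM hA hη.1 (by linarith) (by exact_mod_cast hwpos)
    hL hc₀pos hc₀ hb hw hα)
  gcongr
  rw [abs_lt] at hωR hωL
  rw [abs_le] at hcR hcL ⊢
  constructor <;> linarith

/-- **Lemma (no false alarm away from change points).** If there is no change point in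
`[x − w, x + w]` (the conditional mean is a constant `μx` there), the threshold is
`b = 2 c₀ sqrt(Mη)` with `c₀² = 2A(1/B + 2)`, `B > 1`, and `w ≥ (B/(Aη)) log(4/δ)`, then the
scan statistic satisfies `P(S_w(x) ≤ b) ≥ 1 − δ`. -/
theorem scan_statistic_no_false_alarm
    {Ω : Type*} {m0 : MeasurableSpace Ω} (P : Measure Ω) [IsProbabilityMeasure P]
    (ℱ : Filtration ℕ m0) (n : ℕ) (hn : 0 < n)
    (X Xt : ℕ → Ω → ℝ) (μt : ℕ → ℝ) (M : ℝ) (hM : 0 < M)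
    (hAdapted : ∀ t, StronglyMeasurable[ℱ t] (X t))
    (hInt : ∀ t ∈ Finset.Icc 1 n, Integrable (X t) P)
    (hInt2 : ∀ t ∈ Finset.Icc 1 n, Integrable (fun ω => (X t ω) ^ 2) P)
    -- C1 and C2
    (hC1 : ∀ t ∈ Finset.Icc 1 n, P[X t|ℱ (t - 1)] =ᵐ[P] fun _ => μt t)
    (hC2 : ∀ t ∈ Finset.Icc 1 n,
      ∀ᵐ ω ∂P, (P[fun ω => (X t ω) ^ 2|ℱ (t - 1)]) ω ≤ M)
    -- influence function
    (ψ : ℝ → ℝ) (hψmono : Monotone ψ)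
    (hψlb : ∀ x : ℝ, -Real.log (1 - x + x ^ 2 / 2) ≤ ψ x)
    (hψub : ∀ x : ℝ, ψ x ≤ Real.log (1 + x + x ^ 2 / 2))
    (A : ℝ) (hA : 0 < A) (hψA : ∀ x : ℝ, |ψ x| ≤ A)
    -- window and contamination: within any window of length w at most ηw corruptions
    (η : ℝ) (hη : η ∈ Set.Ioo (0 : ℝ) 1) (w : ℕ) (hwpos : 0 < w)
    (hcontam : ∀ ω : Ω, ∀ i : ℕ, i + w ≤ n →
      (((Finset.Icc (i + 1) (i + w)).filter (fun t => Xt t ω ≠ X t ω)).card : ℝ) ≤ η * w)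
    -- the index x: no change point in [x − w, x + w]
    (x : ℕ) (hxl : w < x) (hxr : x + w ≤ n)
    (μx : ℝ) (hA1 : ∀ t ∈ Finset.Icc (x - w) (x + w), μt t = μx)
    -- threshold, constants, window-length condition, and scale parameter
    (δ : ℝ) (hδ : δ ∈ Set.Ioo (0 : ℝ) 1)
    (B : ℝ) (hB : 1 < B)
    (c₀ : ℝ) (hc₀pos : 0 ≤ c₀) (hc₀ : c₀ ^ 2 = 2 * A * (1 / B + 2))
    (b : ℝ) (hb : b = 2 * c₀ * Real.sqrt (M * η))
    (hw : (B / (A * η)) * Real.log (4 / δ) ≤ (w : ℝ))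
    (α : ℝ) (hα : α = Real.sqrt (M / (2 * (Real.log (4 / δ) / w + 2 * A * η)))) :
    ENNReal.ofReal (1 - δ) ≤
      P {ω | |(α / w) * ∑ i ∈ Finset.Icc (x + 1) (x + w), ψ (Xt i ω / α) -
             (α / w) * ∑ i ∈ Finset.Icc (x - w) (x - 1), ψ (Xt i ω / α)| ≤ b} :=
  scan_statistic_no_false_alarm_general P ℱ n X Xt μt M hM hAdapted hInt hInt2 hC1 hC2 ψ hψmono hψlb
    hψub A hA hψA η hη w hwpos hcontam x hxl hxr μx hA1 δ hδ B hB c₀ hc₀pos hc₀ b hb hw α hα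
end

section
/- Let X_t satisfy E[X_t | F_{t−1}] = μ_t and E[X_t² | F_{t−1}] ≤ M almost surely, and let ψ satisfy −log(1 − x + x²/2) ≤ ψ(x) for all x ∈ ℝ. Then for any α > 0, almost surely E[ exp(−ψ(X_t/α)) | F_{t−1} ] ≤ exp( −μ_t/α + M/(2α²) ). -/
open MeasureTheory Filter

/-!
Since `exp (-ψ x) ≤ 1 - x + x² / 2` pointwise, monotonicity and linearity of the conditional
expectation bound `E[exp (-ψ (X_t / α)) | ℱ_{t-1}]` by `1 - μ_t / α + M / (2 α²)`, and
`1 + y ≤ exp y` finishes.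
-/

lemma Real.one_sub_add_sq_div_two_pos (x : ℝ) : 0 < 1 - x + x ^ 2 / 2 := by
  nlinarith [sq_nonneg (x - 1)]

lemma Real.exp_neg_le_one_sub_add_sq_div_two {ψ : ℝ → ℝ}
    (hψ : ∀ x, -Real.log (1 - x + x ^ 2 / 2) ≤ ψ x) (x : ℝ) :
    Real.exp (-ψ x) ≤ 1 - x + x ^ 2 / 2 :=
  (Real.le_log_iff_exp_le (Real.one_sub_add_sq_div_two_pos x)).1 (by linarith [hψ x])

section CondExp

variable {Ω : Type*} {m m0 : MeasurableSpace Ω} {μ : Measure Ω} {X : Ω → ℝ}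

lemma condExp_one_sub_mul_add_mul_sq [IsFiniteMeasure μ] (hm : m ≤ m0) (hX : Integrable X μ)
    (hX2 : Integrable (fun ω => X ω ^ 2) μ) (a b : ℝ) :
    μ[fun ω => 1 - a * X ω + b * X ω ^ 2 | m] =ᵐ[μ]
      fun ω => 1 - a * μ[X | m] ω + b * μ[fun ω => X ω ^ 2 | m] ω := by
  have hsplit : (fun ω => 1 - a * X ω + b * X ω ^ 2)
      = (fun _ => (1 : ℝ)) - a • X + b • fun ω => X ω ^ 2 := rfl
  rw [hsplit]
  filter_upwards [condExp_add ((integrable_const 1).sub (hX.smul a)) (hX2.smul b) m,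
    condExp_sub (integrable_const 1) (hX.smul a) m, condExp_smul (μ := μ) a X m,
    condExp_smul (μ := μ) b (fun ω => X ω ^ 2) m] with ω h_add h_sub h_smul h_smul2
  simp only [h_add, Pi.add_apply, h_sub, Pi.sub_apply, h_smul, h_smul2, Pi.smul_apply,
    smul_eq_mul, condExp_const hm]

lemma condExp_exp_neg_div_le [IsFiniteMeasure μ] (hm : m ≤ m0) (hX : Integrable X μ)
    (hX2 : Integrable (fun ω => X ω ^ 2) μ) {ψ : ℝ → ℝ} (hψmeas : Measurable ψ)
    (hψ : ∀ x, -Real.log (1 - x + x ^ 2 / 2) ≤ ψ x) (α : ℝ) :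
    μ[fun ω => Real.exp (-ψ (X ω / α)) | m] ≤ᵐ[μ]
      fun ω => 1 - α⁻¹ * μ[X | m] ω + (2 * α ^ 2)⁻¹ * μ[fun ω => X ω ^ 2 | m] ω := by
  have hpointwise : ∀ ω, Real.exp (-ψ (X ω / α)) ≤ 1 - α⁻¹ * X ω + (2 * α ^ 2)⁻¹ * X ω ^ 2 := by
    intro ω
    calc Real.exp (-ψ (X ω / α)) ≤ 1 - X ω / α + (X ω / α) ^ 2 / 2 :=
          Real.exp_neg_le_one_sub_add_sq_div_two hψ _
      _ = 1 - α⁻¹ * X ω + (2 * α ^ 2)⁻¹ * X ω ^ 2 := by ring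
  have hquad_int : Integrable (fun ω => 1 - α⁻¹ * X ω + (2 * α ^ 2)⁻¹ * X ω ^ 2) μ :=
    ((integrable_const 1).sub (hX.const_mul _)).add (hX2.const_mul _)
  have hexp_int : Integrable (fun ω => Real.exp (-ψ (X ω / α))) μ := by
    refine hquad_int.mono' ?_ (.of_forall fun ω => ?_)
    · exact (Real.measurable_exp.comp (hψmeas.comp (measurable_id.div_const α)).neg
        |>.comp_aemeasurable hX.aemeasurable).aestronglyMeasurable
    · rw [Real.norm_of_nonneg (Real.exp_pos _).le]
      exact hpointwise ω
  filter_upwards [condExp_mono hexp_int hquad_int (.of_forall hpointwise),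
    condExp_one_sub_mul_add_mul_sq hm hX hX2 α⁻¹ (2 * α ^ 2)⁻¹] with ω hmono hquad
  exact hmono.trans hquad.le

end CondExp

theorem catoni_conditional_mgf_lower_bound_general
    {Ω : Type*} {m0 : MeasurableSpace Ω} (P : Measure Ω) [IsProbabilityMeasure P]
    (ℱ : Filtration ℕ m0) (t : ℕ)
    (X : ℕ → Ω → ℝ) (μt : ℕ → ℝ) (M : ℝ)
    (hInt : Integrable (X t) P)
    (hInt2 : Integrable (fun ω => (X t ω) ^ 2) P)
    (hC1 : P[X t|ℱ (t - 1)] =ᵐ[P] fun _ => μt t)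
    (hC2 : ∀ᵐ ω ∂P, (P[fun ω => (X t ω) ^ 2|ℱ (t - 1)]) ω ≤ M)
    (ψ : ℝ → ℝ) (hψmeas : Measurable ψ)
    (hψlb : ∀ x : ℝ, -Real.log (1 - x + x ^ 2 / 2) ≤ ψ x)
    (α : ℝ) :
    ∀ᵐ ω ∂P, (P[fun ω => Real.exp (-ψ (X t ω / α))|ℱ (t - 1)]) ω ≤
      Real.exp (-(μt t / α) + M / (2 * α ^ 2)) := by
  filter_upwards [condExp_exp_neg_div_le (ℱ.le (t - 1)) hInt hInt2 hψmeas hψlb α, hC1, hC2]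
    with ω hbound hmean hsecond
  have hsecond' : (2 * α ^ 2)⁻¹ * P[fun ω => X t ω ^ 2|ℱ (t - 1)] ω ≤ (2 * α ^ 2)⁻¹ * M :=
    mul_le_mul_of_nonneg_left hsecond (by positivity)
  calc P[fun ω => Real.exp (-ψ (X t ω / α))|ℱ (t - 1)] ω
      ≤ -(μt t / α) + M / (2 * α ^ 2) + 1 := by
        rw [hmean] at hbound
        rw [div_eq_inv_mul, div_eq_inv_mul]
        linarith
    _ ≤ Real.exp (-(μt t / α) + M / (2 * α ^ 2)) := Real.add_one_le_exp _

/-- **Conditional mgf lower-tail bound.** If `E[X_t | ℱ_{t-1}] = μ_t`, `E[X_t² | ℱ_{t-1}] ≤ M`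
a.s., and `−log(1 − x + x²/2) ≤ ψ(x)`, then for any `α > 0`, almost surely
`E[exp(−ψ(X_t/α)) | ℱ_{t-1}] ≤ exp(−μ_t/α + M/(2α²))`. -/
theorem catoni_conditional_mgf_lower_bound
    {Ω : Type*} {m0 : MeasurableSpace Ω} (P : Measure Ω) [IsProbabilityMeasure P]
    (ℱ : Filtration ℕ m0) (t : ℕ)
    (X : ℕ → Ω → ℝ) (μt : ℕ → ℝ) (M : ℝ) (hM : 0 < M)
    (hAdapted : ∀ s, StronglyMeasurable[ℱ s] (X s))
    (hInt : Integrable (X t) P)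
    (hInt2 : Integrable (fun ω => (X t ω) ^ 2) P)
    (hC1 : P[X t|ℱ (t - 1)] =ᵐ[P] fun _ => μt t)
    (hC2 : ∀ᵐ ω ∂P, (P[fun ω => (X t ω) ^ 2|ℱ (t - 1)]) ω ≤ M)
    (ψ : ℝ → ℝ) (hψmeas : Measurable ψ)
    (hψlb : ∀ x : ℝ, -Real.log (1 - x + x ^ 2 / 2) ≤ ψ x)
    (α : ℝ) (hα : 0 < α) :
    ∀ᵐ ω ∂P, (P[fun ω => Real.exp (-ψ (X t ω / α))|ℱ (t - 1)]) ω ≤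
      Real.exp (-(μt t / α) + M / (2 * α ^ 2)) :=
  catoni_conditional_mgf_lower_bound_general P ℱ t X μt M hInt hInt2 hC1 hC2 ψ hψmeas hψlb α
end

section
/- Define Y₀ = 1 and, for t ≥ 1, Y_t = Y_{t−1} · exp(ψ(X_t/α)) · exp(−(μ_t/α + M/(2α²))). Then (Y_t)_{t=0}^n is a nonnegative supermartingale with respect to the filtration (F_t), i.e., E[Y_t | F_{t−1}] ≤ Y_{t−1} almost surely for every t ∈ [n]; in particular E[Y_n] ≤ 1. -/
/-!
Since `ψ x ≤ log (1 + x + x²/2)`, the factor `exp (ψ (X_t/α))` is dominated by the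
quadratic `1 + X_t/α + X_t²/(2α²)`, whose conditional mean given `ℱ_{t-1}` is at most `1 + s_t`
by C1 and C2, where `s_t = μ_t/α + M/(2α²)`. As `1 + s ≤ exp s`, the factor
`G_t = exp (ψ (X_t/α)) · exp (-s_t)` has conditional mean at most one, and a running product of
nonnegative adapted factors with conditional mean at most one is a supermartingale by the
pull-out property of conditional expectation.
-/

open MeasureTheory Finset

section CondExpMul

variable {Ω : Type*} {m m0 : MeasurableSpace Ω} {μ : Measure Ω} [IsFiniteMeasure μ]
  {f g : Ω → ℝ} {K : ℝ}

theorem integral_mul_le_of_condExp_le_of_bound (hm : m ≤ m0) (hf : StronglyMeasurable[m] f)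
    (hf_nn : 0 ≤ f) {C : ℝ} (hf_bdd : ∀ᵐ ω ∂μ, ‖f ω‖ ≤ C) (hg : Integrable g μ)
    (hK : ∀ᵐ ω ∂μ, μ[g|m] ω ≤ K) :
    ∫ ω, f ω * g ω ∂μ ≤ K * ∫ ω, f ω ∂μ := by
  have hf_int : Integrable f μ := .of_bound (hf.mono hm).aestronglyMeasurable C hf_bdd
  calc ∫ ω, f ω * g ω ∂μ
      = ∫ ω, μ[f * g|m] ω ∂μ := (integral_condExp hm).symm
    _ = ∫ ω, f ω * μ[g|m] ω ∂μ :=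
        integral_congr_ae (condExp_stronglyMeasurable_mul_of_bound hm hf hg C hf_bdd)
    _ ≤ ∫ ω, K * f ω ∂μ := by
        refine integral_mono_ae (integrable_condExp.bdd_mul (hf.mono hm).aestronglyMeasurable
          hf_bdd) (hf_int.const_mul K) ?_
        filter_upwards [hK] with ω hω
        rw [mul_comm K]
        exact mul_le_mul_of_nonneg_left hω (hf_nn ω)
    _ = K * ∫ ω, f ω ∂μ := integral_const_mul K f

theorem integrable_mul_of_condExp_le (hm : m ≤ m0) (hf : StronglyMeasurable[m] f)
    (hf_int : Integrable f μ) (hf_nn : 0 ≤ f) (hg : Integrable g μ) (hg_nn : 0 ≤ g)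
    (hK0 : 0 ≤ K) (hK : ∀ᵐ ω ∂μ, μ[g|m] ω ≤ K) :
    Integrable (f * g) μ := by
  -- `f * g` need not be dominated: truncate `f` at level `N`, where the bounded pull-out
  -- property applies, and let `N → ∞` by monotone convergence.
  set F : ℕ → Ω → ℝ := fun N ω => min (f ω) N * g ω
  have hF_nn : ∀ N ω, 0 ≤ F N ω := fun N ω =>
    mul_nonneg (le_min (hf_nn ω) N.cast_nonneg) (hg_nn ω)
  have hF_int : ∀ N : ℕ,
      ∫⁻ ω, ENNReal.ofReal (F N ω) ∂μ ≤ ENNReal.ofReal (K * ∫ ω, f ω ∂μ) := by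
    intro N
    have hfN : StronglyMeasurable[m] fun ω => min (f ω) N :=
      (hf.measurable.min measurable_const).stronglyMeasurable
    have hfN_bdd : ∀ᵐ ω ∂μ, ‖min (f ω) N‖ ≤ N := ae_of_all _ fun ω => by
      rw [Real.norm_of_nonneg (le_min (hf_nn ω) N.cast_nonneg)]
      exact min_le_right _ _
    rw [← ofReal_integral_eq_lintegral_ofReal
      (hg.bdd_mul (hfN.mono hm).aestronglyMeasurable hfN_bdd) (ae_of_all _ (hF_nn N))]
    refine ENNReal.ofReal_le_ofReal <|
      (integral_mul_le_of_condExp_le_of_bound hm hfN (fun ω => le_min (hf_nn ω) N.cast_nonneg)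
        hfN_bdd hg hK).trans (mul_le_mul_of_nonneg_left ?_ hK0)
    exact integral_mono (.of_bound (hfN.mono hm).aestronglyMeasurable N hfN_bdd) hf_int
      fun ω => min_le_left _ _
  have hF_tendsto := lintegral_tendsto_of_tendsto_of_monotone
    (f := fun N ω => ENNReal.ofReal (F N ω)) (F := fun ω => ENNReal.ofReal (f ω * g ω))
    (fun N => ENNReal.measurable_ofReal.comp_aemeasurable
      (((hf.mono hm).measurable.min measurable_const).aemeasurable.mul hg.aemeasurable))
    (ae_of_all _ fun ω N N' hNN' => ENNReal.ofReal_le_ofReal <|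
      mul_le_mul_of_nonneg_right (min_le_min le_rfl (Nat.cast_le.mpr hNN')) (hg_nn ω))
    (ae_of_all _ fun ω => tendsto_atTop_of_eventually_const (i₀ := ⌈f ω⌉₊) fun N hN => by
      simp only [F, min_eq_left ((Nat.le_ceil _).trans (Nat.cast_le.mpr hN))])
  refine ⟨(hf.mono hm).aestronglyMeasurable.mul hg.aestronglyMeasurable, ?_⟩
  rw [hasFiniteIntegral_iff_ofReal (f := f * g)
    (ae_of_all _ fun ω => mul_nonneg (hf_nn ω) (hg_nn ω))]
  exact (le_of_tendsto' hF_tendsto hF_int).trans_lt ENNReal.ofReal_lt_top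

theorem condExp_mul_le_of_condExp_le (hm : m ≤ m0) (hf : StronglyMeasurable[m] f)
    (hf_int : Integrable f μ) (hf_nn : 0 ≤ f) (hg : Integrable g μ) (hg_nn : 0 ≤ g)
    (hK0 : 0 ≤ K) (hK : ∀ᵐ ω ∂μ, μ[g|m] ω ≤ K) :
    ∀ᵐ ω ∂μ, μ[f * g|m] ω ≤ K * f ω := by
  filter_upwards [condExp_mul_of_stronglyMeasurable_left hf
    (integrable_mul_of_condExp_le hm hf hf_int hf_nn hg hg_nn hK0 hK) hg, hK] with ω hfg hω
  rw [hfg, Pi.mul_apply, mul_comm K]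
  exact mul_le_mul_of_nonneg_left hω (hf_nn ω)

end CondExpMul

section PartialProduct

variable {Ω : Type*} {m0 : MeasurableSpace Ω} {P : Measure Ω} {ℱ : Filtration ℕ m0}
  {Y G : ℕ → Ω → ℝ} {n : ℕ}

structure IsPartialProduct (Y G : ℕ → Ω → ℝ) (n : ℕ) : Prop where
  zero : Y 0 = 1
  succ : ∀ t ∈ Icc 1 n, Y t = Y (t - 1) * G t

namespace IsPartialProduct

theorem succ_eq (h : IsPartialProduct Y G n) {s : ℕ} (hs : s + 1 ≤ n) :
    Y (s + 1) = Y s * G (s + 1) := by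
  simpa using h.succ (s + 1) (mem_Icc.2 ⟨le_add_self, hs⟩)

theorem nonneg (h : IsPartialProduct Y G n) (hG : ∀ t ∈ Icc 1 n, 0 ≤ G t) :
    ∀ t ≤ n, 0 ≤ Y t := by
  intro t ht
  induction t with
  | zero => simp [h.zero]
  | succ s ih =>
    rw [h.succ_eq ht]
    exact mul_nonneg (ih (by omega)) (hG _ (mem_Icc.2 ⟨le_add_self, ht⟩))

theorem stronglyMeasurable (h : IsPartialProduct Y G n)
    (hG : ∀ t ∈ Icc 1 n, StronglyMeasurable[ℱ t] (G t)) :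
    ∀ t ≤ n, StronglyMeasurable[ℱ t] (Y t) := by
  intro t ht
  induction t with
  | zero => rw [h.zero]; exact stronglyMeasurable_one
  | succ s ih =>
    rw [h.succ_eq ht]
    exact ((ih (by omega)).mono (ℱ.mono s.le_succ)).mul
      (hG _ (mem_Icc.2 ⟨le_add_self, ht⟩))

theorem integrable [IsFiniteMeasure P] (h : IsPartialProduct Y G n)
    (hG_sm : ∀ t ∈ Icc 1 n, StronglyMeasurable[ℱ t] (G t)) (hG_nn : ∀ t ∈ Icc 1 n, 0 ≤ G t)
    (hG_int : ∀ t ∈ Icc 1 n, Integrable (G t) P)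
    (hG_le : ∀ t ∈ Icc 1 n, ∀ᵐ ω ∂P, P[G t|ℱ (t - 1)] ω ≤ 1) :
    ∀ t ≤ n, Integrable (Y t) P := by
  intro t ht
  induction t with
  | zero => rw [h.zero]; exact integrable_const 1
  | succ s ih =>
    have hs : s + 1 ∈ Icc 1 n := mem_Icc.2 ⟨le_add_self, ht⟩
    rw [h.succ_eq ht]
    exact integrable_mul_of_condExp_le (ℱ.le s) (h.stronglyMeasurable hG_sm s (by omega))
      (ih (by omega)) (h.nonneg hG_nn s (by omega)) (hG_int _ hs) (hG_nn _ hs) zero_le_one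
      (by simpa using hG_le _ hs)

theorem condExp_le [IsFiniteMeasure P] (h : IsPartialProduct Y G n)
    (hG_sm : ∀ t ∈ Icc 1 n, StronglyMeasurable[ℱ t] (G t)) (hG_nn : ∀ t ∈ Icc 1 n, 0 ≤ G t)
    (hG_int : ∀ t ∈ Icc 1 n, Integrable (G t) P)
    (hG_le : ∀ t ∈ Icc 1 n, ∀ᵐ ω ∂P, P[G t|ℱ (t - 1)] ω ≤ 1) :
    ∀ t ∈ Icc 1 n, ∀ᵐ ω ∂P, P[Y t|ℱ (t - 1)] ω ≤ Y (t - 1) ω := by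
  intro t ht
  have ht' : t - 1 ≤ n := by grind
  rw [h.succ t ht]
  simpa using condExp_mul_le_of_condExp_le (ℱ.le _) (h.stronglyMeasurable hG_sm _ ht')
    (h.integrable hG_sm hG_nn hG_int hG_le _ ht') (h.nonneg hG_nn _ ht') (hG_int t ht)
    (hG_nn t ht) zero_le_one (hG_le t ht)

theorem integral_le_one [IsProbabilityMeasure P] (h : IsPartialProduct Y G n)
    (hG_sm : ∀ t ∈ Icc 1 n, StronglyMeasurable[ℱ t] (G t)) (hG_nn : ∀ t ∈ Icc 1 n, 0 ≤ G t)
    (hG_int : ∀ t ∈ Icc 1 n, Integrable (G t) P)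
    (hG_le : ∀ t ∈ Icc 1 n, ∀ᵐ ω ∂P, P[G t|ℱ (t - 1)] ω ≤ 1) :
    ∀ t ≤ n, ∫ ω, Y t ω ∂P ≤ 1 := by
  intro t ht
  induction t with
  | zero => simp [h.zero]
  | succ s ih =>
    have hs : s + 1 ∈ Icc 1 n := mem_Icc.2 ⟨le_add_self, ht⟩
    have hY := h.condExp_le hG_sm hG_nn hG_int hG_le _ hs
    rw [add_tsub_cancel_right] at hY
    calc ∫ ω, Y (s + 1) ω ∂P
        = ∫ ω, P[Y (s + 1)|ℱ s] ω ∂P := (integral_condExp (ℱ.le s)).symm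
      _ ≤ ∫ ω, Y s ω ∂P := integral_mono_ae integrable_condExp
          (h.integrable hG_sm hG_nn hG_int hG_le s (by omega)) hY
      _ ≤ 1 := ih (by omega)

end IsPartialProduct

end PartialProduct

section Catoni

variable {Ω : Type*} {m m0 : MeasurableSpace Ω} {μ : Measure Ω} [IsFiniteMeasure μ]
  {X : Ω → ℝ} {ψ : ℝ → ℝ} {c M : ℝ}

theorem condExp_one_add_mul_add_mul_sq_le (hm : m ≤ m0) {a b : ℝ} (hb : 0 ≤ b)
    (hX : Integrable X μ) (hX2 : Integrable (fun ω => X ω ^ 2) μ)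
    (hC1 : μ[X|m] =ᵐ[μ] fun _ => c) (hC2 : ∀ᵐ ω ∂μ, μ[fun ω => X ω ^ 2|m] ω ≤ M) :
    ∀ᵐ ω ∂μ, μ[fun ω => 1 + a * X ω + b * X ω ^ 2|m] ω ≤ 1 + a * c + b * M := by
  have hsplit : (fun ω => 1 + a * X ω + b * X ω ^ 2) =
      (fun _ => (1 : ℝ)) + (a • X + b • fun ω => X ω ^ 2) := by
    ext ω
    simp only [Pi.add_apply, Pi.smul_apply, smul_eq_mul]
    ring
  have haX : Integrable (a • X) μ := hX.smul a
  have hbX2 : Integrable (b • fun ω => X ω ^ 2) μ := hX2.smul b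
  filter_upwards [condExp_add (integrable_const 1) (haX.add hbX2) m, condExp_add haX hbX2 m,
    condExp_smul a X m, condExp_smul b (fun ω => X ω ^ 2) m, hC1, hC2] with ω h1 h2 h3 h4 h5 h6
  rw [hsplit, h1, Pi.add_apply, h2, Pi.add_apply, h3, h4, condExp_const hm]
  simp only [Pi.smul_apply, smul_eq_mul, h5]
  linarith [mul_le_mul_of_nonneg_left h6 hb]

theorem exp_comp_div_le_quadratic (hψ : ∀ x : ℝ, ψ x ≤ Real.log (1 + x + x ^ 2 / 2)) (x α : ℝ) :
    Real.exp (ψ (x / α)) ≤ 1 + α⁻¹ * x + (2 * α ^ 2)⁻¹ * x ^ 2 := by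
  have hpos : 0 < 1 + x / α + (x / α) ^ 2 / 2 := by nlinarith [sq_nonneg (x / α + 1)]
  calc Real.exp (ψ (x / α)) ≤ 1 + x / α + (x / α) ^ 2 / 2 :=
        (Real.le_log_iff_exp_le hpos).1 (hψ _)
    _ = 1 + α⁻¹ * x + (2 * α ^ 2)⁻¹ * x ^ 2 := by ring

theorem integrable_one_add_mul_add_mul_sq (hX : Integrable X μ)
    (hX2 : Integrable (fun ω => X ω ^ 2) μ) (a b : ℝ) :
    Integrable (fun ω => 1 + a * X ω + b * X ω ^ 2) μ :=
  ((integrable_const 1).add (hX.const_mul a)).add (hX2.const_mul b)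

theorem integrable_exp_comp_div (hψ_meas : Measurable ψ)
    (hψ : ∀ x : ℝ, ψ x ≤ Real.log (1 + x + x ^ 2 / 2)) (α : ℝ) (hX : Integrable X μ)
    (hX2 : Integrable (fun ω => X ω ^ 2) μ) :
    Integrable (fun ω => Real.exp (ψ (X ω / α))) μ :=
  (integrable_one_add_mul_add_mul_sq hX hX2 α⁻¹ (2 * α ^ 2)⁻¹).mono'
    (Real.measurable_exp.comp_aemeasurable
      (hψ_meas.comp_aemeasurable (hX.aemeasurable.div_const α))).aestronglyMeasurable
    (ae_of_all _ fun ω => by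
      rw [Real.norm_of_nonneg (Real.exp_pos _).le]
      exact exp_comp_div_le_quadratic hψ (X ω) α)

theorem condExp_exp_comp_div_le_s12 (hm : m ≤ m0) (hψ_meas : Measurable ψ)
    (hψ : ∀ x : ℝ, ψ x ≤ Real.log (1 + x + x ^ 2 / 2)) (α : ℝ) (hX : Integrable X μ)
    (hX2 : Integrable (fun ω => X ω ^ 2) μ) (hC1 : μ[X|m] =ᵐ[μ] fun _ => c)
    (hC2 : ∀ᵐ ω ∂μ, μ[fun ω => X ω ^ 2|m] ω ≤ M) :
    ∀ᵐ ω ∂μ, μ[fun ω => Real.exp (ψ (X ω / α))|m] ω ≤ c / α + M / (2 * α ^ 2) + 1 := by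
  filter_upwards [condExp_mono (integrable_exp_comp_div hψ_meas hψ α hX hX2)
      (integrable_one_add_mul_add_mul_sq hX hX2 α⁻¹ (2 * α ^ 2)⁻¹)
      (ae_of_all _ fun ω => exp_comp_div_le_quadratic hψ (X ω) α),
    condExp_one_add_mul_add_mul_sq_le hm (by positivity : (0 : ℝ) ≤ (2 * α ^ 2)⁻¹)
      hX hX2 hC1 hC2] with ω h1 h2
  exact (h1.trans h2).trans_eq (by ring)

noncomputable def catoniFactor (ψ : ℝ → ℝ) (α c M x : ℝ) : ℝ :=
  Real.exp (-(c / α + M / (2 * α ^ 2))) * Real.exp (ψ (x / α))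

variable {α : ℝ}

theorem catoniFactor_nonneg (x : ℝ) : 0 ≤ catoniFactor ψ α c M x := by
  unfold catoniFactor; positivity

theorem measurable_catoniFactor (hψ_meas : Measurable ψ) :
    Measurable (catoniFactor ψ α c M) := by
  unfold catoniFactor; fun_prop

theorem integrable_catoniFactor_comp (hψ_meas : Measurable ψ)
    (hψ : ∀ x : ℝ, ψ x ≤ Real.log (1 + x + x ^ 2 / 2)) (hX : Integrable X μ)
    (hX2 : Integrable (fun ω => X ω ^ 2) μ) :
    Integrable (fun ω => catoniFactor ψ α c M (X ω)) μ :=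
  (integrable_exp_comp_div hψ_meas hψ α hX hX2).const_mul _

theorem condExp_catoniFactor_comp_le_one (hm : m ≤ m0) (hψ_meas : Measurable ψ)
    (hψ : ∀ x : ℝ, ψ x ≤ Real.log (1 + x + x ^ 2 / 2)) (hX : Integrable X μ)
    (hX2 : Integrable (fun ω => X ω ^ 2) μ) (hC1 : μ[X|m] =ᵐ[μ] fun _ => c)
    (hC2 : ∀ᵐ ω ∂μ, μ[fun ω => X ω ^ 2|m] ω ≤ M) :
    ∀ᵐ ω ∂μ, μ[fun ω => catoniFactor ψ α c M (X ω)|m] ω ≤ 1 := by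
  set s := c / α + M / (2 * α ^ 2)
  have hsmul : (fun ω => catoniFactor ψ α c M (X ω)) =
      Real.exp (-s) • fun ω => Real.exp (ψ (X ω / α)) := rfl
  filter_upwards [condExp_smul (Real.exp (-s)) (fun ω => Real.exp (ψ (X ω / α))) m,
    condExp_exp_comp_div_le_s12 hm hψ_meas hψ α hX hX2 hC1 hC2] with ω hω hle
  rw [hsmul, hω, Pi.smul_apply, smul_eq_mul]
  calc Real.exp (-s) * μ[fun ω => Real.exp (ψ (X ω / α))|m] ω
      ≤ Real.exp (-s) * Real.exp s :=
        mul_le_mul_of_nonneg_left (hle.trans (Real.add_one_le_exp s)) (Real.exp_pos _).le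
    _ = 1 := by rw [← Real.exp_add, neg_add_cancel, Real.exp_zero]

end Catoni

theorem catoni_supermartingale_general
    {Ω : Type*} {m0 : MeasurableSpace Ω} (P : Measure Ω) [IsProbabilityMeasure P]
    (ℱ : Filtration ℕ m0) (n : ℕ)
    (X : ℕ → Ω → ℝ) (μt : ℕ → ℝ) (M : ℝ)
    (hAdapted : ∀ s, StronglyMeasurable[ℱ s] (X s))
    (hInt : ∀ t ∈ Finset.Icc 1 n, Integrable (X t) P)
    (hInt2 : ∀ t ∈ Finset.Icc 1 n, Integrable (fun ω => (X t ω) ^ 2) P)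
    (hC1 : ∀ t ∈ Finset.Icc 1 n, P[X t|ℱ (t - 1)] =ᵐ[P] fun _ => μt t)
    (hC2 : ∀ t ∈ Finset.Icc 1 n,
      ∀ᵐ ω ∂P, (P[fun ω => (X t ω) ^ 2|ℱ (t - 1)]) ω ≤ M)
    (ψ : ℝ → ℝ) (hψmeas : Measurable ψ)
    (hψub : ∀ x : ℝ, ψ x ≤ Real.log (1 + x + x ^ 2 / 2))
    (α : ℝ)
    (Y : ℕ → Ω → ℝ) (hY0 : ∀ ω, Y 0 ω = 1)
    (hYrec : ∀ t ∈ Finset.Icc 1 n, ∀ ω,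
      Y t ω = Y (t - 1) ω * Real.exp (ψ (X t ω / α)) *
        Real.exp (-(μt t / α + M / (2 * α ^ 2)))) :
    (∀ t ≤ n, ∀ ω, 0 ≤ Y t ω) ∧
    (∀ t ∈ Finset.Icc 1 n,
      ∀ᵐ ω ∂P, (P[Y t|ℱ (t - 1)]) ω ≤ Y (t - 1) ω) ∧
    ∫ ω, Y n ω ∂P ≤ 1 := by
  set G : ℕ → Ω → ℝ := fun t ω => catoniFactor ψ α (μt t) M (X t ω)
  have hY : IsPartialProduct Y G n := ⟨funext hY0, fun t ht => funext fun ω => by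
    simp only [Pi.mul_apply, G, catoniFactor, hYrec t ht ω]; ring⟩
  have hG_sm : ∀ t ∈ Icc 1 n, StronglyMeasurable[ℱ t] (G t) := fun t _ =>
    ((measurable_catoniFactor hψmeas).comp (hAdapted t).measurable).stronglyMeasurable
  have hG_nn : ∀ t ∈ Icc 1 n, 0 ≤ G t := fun t _ ω => catoniFactor_nonneg (X t ω)
  have hG_int : ∀ t ∈ Icc 1 n, Integrable (G t) P := fun t ht =>
    integrable_catoniFactor_comp hψmeas hψub (hInt t ht) (hInt2 t ht)
  have hG_le : ∀ t ∈ Icc 1 n, ∀ᵐ ω ∂P, P[G t|ℱ (t - 1)] ω ≤ 1 := fun t ht =>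
    condExp_catoniFactor_comp_le_one (ℱ.le _) hψmeas hψub (hInt t ht) (hInt2 t ht) (hC1 t ht)
      (hC2 t ht)
  exact ⟨hY.nonneg hG_nn, hY.condExp_le hG_sm hG_nn hG_int hG_le,
    hY.integral_le_one hG_sm hG_nn hG_int hG_le n le_rfl⟩

/-- **Supermartingale construction.** With `Y_0 = 1` and
`Y_t = Y_{t−1} · exp(ψ(X_t/α)) · exp(−(μ_t/α + M/(2α²)))`, i.e.
`Y_t ω = ∏_{s=1}^t exp(ψ(X_s ω/α)) · exp(−(μ_s/α + M/(2α²)))`, the process `(Y_t)_{t≤n}` is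
nonnegative, satisfies `E[Y_t | ℱ_{t−1}] ≤ Y_{t−1}` a.s. for every `t ∈ [n]`, and
`E[Y_n] ≤ 1`. -/
theorem catoni_supermartingale
    {Ω : Type*} {m0 : MeasurableSpace Ω} (P : Measure Ω) [IsProbabilityMeasure P]
    (ℱ : Filtration ℕ m0) (n : ℕ)
    (X : ℕ → Ω → ℝ) (μt : ℕ → ℝ) (M : ℝ) (hM : 0 < M)
    (hAdapted : ∀ s, StronglyMeasurable[ℱ s] (X s))
    (hInt : ∀ t ∈ Finset.Icc 1 n, Integrable (X t) P)
    (hInt2 : ∀ t ∈ Finset.Icc 1 n, Integrable (fun ω => (X t ω) ^ 2) P)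
    (hC1 : ∀ t ∈ Finset.Icc 1 n, P[X t|ℱ (t - 1)] =ᵐ[P] fun _ => μt t)
    (hC2 : ∀ t ∈ Finset.Icc 1 n,
      ∀ᵐ ω ∂P, (P[fun ω => (X t ω) ^ 2|ℱ (t - 1)]) ω ≤ M)
    (ψ : ℝ → ℝ) (hψmeas : Measurable ψ)
    (hψub : ∀ x : ℝ, ψ x ≤ Real.log (1 + x + x ^ 2 / 2))
    (α : ℝ) (hα : 0 < α)
    (Y : ℕ → Ω → ℝ) (hY0 : ∀ ω, Y 0 ω = 1)
    (hYrec : ∀ t ∈ Finset.Icc 1 n, ∀ ω,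
      Y t ω = Y (t - 1) ω * Real.exp (ψ (X t ω / α)) *
        Real.exp (-(μt t / α + M / (2 * α ^ 2)))) :
    (∀ t ≤ n, ∀ ω, 0 ≤ Y t ω) ∧
    (∀ t ∈ Finset.Icc 1 n,
      ∀ᵐ ω ∂P, (P[Y t|ℱ (t - 1)]) ω ≤ Y (t - 1) ω) ∧
    ∫ ω, Y n ω ∂P ≤ 1 :=
  catoni_supermartingale_general P ℱ n X μt M hAdapted hInt hInt2 hC1 hC2 ψ hψmeas hψub α Y hY0
    hYrec
end

section
/- Let {X_t}_{t∈[n]} satisfy conditions C1 and C2, let ψ satisfy ψ(x) ≤ log(1 + x + x²/2) for all x, let α > 0 and δ ∈ (0,1), and let μ̂ = (α/n)·Σ_{i=1}^n ψ(X_i/α). Then P( μ̂ − μ ≥ M/(2α) + (α/n)·log(2/δ) ) ≤ δ/2. -/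
/-!
A Chernoff argument. Since `ψ ≤ log (1 + x + x²/2)`, each factor `exp ψ(X_t/α)` is bounded by
`1 + X_t/α + X_t²/(2α²)`, whose conditional expectation given `ℱ (t-1)` is at most
`1 + μ_t/α + M/(2α²) ≤ exp (μ_t/α + M/(2α²))` by C1 and C2. Peeling off the factors one at a
time gives `E exp (∑ ψ(X_t/α)) ≤ exp (∑ (μ_t/α + M/(2α²)))`, and Markov's inequality for the
exponential yields the tail bound `exp (-log (2/δ)) = δ/2`. Working with lower integrals in
`ℝ≥0∞` spares all integrability questions about the products.
-/

open MeasureTheory Finset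
open scoped ENNReal

section

variable {Ω : Type*} {m m0 : MeasurableSpace Ω} {μ : Measure Ω}

theorem lintegral_mul_condLExp_s13 (hm : m ≤ m0) [SigmaFinite (μ.trim hm)] {f g : Ω → ℝ≥0∞}
    (hf : Measurable[m] f) (hg : AEMeasurable g μ) :
    ∫⁻ ω, f ω * g ω ∂μ = ∫⁻ ω, f ω * μ⁻[g|m] ω ∂μ := by
  have htrim : (μ.withDensity g).trim hm = (μ.withDensity μ⁻[g|m]).trim hm := by
    refine @Measure.ext _ m _ _ fun s hs => ?_
    rw [trim_measurableSet_eq hm hs, trim_measurableSet_eq hm hs, withDensity_apply _ (hm s hs),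
      withDensity_apply _ (hm s hs), setLIntegral_condLExp hm μ g hs]
  have hf' : AEMeasurable f μ := (hf.mono hm le_rfl).aemeasurable
  simp_rw [mul_comm (f _)]
  calc ∫⁻ ω, g ω * f ω ∂μ = ∫⁻ ω, f ω ∂(μ.withDensity g).trim hm := by
        rw [lintegral_trim hm hf, lintegral_withDensity_eq_lintegral_mul₀ hg hf']; rfl
    _ = ∫⁻ ω, μ⁻[g|m] ω * f ω ∂μ := by
        rw [htrim, lintegral_trim hm hf,
          lintegral_withDensity_eq_lintegral_mul₀ (by fun_prop) hf']
        rfl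

theorem lintegral_prod_Icc_le_of_condLExp_le [IsProbabilityMeasure μ]
    (ℱ : Filtration ℕ m0) {W : ℕ → Ω → ℝ≥0∞} (hW : ∀ t, Measurable[ℱ t] (W t))
    {a : ℕ → ℝ≥0∞} (n : ℕ)
    (ha : ∀ t ∈ Icc 1 n, μ⁻[W t|ℱ (t - 1)] ≤ᵐ[μ] fun _ => a t) :
    ∫⁻ ω, ∏ t ∈ Icc 1 n, W t ω ∂μ ≤ ∏ t ∈ Icc 1 n, a t := by
  induction n with
  | zero => simp
  | succ k ih =>
    have hprefix : Measurable[ℱ k] fun ω => ∏ t ∈ Icc 1 k, W t ω :=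
      Finset.measurable_prod _ fun t ht => (hW t).mono (ℱ.mono (mem_Icc.1 ht).2) le_rfl
    calc ∫⁻ ω, ∏ t ∈ Icc 1 (k + 1), W t ω ∂μ
        = ∫⁻ ω, (∏ t ∈ Icc 1 k, W t ω) * W (k + 1) ω ∂μ := by
          simp_rw [prod_Icc_succ_top (Nat.le_add_left 1 k)]
      _ = ∫⁻ ω, (∏ t ∈ Icc 1 k, W t ω) * μ⁻[W (k + 1)|ℱ k] ω ∂μ :=
          lintegral_mul_condLExp_s13 (ℱ.le k) hprefix
            ((hW (k + 1)).mono (ℱ.le _) le_rfl).aemeasurable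
      _ ≤ ∫⁻ ω, (∏ t ∈ Icc 1 k, W t ω) * a (k + 1) ∂μ := by
          refine lintegral_mono_ae ?_
          filter_upwards [ha (k + 1) (by simp)] with ω hω
          gcongr
          simpa using hω
      _ = (∫⁻ ω, ∏ t ∈ Icc 1 k, W t ω ∂μ) * a (k + 1) :=
          lintegral_mul_const _ (hprefix.mono (ℱ.le k) le_rfl)
      _ ≤ (∏ t ∈ Icc 1 k, a t) * a (k + 1) := by
          gcongr
          exact ih fun t ht => ha t (Icc_subset_Icc_right (by omega) ht)
      _ = ∏ t ∈ Icc 1 (k + 1), a t := (prod_Icc_succ_top (by omega) a).symm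

theorem condExp_one_add_add_sq_div_two_le [IsFiniteMeasure μ] (hm : m ≤ m0) {Y : Ω → ℝ}
    (hY : Integrable Y μ) (hY2 : Integrable (fun ω => Y ω ^ 2) μ) {ν M : ℝ} (α : ℝ)
    (hmean : μ[Y|m] =ᵐ[μ] fun _ => ν) (hsq : ∀ᵐ ω ∂μ, μ[fun ω => Y ω ^ 2|m] ω ≤ M) :
    μ[fun ω => 1 + Y ω / α + (Y ω / α) ^ 2 / 2|m]
      ≤ᵐ[μ] fun _ => 1 + ν / α + M / (2 * α ^ 2) := by
  have hsplit : (fun ω => 1 + Y ω / α + (Y ω / α) ^ 2 / 2)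
      = (fun _ => (1 : ℝ)) + (α⁻¹ • Y + (2 * α ^ 2)⁻¹ • fun ω => Y ω ^ 2) := by
    ext ω; simp only [Pi.add_apply, Pi.smul_apply, smul_eq_mul]; ring
  have hlin := hY.smul α⁻¹
  have hquad := hY2.smul (2 * α ^ 2)⁻¹
  rw [hsplit]
  filter_upwards [condExp_add (integrable_const (1 : ℝ)) (hlin.add hquad) m,
    condExp_add hlin hquad m, condExp_smul (μ := μ) α⁻¹ Y m,
    condExp_smul (μ := μ) (2 * α ^ 2)⁻¹ (fun ω => Y ω ^ 2) m, hmean, hsq]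
    with ω h1 h2 h3 h4 h5 h6
  simp only [h1, Pi.add_apply, h2, h3, h4, Pi.smul_apply, smul_eq_mul, h5, condExp_const hm]
  have : (2 * α ^ 2)⁻¹ * μ[fun ω => Y ω ^ 2|m] ω ≤ (2 * α ^ 2)⁻¹ * M := by gcongr
  rw [div_eq_inv_mul ν, div_eq_inv_mul M]
  linarith

theorem condLExp_ofReal_exp_le [IsFiniteMeasure μ] (hm : m ≤ m0) {ψ : ℝ → ℝ}
    (hψ : ∀ x, ψ x ≤ Real.log (1 + x + x ^ 2 / 2)) {Y : Ω → ℝ}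
    (hY : Integrable Y μ) (hY2 : Integrable (fun ω => Y ω ^ 2) μ) {ν M : ℝ} (α : ℝ)
    (hmean : μ[Y|m] =ᵐ[μ] fun _ => ν) (hsq : ∀ᵐ ω ∂μ, μ[fun ω => Y ω ^ 2|m] ω ≤ M) :
    μ⁻[fun ω => ENNReal.ofReal (Real.exp (ψ (Y ω / α)))|m]
      ≤ᵐ[μ] fun _ => ENNReal.ofReal (Real.exp (ν / α + M / (2 * α ^ 2))) := by
  have hpos (x : ℝ) : 0 < 1 + x + x ^ 2 / 2 := by nlinarith [sq_nonneg (x + 1)]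
  have hexp (x : ℝ) : Real.exp (ψ x) ≤ 1 + x + x ^ 2 / 2 :=
    (Real.le_log_iff_exp_le (hpos x)).1 (hψ x)
  have hq : Integrable (fun ω => 1 + Y ω / α + (Y ω / α) ^ 2 / 2) μ := by
    simp only [div_pow]
    exact ((integrable_const 1).add (hY.div_const α)).add ((hY2.div_const _).div_const 2)
  filter_upwards [condLExp_mono (mΩ := m)
      (ae_of_all μ fun ω => ENNReal.ofReal_le_ofReal (hexp (Y ω / α))),
    condLExp_ofReal m hq (ae_of_all μ fun ω => (hpos _).le),
    condExp_one_add_add_sq_div_two_le hm hY hY2 α hmean hsq] with ω h1 h2 h3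
  refine h1.trans (h2.trans_le (ENNReal.ofReal_le_ofReal (h3.trans ?_)))
  linarith [Real.add_one_le_exp (ν / α + M / (2 * α ^ 2))]

theorem measure_ge_add_le_exp_neg_of_lintegral_exp_le {S : Ω → ℝ} (hS : AEMeasurable S μ)
    {b : ℝ} (hb : ∫⁻ ω, ENNReal.ofReal (Real.exp (S ω)) ∂μ ≤ ENNReal.ofReal (Real.exp b)) (L : ℝ) :
    μ {ω | b + L ≤ S ω} ≤ ENNReal.ofReal (Real.exp (-L)) :=
  calc μ {ω | b + L ≤ S ω}
      ≤ μ {ω | ENNReal.ofReal (Real.exp (b + L)) ≤ ENNReal.ofReal (Real.exp (S ω))} :=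
        measure_mono fun ω hω => ENNReal.ofReal_le_ofReal (Real.exp_le_exp.2 hω)
    _ ≤ (∫⁻ ω, ENNReal.ofReal (Real.exp (S ω)) ∂μ) / ENNReal.ofReal (Real.exp (b + L)) :=
        meas_ge_le_lintegral_div (by fun_prop) (by simp [Real.exp_pos]) ENNReal.ofReal_ne_top
    _ ≤ ENNReal.ofReal (Real.exp b) / ENNReal.ofReal (Real.exp (b + L)) := by gcongr
    _ = ENNReal.ofReal (Real.exp (-L)) := by
        rw [← ENNReal.ofReal_div_of_pos (Real.exp_pos _), ← Real.exp_sub]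
        ring_nf

end

theorem sum_add_le_of_deviation_ge {n : ℕ} (hn : 0 < n) {α : ℝ} (hα : 0 < α)
    (ν : ℕ → ℝ) {S M L : ℝ}
    (h : α / n * S - 1 / n * ∑ t ∈ Icc 1 n, ν t ≥ M / (2 * α) + α / n * L) :
    ∑ t ∈ Icc 1 n, (ν t / α + M / (2 * α ^ 2)) + L ≤ S := by
  have hn' : (0 : ℝ) < n := Nat.cast_pos.2 hn
  have hsum : ∑ t ∈ Icc 1 n, (ν t / α + M / (2 * α ^ 2))
      = n / α * (1 / n * ∑ t ∈ Icc 1 n, ν t + M / (2 * α)) := by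
    rw [sum_add_distrib, ← sum_div, sum_const, Nat.card_Icc, Nat.add_sub_cancel, nsmul_eq_mul]
    field_simp
  calc ∑ t ∈ Icc 1 n, (ν t / α + M / (2 * α ^ 2)) + L
      = n / α * (1 / n * ∑ t ∈ Icc 1 n, ν t + M / (2 * α) + α / n * L) := by
        rw [hsum]; field_simp
    _ ≤ n / α * (α / n * S) := by gcongr; linarith
    _ = S := by field_simp

theorem catoni_one_sided_deviation_general
    {Ω : Type*} {m0 : MeasurableSpace Ω} (P : Measure Ω) [IsProbabilityMeasure P]
    (ℱ : Filtration ℕ m0) (n : ℕ) (hn : 0 < n)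
    (X : ℕ → Ω → ℝ) (μt : ℕ → ℝ) (M : ℝ)
    (hAdapted : ∀ t, StronglyMeasurable[ℱ t] (X t))
    (hInt : ∀ t ∈ Finset.Icc 1 n, Integrable (X t) P)
    (hInt2 : ∀ t ∈ Finset.Icc 1 n, Integrable (fun ω => (X t ω) ^ 2) P)
    -- C1 : conditional mean
    (hC1 : ∀ t ∈ Finset.Icc 1 n, P[X t|ℱ (t - 1)] =ᵐ[P] fun _ => μt t)
    -- C2 : conditional second moment bound
    (hC2 : ∀ t ∈ Finset.Icc 1 n,
      ∀ᵐ ω ∂P, (P[fun ω => (X t ω) ^ 2|ℱ (t - 1)]) ω ≤ M)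
    -- influence function : upper bound only
    (ψ : ℝ → ℝ) (hψmeas : Measurable ψ)
    (hψub : ∀ x : ℝ, ψ x ≤ Real.log (1 + x + x ^ 2 / 2))
    (α : ℝ) (hα : 0 < α) (δ : ℝ) (hδ : δ ∈ Set.Ioo (0 : ℝ) 1)
    (μbar : ℝ) (hμbar : μbar = (1 / n) * ∑ t ∈ Finset.Icc 1 n, μt t) :
    P {ω | (α / n) * ∑ i ∈ Finset.Icc 1 n, ψ (X i ω / α) - μbar ≥
        M / (2 * α) + (α / n) * Real.log (2 / δ)} ≤ ENNReal.ofReal (δ / 2) := by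
  set S : Ω → ℝ := fun ω => ∑ i ∈ Icc 1 n, ψ (X i ω / α)
  have hX (t : ℕ) : Measurable[ℱ t] (X t) := (hAdapted t).measurable
  have hS : Measurable S :=
    Finset.measurable_sum _ fun t _ => hψmeas.comp (((hX t).mono (ℱ.le t) le_rfl).div_const α)
  have hmgf : ∫⁻ ω, ENNReal.ofReal (Real.exp (S ω)) ∂P
      ≤ ENNReal.ofReal (Real.exp (∑ t ∈ Icc 1 n, (μt t / α + M / (2 * α ^ 2)))) := by
    have := lintegral_prod_Icc_le_of_condLExp_le ℱ (fun t => by fun_prop) n fun t ht =>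
      condLExp_ofReal_exp_le (ℱ.le _) hψub (hInt t ht) (hInt2 t ht) α (hC1 t ht) (hC2 t ht)
    simpa [S, Real.exp_sum, ENNReal.ofReal_prod_of_nonneg, Real.exp_nonneg] using this
  have hchernoff :=
    measure_ge_add_le_exp_neg_of_lintegral_exp_le hS.aemeasurable hmgf (Real.log (2 / δ))
  rw [Real.exp_neg, Real.exp_log (div_pos two_pos hδ.1), inv_div] at hchernoff
  refine (measure_mono fun ω hω => ?_).trans hchernoff
  subst hμbar
  exact sum_add_le_of_deviation_ge hn hα μt hω

/-- **One-sided deviation bound.** Under C1, C2, with `ψ(x) ≤ log(1 + x + x²/2)`, for `α > 0`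
and `δ ∈ (0,1)`, the estimator `μ̂ = (α/n) ∑ ψ(X_i/α)` satisfies
`P( μ̂ − μ ≥ M/(2α) + (α/n) log(2/δ) ) ≤ δ/2`. -/
theorem catoni_one_sided_deviation
    {Ω : Type*} {m0 : MeasurableSpace Ω} (P : Measure Ω) [IsProbabilityMeasure P]
    (ℱ : Filtration ℕ m0) (n : ℕ) (hn : 0 < n)
    (X : ℕ → Ω → ℝ) (μt : ℕ → ℝ) (M : ℝ) (hM : 0 < M)
    (hAdapted : ∀ t, StronglyMeasurable[ℱ t] (X t))
    (hInt : ∀ t ∈ Finset.Icc 1 n, Integrable (X t) P)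
    (hInt2 : ∀ t ∈ Finset.Icc 1 n, Integrable (fun ω => (X t ω) ^ 2) P)
    -- C1 : conditional mean
    (hC1 : ∀ t ∈ Finset.Icc 1 n, P[X t|ℱ (t - 1)] =ᵐ[P] fun _ => μt t)
    -- C2 : conditional second moment bound
    (hC2 : ∀ t ∈ Finset.Icc 1 n,
      ∀ᵐ ω ∂P, (P[fun ω => (X t ω) ^ 2|ℱ (t - 1)]) ω ≤ M)
    -- influence function : upper bound only
    (ψ : ℝ → ℝ) (hψmeas : Measurable ψ)
    (hψub : ∀ x : ℝ, ψ x ≤ Real.log (1 + x + x ^ 2 / 2))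
    (α : ℝ) (hα : 0 < α) (δ : ℝ) (hδ : δ ∈ Set.Ioo (0 : ℝ) 1)
    (μbar : ℝ) (hμbar : μbar = (1 / n) * ∑ t ∈ Finset.Icc 1 n, μt t) :
    P {ω | (α / n) * ∑ i ∈ Finset.Icc 1 n, ψ (X i ω / α) - μbar ≥
        M / (2 * α) + (α / n) * Real.log (2 / δ)} ≤ ENNReal.ofReal (δ / 2) :=
  catoni_one_sided_deviation_general P ℱ n hn X μt M hAdapted hInt hInt2 hC1 hC2 ψ hψmeas hψub α hα
    δ hδ μbar hμbar
end
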